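/- arXiv:2112.10147 — 10 statements merged into one kernel-verified Lean document; each statement's English description precedes it below -/
import Mathlib

section
/- Let X : Ω → ℝ^d and Y : Ω → ℝ be random variables on a probability space (Ω, 𝓕, P) such that the distribution function G of Y is continuous, and let ψ_C(s,t) := E[ E[1_{G(Y) ≤ s} | σ(X)] · E[1_{G(Y) ≤ t} | σ(X)] ] for (s,t) ∈ [0,1]². Then ψ_C(s,t) = min(s,t) for all (s,t) ∈ [0,1]² if and only if Y is completely dependent on X, i.e., there exists a measurable function f : ℝ^d → ℝ with P(Y = f(X)) = 1. -/
open MeasureTheory ProbabilityTheory Set Filter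

/-!
With `U := G (Y)`, continuity of `G` makes `U` uniform on `[0, 1]`, and `{Y ≤ y}` agrees with
`{U ≤ G y}` up to a null set. Writing `g_s := E[1_{U ≤ s} | X]`, the `L²` projection identity gives
`s - ψ(s, s) = E[(1_{U ≤ s} - g_s)²]`, so `ψ(s, s) = s` for all `s` exactly when every
`1_{U ≤ s}` is a.s. `σ(X)`-measurable, i.e. when `Y` is (its sublevel sets at rational levels
being a.s. `σ(X)`-measurable), and by Doob–Dynkin this means `Y = f(X)` a.s. Conversely, then
`g_s = 1_{U ≤ s}` and `ψ(s, t) = P(U ≤ min s t) = min s t`.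
-/

section ContinuousCDF

variable {μ : Measure ℝ} [IsProbabilityMeasure μ]

/-- For continuous `cdf μ`, the sublevel set `{cdf μ ≤ cdf μ y}` exceeds `Iic y` only by a flat
stretch of `cdf μ`, which carries no mass. -/
lemma measure_cdf_le_cdf (hc : Continuous (cdf μ)) (y : ℝ) :
    μ {x | cdf μ x ≤ cdf μ y} = μ (Iic y) := by
  set S := {x | cdf μ x ≤ cdf μ y}
  have hyS : y ∈ S := le_refl (cdf μ y)
  by_cases hS : BddAbove S
  · have hcS : sSup S ∈ S := (isClosed_le hc continuous_const).csSup_mem ⟨y, hyS⟩ hS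
    have hSIic : S = Iic (sSup S) :=
      Subset.antisymm (fun x hx => le_csSup hS hx) fun x hx => (monotone_cdf μ hx).trans hcS
    have hcdf : cdf μ (sSup S) = cdf μ y :=
      le_antisymm hcS (monotone_cdf μ (le_csSup hS hyS))
    rw [hSIic, ← ofReal_cdf, hcdf, ofReal_cdf]
  · have hSuniv : S = univ := eq_univ_of_forall fun x => by
      obtain ⟨z, hzS, hxz⟩ := not_bddAbove_iff.1 hS x
      exact (monotone_cdf μ hxz.le).trans hzS
    have hcdf : cdf μ y = 1 := le_antisymm (cdf_le_one μ y)
      (le_of_tendsto' (tendsto_cdf_atTop μ) fun x => show x ∈ S from hSuniv ▸ mem_univ x)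
    rw [hSuniv, ← ofReal_cdf, hcdf, measure_univ, ENNReal.ofReal_one]

lemma ae_le_iff_cdf_le (hc : Continuous (cdf μ)) (y : ℝ) :
    ∀ᵐ x ∂μ, x ≤ y ↔ cdf μ x ≤ cdf μ y := by
  have h := ae_eq_of_subset_of_measure_ge (fun x (hx : x ≤ y) => monotone_cdf μ hx)
    (measure_cdf_le_cdf hc y).le measurableSet_Iic.nullMeasurableSet (measure_ne_top _ _)
  exact eventuallyEq_set.1 h

/-- Probability integral transform. -/
lemma measure_cdf_le (hc : Continuous (cdf μ)) {u : ℝ} (hu : u ∈ Icc (0 : ℝ) 1) :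
    μ {x | cdf μ x ≤ u} = ENNReal.ofReal u := by
  obtain rfl | hu0 := hu.1.eq_or_lt
  · refine le_antisymm ?_ (by simp)
    refine ge_of_tendsto' (ENNReal.tendsto_ofReal (tendsto_cdf_atBot μ)) fun a => ?_
    rw [ofReal_cdf, ← measure_cdf_le_cdf hc a]
    exact measure_mono fun x (hx : cdf μ x ≤ 0) => hx.trans (cdf_nonneg μ a)
  obtain rfl | hu1 := hu.2.eq_or_lt
  · rw [ENNReal.ofReal_one, ← measure_univ (μ := μ)]
    exact congrArg μ (eq_univ_of_forall (cdf_le_one μ))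
  obtain ⟨a, ha⟩ := ((tendsto_cdf_atBot μ).eventually (gt_mem_nhds hu0)).exists
  obtain ⟨b, hb⟩ := ((tendsto_cdf_atTop μ).eventually (lt_mem_nhds hu1)).exists
  obtain ⟨y, rfl⟩ := intermediate_value_univ a b hc ⟨ha.le, hb.le⟩
  rw [measure_cdf_le_cdf hc, ofReal_cdf]

end ContinuousCDF

section CondExp

variable {Ω : Type*} {m m₀ : MeasurableSpace Ω} {μ : Measure[m₀] Ω}

lemma integral_sq_sub_condExp (hm : m ≤ m₀) [IsFiniteMeasure μ] {X : Ω → ℝ} (hX : MemLp X 2 μ) :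
    ∫ ω, (X ω - μ[X|m] ω) ^ 2 ∂μ = ∫ ω, X ω ^ 2 ∂μ - ∫ ω, μ[X|m] ω ^ 2 ∂μ := by
  calc ∫ ω, (X ω - μ[X|m] ω) ^ 2 ∂μ
      = ∫ ω, Var[X; μ | m] ω ∂μ := (integral_condExp hm).symm
    _ = ∫ ω, (μ[X ^ 2|m] - μ[X|m] ^ 2 : Ω → ℝ) ω ∂μ :=
      integral_congr_ae (condVar_ae_eq_condExp_sq_sub_sq_condExp hm hX)
    _ = ∫ ω, X ω ^ 2 ∂μ - ∫ ω, μ[X|m] ω ^ 2 ∂μ := by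
      simp only [Pi.sub_apply, Pi.pow_apply]
      rw [integral_sub integrable_condExp (hX.condExp one_le_two).integrable_sq,
        integral_condExp hm]
      rfl

lemma ae_eq_condExp_of_integral_sq_condExp_eq (hm : m ≤ m₀) [IsFiniteMeasure μ] {X : Ω → ℝ}
    (hX : MemLp X 2 μ) (h : ∫ ω, μ[X|m] ω ^ 2 ∂μ = ∫ ω, X ω ^ 2 ∂μ) : X =ᵐ[μ] μ[X|m] := by
  have hzero : ∫ ω, (X ω - μ[X|m] ω) ^ 2 ∂μ = 0 := by
    rw [integral_sq_sub_condExp hm hX, h, sub_self]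
  have hsq := (integral_eq_zero_iff_of_nonneg (fun ω => sq_nonneg _)
    (hX.sub (hX.condExp one_le_two)).integrable_sq).1 hzero
  filter_upwards [hsq] with ω hω
  exact sub_eq_zero.1 (pow_eq_zero_iff two_ne_zero |>.1 hω)

lemma aestronglyMeasurable_indicator_of_integral_sq_condExp_eq (hm : m ≤ m₀) [IsFiniteMeasure μ]
    {A : Set Ω} (hA : MeasurableSet A)
    (h : ∫ ω, μ[A.indicator 1|m] ω ^ 2 ∂μ = μ.real A) :
    AEStronglyMeasurable[m] (A.indicator (1 : Ω → ℝ)) μ := by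
  have hsq : ∫ ω, A.indicator (1 : Ω → ℝ) ω ^ 2 ∂μ = μ.real A := by
    rw [← integral_indicator_one hA]
    congr with ω
    by_cases hω : ω ∈ A <;> simp [hω]
  refine ⟨μ[A.indicator 1|m], stronglyMeasurable_condExp, ?_⟩
  exact ae_eq_condExp_of_integral_sq_condExp_eq hm
    ((memLp_const 1).indicator hA) (h.trans hsq.symm)

lemma integral_condExp_indicator_mul_condExp_indicator (hm : m ≤ m₀) [IsFiniteMeasure μ]
    {A B : Set Ω} (hA : MeasurableSet A) (hB : MeasurableSet B)
    (hAm : AEStronglyMeasurable[m] (A.indicator (1 : Ω → ℝ)) μ)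
    (hBm : AEStronglyMeasurable[m] (B.indicator (1 : Ω → ℝ)) μ) :
    ∫ ω, μ[A.indicator 1|m] ω * μ[B.indicator 1|m] ω ∂μ = μ.real (A ∩ B) := by
  have hAA := condExp_of_aestronglyMeasurable' hm hAm ((integrable_const 1).indicator hA)
  have hBB := condExp_of_aestronglyMeasurable' hm hBm ((integrable_const 1).indicator hB)
  rw [← integral_indicator_one (hA.inter hB), inter_indicator_one]
  exact integral_congr_ae (hAA.mul hBB)

end CondExp

lemma EReal.iInf_rat_ite_le (y : ℝ) :
    ⨅ q : ℚ, (if y ≤ q then ((q : ℝ) : EReal) else ⊤) = y := by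
  refine le_antisymm ?_ (le_iInf fun q => ?_)
  · by_contra! h
    obtain ⟨q, hyq, hq⟩ := EReal.exists_rat_btwn_of_lt h
    refine (iInf_le (fun q : ℚ => if y ≤ q then ((q : ℝ) : EReal) else ⊤) q).not_gt ?_
    rwa [if_pos (EReal.coe_lt_coe_iff.1 hyq).le]
  · split_ifs with h
    · exact EReal.coe_le_coe_iff.2 h
    · exact le_top

section Factorization

variable {Ω : Type*} {m m₀ : MeasurableSpace Ω} {μ : Measure[m₀] Ω}

lemma aestronglyMeasurable_of_forall_rat_indicator_le {Y : Ω → ℝ}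
    (h : ∀ q : ℚ, AEStronglyMeasurable[m] ({ω | Y ω ≤ q}.indicator (1 : Ω → ℝ)) μ) :
    AEStronglyMeasurable[m] Y μ := by
  choose g hg hYg using h
  -- `Y ω` is the infimum of the rationals `q ≥ Y ω`, i.e. of those with `g q ω = 1`.
  refine ⟨fun ω => (⨅ q : ℚ, if g q ω = 1 then ((q : ℝ) : EReal) else ⊤).toReal, ?_, ?_⟩
  · refine (Measurable.ereal_toReal ?_).stronglyMeasurable
    exact Measurable.iInf fun q =>
      Measurable.ite ((hg q).measurable (measurableSet_singleton 1)) measurable_const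
        measurable_const
  · filter_upwards [ae_all_iff.2 hYg] with ω hω
    have hiff : ∀ q : ℚ, g q ω = 1 ↔ Y ω ≤ q := fun q => by
      by_cases hq : Y ω ≤ q <;> simp [← hω q, hq]
    simp only [hiff, EReal.iInf_rat_ite_le, EReal.toReal_coe]

lemma MeasureTheory.AEStronglyMeasurable.indicator_preimage {Y : Ω → ℝ}
    (hY : AEStronglyMeasurable[m] Y μ) {S : Set ℝ} (hS : MeasurableSet S) :
    AEStronglyMeasurable[m] ((Y ⁻¹' S).indicator (1 : Ω → ℝ)) μ := by
  obtain ⟨Y', hY'm, hYY'⟩ := hY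
  exact ⟨(Y' ⁻¹' S).indicator 1, stronglyMeasurable_const.indicator (hY'm.measurable hS),
    hYY'.fun_comp (S.indicator 1)⟩

/-- Doob–Dynkin lemma, up to null sets. -/
lemma aestronglyMeasurable_comap_iff_exists_ae_eq_comp {E : Type*} [MeasurableSpace E]
    {X : Ω → E} {Y : Ω → ℝ} :
    AEStronglyMeasurable[MeasurableSpace.comap X inferInstance] Y μ ↔
      ∃ f : E → ℝ, Measurable f ∧ ∀ᵐ ω ∂μ, Y ω = f (X ω) := by
  constructor
  · rintro ⟨g, hg, hYg⟩
    obtain ⟨f, hf, rfl⟩ := hg.exists_eq_measurable_comp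
    exact ⟨f, hf.measurable, hYg⟩
  · rintro ⟨f, hf, hYf⟩
    exact ⟨f ∘ X, (hf.comp (comap_measurable X)).stronglyMeasurable, hYf⟩

end Factorization

/-- The copula `ψ_C` derived from `(X, Y)` equals the comonotonicity copula
`min` on `[0,1]²` if and only if `Y` is completely dependent on `X`. -/
theorem psi_eq_min_iff_complete_dependence
    {Ω : Type*} [MeasurableSpace Ω] (P : Measure Ω) [IsProbabilityMeasure P]
    {d : ℕ} (X : Ω → (Fin d → ℝ)) (Y : Ω → ℝ) (hX : Measurable X) (hY : Measurable Y)
    (G : ℝ → ℝ) (hG : ∀ y, G y = (P {ω | Y ω ≤ y}).toReal) (hGc : Continuous G)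
    (mX : MeasurableSpace Ω) (hmX : mX = MeasurableSpace.comap X inferInstance)
    (ψ : ℝ → ℝ → ℝ)
    (hψ : ∀ s t : ℝ, ψ s t =
      ∫ ω, (P[fun ω' => if G (Y ω') ≤ s then (1:ℝ) else 0 | mX]) ω *
           (P[fun ω' => if G (Y ω') ≤ t then (1:ℝ) else 0 | mX]) ω ∂P) :
    (∀ s ∈ Icc (0:ℝ) 1, ∀ t ∈ Icc (0:ℝ) 1, ψ s t = min s t) ↔
      ∃ f : (Fin d → ℝ) → ℝ, Measurable f ∧ ∀ᵐ ω ∂P, Y ω = f (X ω) := by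
  subst hmX
  have := Measure.isProbabilityMeasure_map (μ := P) hY.aemeasurable
  obtain rfl : G = cdf (P.map Y) := funext fun y => by
    rw [hG, cdf_eq_real, measureReal_def, Measure.map_apply hY measurableSet_Iic]; rfl
  have hm := hX.comap_le
  set A : ℝ → Set Ω := fun s => Y ⁻¹' {y | cdf (P.map Y) y ≤ s}
  have hSmeas (u : ℝ) : MeasurableSet {y | cdf (P.map Y) y ≤ u} :=
    measurableSet_le hGc.measurable measurable_const
  have hAmeas s : MeasurableSet (A s) := hY (hSmeas s)
  have hPA s (hs : s ∈ Icc (0 : ℝ) 1) : P.real (A s) = s := by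
    rw [measureReal_def, ← Measure.map_apply hY (hSmeas s),
      measure_cdf_le hGc hs, ENNReal.toReal_ofReal hs.1]
  have hψA s t : ψ s t = ∫ ω, P[(A s).indicator 1|MeasurableSpace.comap X inferInstance] ω *
      P[(A t).indicator 1|MeasurableSpace.comap X inferInstance] ω ∂P := by
    rw [hψ]; rfl
  rw [← aestronglyMeasurable_comap_iff_exists_ae_eq_comp]
  constructor
  · intro hmin
    have hind s (hs : s ∈ Icc (0 : ℝ) 1) :=
      aestronglyMeasurable_indicator_of_integral_sq_condExp_eq hm (hAmeas s) <| by
        simp only [sq]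
        rw [← hψA, hmin s hs s hs, min_self, hPA s hs]
    refine aestronglyMeasurable_of_forall_rat_indicator_le fun q => ?_
    have hq : {ω | Y ω ≤ q} =ᵐ[P] A (cdf (P.map Y) q) :=
      eventuallyEq_set.2 (ae_of_ae_map hY.aemeasurable (ae_le_iff_cdf_le hGc q))
    exact (hind _ ⟨cdf_nonneg _ _, cdf_le_one _ _⟩).congr (indicator_ae_eq_of_ae_eq_set hq).symm
  · intro hYm s hs t ht
    rw [hψA, integral_condExp_indicator_mul_condExp_indicator hm (hAmeas s) (hAmeas t)
      (hYm.indicator_preimage (hSmeas s)) (hYm.indicator_preimage (hSmeas t))]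
    have hAmin : A s ∩ A t = A (min s t) := by ext; simp [A]
    rw [hAmin, hPA _ ⟨le_min hs.1 ht.1, min_le_of_left_le hs.2⟩]
end

section
/- Let X : Ω → ℝ^d and Y : Ω → ℝ be random variables on a probability space (Ω, 𝓕, P) such that the distribution function G of Y is continuous, and let ψ_C(s,t) := E[ E[1_{G(Y) ≤ s} | σ(X)] · E[1_{G(Y) ≤ t} | σ(X)] ]. Then the following are equivalent: (a) Y and X are independent; (b) ψ_C(s,t) = s·t for all (s,t) ∈ [0,1]²; (c) ψ_C(t,t) = t² for all t ∈ [0,1]. -/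
/-!
If `Y` is independent of `X`, the conditional probabilities `P(G(Y) ≤ t | X)` are the constants
`P(G(Y) ≤ t) = t`, because `G(Y)` is uniform on `[0,1]` when `G` is continuous; this gives
`ψ_C(s,t) = s t`. Conversely, `ψ_C(t,t) - t²` is the variance of `P(G(Y) ≤ t | X)`, so
`ψ_C(t,t) = t²` forces these conditional probabilities to be constant, and then `P({G(Y) ≤ t} ∩ A) = t P(A)` for
every `A ∈ σ(X)`. Since `{Y ≤ y}` and `{G(Y) ≤ G(y)}` differ by a null set, this is independence
on the π-system `{Y ≤ y}` generating `σ(Y)`.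
-/

open MeasureTheory ProbabilityTheory Set

namespace ProbabilityTheory

theorem measurableSet_cdf_le (μ : Measure ℝ) (t : ℝ) : MeasurableSet {y | cdf μ y ≤ t} :=
  measurableSet_le (monotone_cdf μ).measurable measurable_const

section Cdf

variable {μ : Measure ℝ} [IsProbabilityMeasure μ]

theorem measure_cdf_le_eq_ofReal (hc : Continuous (cdf μ)) {t : ℝ} (ht : t ∈ Icc (0 : ℝ) 1) :
    μ {y | cdf μ y ≤ t} = ENNReal.ofReal t := by
  rcases ht.2.eq_or_lt with rfl | ht1
  · simp [cdf_le_one]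
  obtain ⟨b, hb⟩ : ∃ b, t < cdf μ b :=
    ((tendsto_cdf_atTop μ).eventually (eventually_gt_nhds ht1)).exists
  rcases {y | cdf μ y ≤ t}.eq_empty_or_nonempty with hS | ⟨a, ha⟩
  · obtain rfl : t = 0 := by
      refine ht.1.antisymm' (not_lt.1 fun ht0 => ?_)
      obtain ⟨a, ha⟩ := ((tendsto_cdf_atBot μ).eventually (eventually_lt_nhds ht0)).exists
      exact hS.subset ha.le
    simp [hS]
  -- `t` is a value of the cdf, so the closed sublevel set is `Iic z` with `cdf μ z = t`.
  obtain ⟨x, hx⟩ := mem_range_of_exists_le_of_exists_ge hc ⟨a, ha⟩ ⟨b, hb.le⟩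
  have hbdd : BddAbove {y | cdf μ y ≤ t} :=
    ⟨b, fun y hy => ((monotone_cdf μ).reflect_lt (hy.trans_lt hb)).le⟩
  set z := sSup {y | cdf μ y ≤ t}
  have hz : cdf μ z ≤ t := (isClosed_le hc continuous_const).csSup_mem ⟨a, ha⟩ hbdd
  have hS : {y | cdf μ y ≤ t} = Iic z :=
    ext fun y => ⟨fun hy => le_csSup hbdd hy, fun hy => (monotone_cdf μ hy).trans hz⟩
  have hzt : cdf μ z = t :=
    hz.antisymm (hx ▸ monotone_cdf μ (le_csSup hbdd (hx.le : cdf μ x ≤ t)))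
  rw [hS, ← ofReal_cdf, hzt]

theorem Iic_ae_eq_cdf_le (hc : Continuous (cdf μ)) (x : ℝ) :
    Iic x =ᵐ[μ] {y | cdf μ y ≤ cdf μ x} :=
  ae_eq_of_subset_of_measure_ge (fun _ hy => monotone_cdf μ hy)
    (by rw [measure_cdf_le_eq_ofReal hc ⟨cdf_nonneg _ _, cdf_le_one _ _⟩, ofReal_cdf])
    measurableSet_Iic.nullMeasurableSet (measure_ne_top _ _)

end Cdf

variable {Ω : Type*} {m mΩ : MeasurableSpace Ω} {P : Measure Ω} [IsProbabilityMeasure P]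

theorem cdf_map_apply {Y : Ω → ℝ} (hY : Measurable Y) (y : ℝ) :
    cdf (P.map Y) y = (P {ω | Y ω ≤ y}).toReal := by
  have : IsProbabilityMeasure (P.map Y) := Measure.isProbabilityMeasure_map hY.aemeasurable
  rw [cdf_eq_real, measureReal_def, Measure.map_apply hY measurableSet_Iic]
  rfl

theorem measureReal_preimage_cdf_le {Y : Ω → ℝ} (hY : Measurable Y)
    (hc : Continuous (cdf (P.map Y))) {t : ℝ} (ht : t ∈ Icc (0 : ℝ) 1) :
    P.real (Y ⁻¹' {y | cdf (P.map Y) y ≤ t}) = t := by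
  have : IsProbabilityMeasure (P.map Y) := Measure.isProbabilityMeasure_map hY.aemeasurable
  rw [measureReal_def, ← Measure.map_apply hY (measurableSet_cdf_le _ t),
    measure_cdf_le_eq_ofReal hc ht, ENNReal.toReal_ofReal ht.1]

theorem integral_indicator_preimage_cdf_le {Y : Ω → ℝ} (hY : Measurable Y)
    (hc : Continuous (cdf (P.map Y))) {t : ℝ} (ht : t ∈ Icc (0 : ℝ) 1) :
    ∫ ω, (Y ⁻¹' {y | cdf (P.map Y) y ≤ t}).indicator (1 : Ω → ℝ) ω ∂P = t := by
  rw [integral_indicator_one (hY (measurableSet_cdf_le _ t)),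
    measureReal_preimage_cdf_le hY hc ht]

theorem indep_comap_of_measure_preimage_Iic_inter {Y : Ω → ℝ} (hY : Measurable Y) (hm : m ≤ mΩ)
    (h : ∀ y A, MeasurableSet[m] A → P (Y ⁻¹' Iic y ∩ A) = P (Y ⁻¹' Iic y) * P A) :
    Indep (MeasurableSpace.comap Y inferInstance) m P := by
  refine IndepSets.indep hY.comap_le hm (isPiSystem_Iic.comap Y)
    (@MeasurableSpace.isPiSystem_measurableSet Ω m)
    ?_ (@MeasurableSpace.generateFrom_measurableSet Ω m).symm ?_
  · rw [BorelSpace.measurable_eq (α := ℝ), borel_eq_generateFrom_Iic,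
      MeasurableSpace.comap_generateFrom]
    rfl
  · rw [IndepSets_iff]
    rintro _ A ⟨_, ⟨y, rfl⟩, rfl⟩ hA
    exact h y A hA

theorem measure_inter_eq_mul_of_condExp_indicator_ae_eq (hm : m ≤ mΩ)
    {S : Set Ω} (hS : MeasurableSet S)
    (h : P[S.indicator (1 : Ω → ℝ) | m] =ᵐ[P] fun _ => P.real S) {A : Set Ω}
    (hA : MeasurableSet[m] A) :
    P (S ∩ A) = P S * P A := by
  have hreal : P.real (A ∩ S) = P.real S * P.real A := calc
    P.real (A ∩ S) = ∫ ω in A, S.indicator (1 : Ω → ℝ) ω ∂P := by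
      rw [integral_indicator_one hS, measureReal_restrict_apply hS, inter_comm]
    _ = ∫ ω in A, (P[S.indicator (1 : Ω → ℝ) | m]) ω ∂P :=
      (setIntegral_condExp hm ((integrable_const (1 : ℝ)).indicator hS) hA).symm
    _ = P.real S * P.real A := by
      rw [setIntegral_congr_ae (hm A hA) (h.mono fun _ hω _ => hω), setIntegral_const,
        smul_eq_mul, mul_comm]
  rw [inter_comm, ← ENNReal.toReal_eq_toReal_iff' (measure_ne_top _ _)
    (ENNReal.mul_ne_top (measure_ne_top _ _) (measure_ne_top _ _)), ENNReal.toReal_mul]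
  exact hreal

theorem condExp_ae_eq_integral_of_integral_condExp_sq (hm : m ≤ mΩ)
    {f : Ω → ℝ} (hf : MemLp f 2 P) (h : ∫ ω, (P[f | m]) ω ^ 2 ∂P = (∫ ω, f ω ∂P) ^ 2) :
    P[f | m] =ᵐ[P] fun _ => ∫ ω, f ω ∂P := by
  have hg : MemLp (P[f | m]) 2 P := hf.condExp (by norm_num)
  have hmean : ∫ ω, (P[f | m]) ω ∂P = ∫ ω, f ω ∂P := integral_condExp hm
  have hvar : Var[P[f | m]; P] = 0 := by
    rw [variance_eq_sub hg]
    simp only [Pi.pow_apply, h, hmean, sub_self]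
  rw [← hmean]
  exact ae_eq_integral_of_variance_eq_zero hg hvar

theorem indepFun_iff_condExp_indicator_cdf_le_ae_eq {β : Type*} [MeasurableSpace β] {X : Ω → β}
    {Y : Ω → ℝ} (hX : Measurable X) (hY : Measurable Y) (hc : Continuous (cdf (P.map Y))) :
    IndepFun Y X P ↔ ∀ t ∈ Icc (0 : ℝ) 1,
      P[(Y ⁻¹' {y | cdf (P.map Y) y ≤ t}).indicator (1 : Ω → ℝ) |
        MeasurableSpace.comap X inferInstance] =ᵐ[P] fun _ => t := by
  have : IsProbabilityMeasure (P.map Y) := Measure.isProbabilityMeasure_map hY.aemeasurable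
  rw [IndepFun_iff_Indep]
  constructor
  · intro hindep t ht
    have hmeas : StronglyMeasurable[MeasurableSpace.comap Y inferInstance]
        ((Y ⁻¹' {y | cdf (P.map Y) y ≤ t}).indicator (1 : Ω → ℝ)) :=
      stronglyMeasurable_const.indicator ⟨_, measurableSet_cdf_le _ t, rfl⟩
    have := condExp_indep_eq hY.comap_le hX.comap_le hmeas hindep
    rwa [integral_indicator_preimage_cdf_le hY hc ht] at this
  · intro h
    refine indep_comap_of_measure_preimage_Iic_inter hY hX.comap_le fun y A hA => ?_
    have hae : Y ⁻¹' Iic y =ᵐ[P] Y ⁻¹' {x | cdf (P.map Y) x ≤ cdf (P.map Y) y} :=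
      (hY.quasiMeasurePreserving P).preimage_ae_eq (Iic_ae_eq_cdf_le hc y)
    have ht : cdf (P.map Y) y ∈ Icc (0 : ℝ) 1 := ⟨cdf_nonneg _ _, cdf_le_one _ _⟩
    rw [measure_congr (hae.inter (ae_eq_refl A)), measure_congr hae]
    refine measure_inter_eq_mul_of_condExp_indicator_ae_eq hX.comap_le
      (hY (measurableSet_cdf_le _ _)) ?_ hA
    rw [measureReal_preimage_cdf_le hY hc ht]
    exact h _ ht

end ProbabilityTheory

/-- `Y` and `X` are independent iff `ψ_C` is the independence copula,
iff the diagonal of `ψ_C` is `t ↦ t²`. -/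
theorem indep_iff_psi_eq_pi_iff_diagonal
    {Ω : Type*} [MeasurableSpace Ω] (P : Measure Ω) [IsProbabilityMeasure P]
    {d : ℕ} (X : Ω → (Fin d → ℝ)) (Y : Ω → ℝ) (hX : Measurable X) (hY : Measurable Y)
    (G : ℝ → ℝ) (hG : ∀ y, G y = (P {ω | Y ω ≤ y}).toReal) (hGc : Continuous G)
    (mX : MeasurableSpace Ω) (hmX : mX = MeasurableSpace.comap X inferInstance)
    (ψ : ℝ → ℝ → ℝ)
    (hψ : ∀ s t : ℝ, ψ s t =
      ∫ ω, (P[fun ω' => if G (Y ω') ≤ s then (1:ℝ) else 0 | mX]) ω *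
           (P[fun ω' => if G (Y ω') ≤ t then (1:ℝ) else 0 | mX]) ω ∂P) :
    (IndepFun Y X P ↔ ∀ s ∈ Icc (0:ℝ) 1, ∀ t ∈ Icc (0:ℝ) 1, ψ s t = s * t) ∧
    (IndepFun Y X P ↔ ∀ t ∈ Icc (0:ℝ) 1, ψ t t = t ^ 2) := by
  subst hmX
  obtain rfl : G = cdf (P.map Y) := funext fun y => (hG y).trans (cdf_map_apply hY y).symm
  set S : ℝ → Set Ω := fun t => Y ⁻¹' {y | cdf (P.map Y) y ≤ t}
  have hind (t : ℝ) : (fun ω => if cdf (P.map Y) (Y ω) ≤ t then (1 : ℝ) else 0)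
      = (S t).indicator 1 := funext fun ω => by simp [S, indicator_apply]
  simp only [hind] at hψ
  have hiff := indepFun_iff_condExp_indicator_cdf_le_ae_eq hX hY hGc
  have hprod (hconst : ∀ t ∈ Icc (0 : ℝ) 1,
      P[(S t).indicator 1 | MeasurableSpace.comap X inferInstance] =ᵐ[P] fun _ => t) :
      ∀ s ∈ Icc (0:ℝ) 1, ∀ t ∈ Icc (0:ℝ) 1, ψ s t = s * t := fun s hs t ht => by
    refine (hψ s t).trans ((integral_congr_ae ((hconst s hs).mul (hconst t ht))).trans ?_)
    simp
  have hdiag (hψt : ∀ t ∈ Icc (0:ℝ) 1, ψ t t = t ^ 2) (t : ℝ) (ht : t ∈ Icc (0 : ℝ) 1) :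
      P[(S t).indicator 1 | MeasurableSpace.comap X inferInstance] =ᵐ[P] fun _ => t := by
    have hmean := integral_indicator_preimage_cdf_le hY hGc ht
    have hmem : MemLp ((S t).indicator (1 : Ω → ℝ)) 2 P :=
      (memLp_const 1).indicator (hY (measurableSet_cdf_le _ t))
    have hconst := condExp_ae_eq_integral_of_integral_condExp_sq hX.comap_le hmem
      (by rw [hmean, ← hψt t ht, hψ]; simp only [sq])
    rwa [hmean] at hconst
  refine ⟨⟨fun h => hprod (hiff.1 h), fun h => hiff.2 (hdiag fun t ht => ?_)⟩,
    ⟨fun h t ht => ?_, fun h => hiff.2 (hdiag h)⟩⟩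
  · rw [h t ht t ht, sq]
  · rw [hprod (hiff.1 h) t ht t ht, sq]
end

section
/- Let X : Ω → ℝ^d and Y : Ω → ℝ be random variables with G, the distribution function of Y, continuous, and let ψ_C(s,t) := E[ E[1_{G(Y) ≤ s} | σ(X)] · E[1_{G(Y) ≤ t} | σ(X)] ]. Define B : [0,1]² → [0,1] by B(s,t) = min(s,t)² if s + t ≤ 1 and B(s,t) = min(s,t) − max(s,t) + max(s,t)² if s + t > 1. Then B(s,t) ≤ ψ_C(s,t) ≤ min(s,t) for all (s,t) ∈ [0,1]²; in particular t² ≤ ψ_C(t,t) for all t ∈ [0,1]. -/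
open MeasureTheory ProbabilityTheory Set Filter

/-! Write `U s := P[G(Y) ≤ s | X]`. These are `[0,1]`-valued, increasing in `s`, and `E U s = s`
because `G(Y)` is uniform on `[0,1]` when `G` is continuous. For `s ≤ t` we have `U s ≤ U t ≤ 1`,
so `E[U s U t] ≤ E[U s] = s`, while `E[U s U t] ≥ E[(U s)²] ≥ s²` by Jensen and
`E[U s U t] ≥ E[U s - U t + (U t)²] ≥ s - t + t²` because `(U t - U s)(1 - U t) ≥ 0`.
The Bertino copula is, on each side of the antidiagonal, one of these two lower bounds. -/

noncomputable def bertino (s t : ℝ) : ℝ :=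
  if s + t ≤ 1 then min s t ^ 2 else min s t - max s t + max s t ^ 2

lemma bertino_comm (s t : ℝ) : bertino s t = bertino t s := by
  simp only [bertino, add_comm s t, min_comm s t, max_comm s t]

lemma bertino_self (t : ℝ) : bertino t t = t ^ 2 := by
  simp [bertino]

lemma bertino_le_of_le {s t : ℝ} (h : s ≤ t) : bertino s t ≤ max (s ^ 2) (s - t + t ^ 2) := by
  rw [bertino, min_eq_left h, max_eq_right h]
  split_ifs
  exacts [le_max_left _ _, le_max_right _ _]

lemma measureReal_cdf_le_eq_of_continuous (μ : Measure ℝ) [IsProbabilityMeasure μ]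
    (hF : Continuous (cdf μ)) {s : ℝ} (hs : s ∈ Icc (0 : ℝ) 1) : μ.real {y | cdf μ y ≤ s} = s := by
  obtain rfl | hs1 := hs.2.eq_or_lt
  · simp [cdf_le_one]
  set A := {y | cdf μ y ≤ s}
  obtain ⟨y₁, hy₁⟩ : ∃ y₁, s < cdf μ y₁ :=
    ((tendsto_cdf_atTop μ).eventually (eventually_gt_nhds hs1)).exists
  obtain hA | hA := A.eq_empty_or_nonempty
  · have hs0 : s ≤ 0 := ge_of_tendsto (tendsto_cdf_atBot μ) <|
      Eventually.of_forall fun y => le_of_not_ge fun hy => hA.subset hy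
    simp [hA, le_antisymm hs0 hs.1]
  have hA_bdd : BddAbove A := ⟨y₁, fun y hy => ((cdf μ).mono.reflect_lt (hy.trans_lt hy₁)).le⟩
  -- `A` is a closed lower set, hence `Iic a`; the intermediate value theorem gives `cdf μ a = s`.
  set a := sSup A
  have haA : a ∈ A := (isClosed_le hF continuous_const).csSup_mem hA hA_bdd
  have hA_eq : A = Iic a :=
    Subset.antisymm (fun y hy => le_csSup hA_bdd hy) fun y hy => ((cdf μ).mono hy).trans haA
  obtain ⟨c, hc⟩ : s ∈ range (cdf μ) := intermediate_value_univ a y₁ hF ⟨haA, hy₁.le⟩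
  have hca : c ≤ a := le_csSup hA_bdd (hc.le : cdf μ c ≤ s)
  rw [hA_eq, ← cdf_eq_real]
  exact le_antisymm haA (hc ▸ (cdf μ).mono hca)

lemma measureReal_comp_le_eq_of_continuous_cdf {Ω : Type*} {mΩ : MeasurableSpace Ω}
    {P : Measure Ω} [IsProbabilityMeasure P] {Y : Ω → ℝ} (hY : Measurable Y) {G : ℝ → ℝ}
    (hG : ∀ y, G y = (P {ω | Y ω ≤ y}).toReal) (hGc : Continuous G) {r : ℝ}
    (hr : r ∈ Icc (0 : ℝ) 1) : P.real {ω | G (Y ω) ≤ r} = r := by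
  have := Measure.isProbabilityMeasure_map (μ := P) hY.aemeasurable
  obtain rfl : G = cdf (P.map Y) := funext fun y => by
    rw [hG, cdf_eq_real, map_measureReal_apply hY measurableSet_Iic]; rfl
  calc P.real {ω | cdf (P.map Y) (Y ω) ≤ r}
      = (P.map Y).real {y | cdf (P.map Y) y ≤ r} :=
        (map_measureReal_apply hY (hGc.measurable measurableSet_Iic)).symm
    _ = r := measureReal_cdf_le_eq_of_continuous _ hGc hr

section
variable {Ω : Type*} [MeasurableSpace Ω] {P : Measure Ω} {U V : Ω → ℝ}

lemma memLp_of_ae_mem_Icc [IsFiniteMeasure P] (hU : AEStronglyMeasurable U P)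
    (hU01 : ∀ᵐ ω ∂P, U ω ∈ Icc (0 : ℝ) 1) (p : ENNReal) : MemLp U p P :=
  .of_bound hU 1 <| hU01.mono fun _ h => abs_le.2 ⟨by linarith [h.1], h.2⟩

lemma integral_mul_le_integral_of_le_one (hU : Integrable U P) (hUV : Integrable (U * V) P)
    (hU0 : 0 ≤ᵐ[P] U) (hV1 : V ≤ᵐ[P] 1) : ∫ ω, U ω * V ω ∂P ≤ ∫ ω, U ω ∂P :=
  integral_mono_ae hUV hU <| by
    filter_upwards [hU0, hV1] with ω h0 h1
    exact mul_le_of_le_one_right h0 h1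

variable [IsProbabilityMeasure P]

lemma sq_integral_le_integral_sq (hU : MemLp U 2 P) : (∫ ω, U ω ∂P) ^ 2 ≤ ∫ ω, U ω ^ 2 ∂P := by
  have := variance_nonneg U P
  rw [variance_eq_sub hU] at this
  simpa using this

lemma max_sq_le_integral_mul_of_le (hU : AEStronglyMeasurable U P)
    (hV : AEStronglyMeasurable V P) (hU01 : ∀ᵐ ω ∂P, U ω ∈ Icc (0 : ℝ) 1)
    (hV01 : ∀ᵐ ω ∂P, V ω ∈ Icc (0 : ℝ) 1)
    (hUV : U ≤ᵐ[P] V) :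
    max ((∫ ω, U ω ∂P) ^ 2) (∫ ω, U ω ∂P - ∫ ω, V ω ∂P + (∫ ω, V ω ∂P) ^ 2) ≤
      ∫ ω, U ω * V ω ∂P := by
  have hU2 : MemLp U 2 P := memLp_of_ae_mem_Icc hU hU01 2
  have hV2 : MemLp V 2 P := memLp_of_ae_mem_Icc hV hV01 2
  have hUV_int : Integrable (U * V) P := hU2.integrable_mul hV2
  have hU_int : Integrable U P := hU2.integrable one_le_two
  have hV_int : Integrable V P := hV2.integrable one_le_two
  have hUV_sub : Integrable (fun ω => U ω - V ω) P := hU_int.sub hV_int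
  refine max_le ?_ ?_
  · calc (∫ ω, U ω ∂P) ^ 2 ≤ ∫ ω, U ω ^ 2 ∂P := sq_integral_le_integral_sq hU2
      _ ≤ ∫ ω, U ω * V ω ∂P := integral_mono_ae hU2.integrable_sq hUV_int <| by
          filter_upwards [hU01, hUV] with ω h01 h
          rw [sq]; exact mul_le_mul_of_nonneg_left h h01.1
  · -- `U - V + V ^ 2 ≤ U * V` pointwise, since `(V - U) * (1 - V) ≥ 0`
    calc ∫ ω, U ω ∂P - ∫ ω, V ω ∂P + (∫ ω, V ω ∂P) ^ 2
        ≤ ∫ ω, U ω ∂P - ∫ ω, V ω ∂P + ∫ ω, V ω ^ 2 ∂P := by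
          gcongr; exact sq_integral_le_integral_sq hV2
      _ = ∫ ω, (U ω - V ω + V ω ^ 2) ∂P := by
          rw [integral_add hUV_sub hV2.integrable_sq, integral_sub hU_int hV_int]
      _ ≤ ∫ ω, U ω * V ω ∂P := integral_mono_ae (hUV_sub.add hV2.integrable_sq) hUV_int <| by
          filter_upwards [hV01, hUV] with ω h01 h
          nlinarith [h01.2]

lemma bertino_integral_le_integral_mul (hU : AEStronglyMeasurable U P)
    (hV : AEStronglyMeasurable V P) (hU01 : ∀ᵐ ω ∂P, U ω ∈ Icc (0 : ℝ) 1)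
    (hV01 : ∀ᵐ ω ∂P, V ω ∈ Icc (0 : ℝ) 1) (hUV : U ≤ᵐ[P] V) :
    bertino (∫ ω, U ω ∂P) (∫ ω, V ω ∂P) ≤ ∫ ω, U ω * V ω ∂P :=
  (bertino_le_of_le (integral_mono_ae ((memLp_of_ae_mem_Icc hU hU01 1).integrable le_rfl)
    ((memLp_of_ae_mem_Icc hV hV01 1).integrable le_rfl) hUV)).trans
    (max_sq_le_integral_mul_of_le hU hV hU01 hV01 hUV)

lemma integral_mul_le_min (hU : AEStronglyMeasurable U P)
    (hV : AEStronglyMeasurable V P) (hU01 : ∀ᵐ ω ∂P, U ω ∈ Icc (0 : ℝ) 1)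
    (hV01 : ∀ᵐ ω ∂P, V ω ∈ Icc (0 : ℝ) 1) :
    ∫ ω, U ω * V ω ∂P ≤ min (∫ ω, U ω ∂P) (∫ ω, V ω ∂P) := by
  have hU2 : MemLp U 2 P := memLp_of_ae_mem_Icc hU hU01 2
  have hV2 : MemLp V 2 P := memLp_of_ae_mem_Icc hV hV01 2
  refine le_min (integral_mul_le_integral_of_le_one (hU2.integrable one_le_two)
    (hU2.integrable_mul hV2) (hU01.mono fun _ h => h.1) (hV01.mono fun _ h => h.2)) ?_
  simp_rw [mul_comm (U _)]
  exact integral_mul_le_integral_of_le_one (hV2.integrable one_le_two)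
    (hV2.integrable_mul hU2) (hV01.mono fun _ h => h.1) (hU01.mono fun _ h => h.2)

end

section
variable {Ω : Type*} {m m0 : MeasurableSpace Ω} {P : Measure Ω} {E F : Set Ω}

lemma condExp_indicator_one_mem_Icc [IsFiniteMeasure P] (hm : m ≤ m0) (hE : MeasurableSet E) :
    ∀ᵐ ω ∂P, P[E.indicator (1 : Ω → ℝ) | m] ω ∈ Icc (0 : ℝ) 1 := by
  have h0 := condExp_nonneg (m := m) (μ := P) <| Eventually.of_forall
    (indicator_nonneg (fun _ _ => zero_le_one) : 0 ≤ E.indicator (1 : Ω → ℝ))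
  have h1 := condExp_mono (m := m) ((integrable_const (μ := P) (1 : ℝ)).indicator hE)
    (integrable_const 1) (Eventually.of_forall (indicator_le_self' fun _ _ => zero_le_one))
  rw [condExp_const hm] at h1
  filter_upwards [h0, h1] with ω h0 h1 using ⟨h0, h1⟩

lemma condExp_indicator_one_mono [IsFiniteMeasure P] (hE : MeasurableSet E)
    (hF : MeasurableSet F) (hEF : E ⊆ F) :
    P[E.indicator (1 : Ω → ℝ) | m] ≤ᵐ[P] P[F.indicator 1 | m] :=
  condExp_mono ((integrable_const 1).indicator hE) ((integrable_const 1).indicator hF)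
    (Eventually.of_forall (indicator_le_indicator_of_subset hEF fun _ => zero_le_one))

lemma bertino_le_integral_condExp_mul_le_min [IsProbabilityMeasure P] (hm : m ≤ m0)
    {A : ℝ → Set Ω} (hA : ∀ r, MeasurableSet (A r)) (hA_mono : Monotone A)
    (hPA : ∀ r ∈ Icc (0 : ℝ) 1, P.real (A r) = r)
    {s t : ℝ} (hs : s ∈ Icc (0 : ℝ) 1) (ht : t ∈ Icc (0 : ℝ) 1) :
    bertino s t ≤ ∫ ω, P[(A s).indicator 1 | m] ω * P[(A t).indicator 1 | m] ω ∂P ∧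
      ∫ ω, P[(A s).indicator 1 | m] ω * P[(A t).indicator 1 | m] ω ∂P ≤ min s t := by
  set U : ℝ → Ω → ℝ := fun r => P[(A r).indicator 1 | m]
  have hU_meas (r : ℝ) : AEStronglyMeasurable (U r) P :=
    integrable_condExp.aestronglyMeasurable
  have hU01 (r : ℝ) : ∀ᵐ ω ∂P, U r ω ∈ Icc (0 : ℝ) 1 := condExp_indicator_one_mem_Icc hm (hA r)
  have hU_integral (r : ℝ) (hr : r ∈ Icc (0 : ℝ) 1) : ∫ ω, U r ω ∂P = r := by
    rw [integral_condExp hm, integral_indicator_one (hA r), hPA r hr]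
  have hU_mono {s t : ℝ} (hst : s ≤ t) : U s ≤ᵐ[P] U t :=
    condExp_indicator_one_mono (hA s) (hA t) (hA_mono hst)
  have hupper := integral_mul_le_min (hU_meas s) (hU_meas t) (hU01 s) (hU01 t)
  have hlower : bertino (∫ ω, U s ω ∂P) (∫ ω, U t ω ∂P) ≤ ∫ ω, U s ω * U t ω ∂P := by
    rcases le_total s t with hst | hts
    · exact bertino_integral_le_integral_mul (hU_meas s) (hU_meas t) (hU01 s) (hU01 t)
        (hU_mono hst)
    · simp_rw [bertino_comm (∫ ω, U s ω ∂P), mul_comm (U s _)]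
      exact bertino_integral_le_integral_mul (hU_meas t) (hU_meas s) (hU01 t) (hU01 s)
        (hU_mono hts)
  rw [hU_integral s hs, hU_integral t ht] at hupper hlower
  exact ⟨hlower, hupper⟩

end

/-- The copula `ψ_C` lies between the Bertino copula with diagonal `t ↦ t²`
and the comonotonicity copula `min`; in particular `t² ≤ ψ_C(t,t)`. -/
theorem bertino_le_psi_le_min
    {Ω : Type*} [MeasurableSpace Ω] (P : Measure Ω) [IsProbabilityMeasure P]
    {d : ℕ} (X : Ω → (Fin d → ℝ)) (Y : Ω → ℝ) (hX : Measurable X) (hY : Measurable Y)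
    (G : ℝ → ℝ) (hG : ∀ y, G y = (P {ω | Y ω ≤ y}).toReal) (hGc : Continuous G)
    (mX : MeasurableSpace Ω) (hmX : mX = MeasurableSpace.comap X inferInstance)
    (ψ : ℝ → ℝ → ℝ)
    (hψ : ∀ s t : ℝ, ψ s t =
      ∫ ω, (P[fun ω' => if G (Y ω') ≤ s then (1:ℝ) else 0 | mX]) ω *
           (P[fun ω' => if G (Y ω') ≤ t then (1:ℝ) else 0 | mX]) ω ∂P)
    (B : ℝ → ℝ → ℝ)
    (hB : ∀ s t : ℝ, B s t =
      if s + t ≤ 1 then (min s t) ^ 2 else min s t - max s t + (max s t) ^ 2) :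
    (∀ s ∈ Icc (0:ℝ) 1, ∀ t ∈ Icc (0:ℝ) 1, B s t ≤ ψ s t ∧ ψ s t ≤ min s t) ∧
    (∀ t ∈ Icc (0:ℝ) 1, t ^ 2 ≤ ψ t t) := by
  have hψ' (s t : ℝ) : ψ s t = ∫ ω, P[{ω | G (Y ω) ≤ s}.indicator 1 | mX] ω *
      P[{ω | G (Y ω) ≤ t}.indicator 1 | mX] ω ∂P := by
    rw [hψ]; rfl
  have hbounds (s : ℝ) (hs : s ∈ Icc (0 : ℝ) 1) (t : ℝ) (ht : t ∈ Icc (0 : ℝ) 1) :=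
    hψ' s t ▸ bertino_le_integral_condExp_mul_le_min (P := P) (hmX.le.trans hX.comap_le)
      (fun _ => hY (hGc.measurable measurableSet_Iic)) (fun _ _ h _ hω => le_trans hω h)
      (fun _ => measureReal_comp_le_eq_of_continuous_cdf hY hG hGc) hs ht
  refine ⟨fun s hs t ht => hB s t ▸ hbounds s hs t ht, fun t ht => ?_⟩
  simpa only [bertino_self] using (hbounds t ht t ht).1
end

section
/- Let X₁, ..., X_d : Ω → ℝ and Y : Ω → ℝ be random variables with G, the distribution function of Y, continuous, and fix k ∈ {1,...,d−1}. Let 𝓖 := σ(X₁,...,X_k) and 𝓗 := σ(X₁,...,X_d), and for a σ-algebra 𝓐 set ψ_𝓐(s,t) := E[ E[1_{G(Y) ≤ s} | 𝓐] · E[1_{G(Y) ≤ t} | 𝓐] ]. Then the following are equivalent: (a) for every t ∈ [0,1], E[1_{Y ≤ t'} | 𝓗] = E[1_{Y ≤ t'} | 𝓖] almost surely for all t' ∈ ℝ (i.e., Y and (X_{k+1},...,X_d) are conditionally independent given (X₁,...,X_k)); (b) ψ_𝓗(t,t) = ψ_𝓖(t,t) for all t ∈ [0,1]. Moreover, (a)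 implies ψ_𝓗(s,t) = ψ_𝓖(s,t) for all (s,t) ∈ [0,1]². -/
/-!
Conditional expectation onto the larger σ-algebra `𝓗 ⊇ 𝓖` splits orthogonally:
`∫ (E[f|𝓗] - E[f|𝓖])² = ∫ E[f|𝓗]² - ∫ E[f|𝓖]²`, so equal second moments force
`E[f|𝓗] = E[f|𝓖]` a.e. Since `G` is monotone and continuous, every sublevel set `{G ≤ s}` is
`∅`, `ℝ` or some `Iic c`, so the indicators `1{G(Y) ≤ s}` are constants or indicators
`1{Y ≤ c}`; conversely `1{Y ≤ t} = 1{G(Y) ≤ G(t)}` a.s., because `Y` puts no mass on an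
interval where `G` is flat. Applying the first fact to `f = 1{G(Y) ≤ G(t)}` gives (b) ⇒ (a).
-/

open MeasureTheory ProbabilityTheory Set Filter

section Pythagoras

variable {Ω : Type*} {m m₁ m₂ m0 : MeasurableSpace Ω} {μ : Measure Ω} {f g : Ω → ℝ}

lemma integral_mul_condExp_of_stronglyMeasurable (hm : m ≤ m0) [SigmaFinite (μ.trim hm)]
    (hg : StronglyMeasurable[m] g) (hgf : Integrable (g * f) μ) (hf : Integrable f μ) :
    ∫ ω, g ω * μ[f|m] ω ∂μ = ∫ ω, g ω * f ω ∂μ :=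
  (integral_congr_ae (condExp_mul_of_stronglyMeasurable_left hg hgf hf)).symm.trans
    (integral_condExp hm)

lemma integral_sub_condExp_mul_self [IsFiniteMeasure μ] (h₁₂ : m₁ ≤ m₂) (h₂ : m₂ ≤ m0)
    (hf : MemLp f 2 μ) :
    ∫ ω, (μ[f|m₂] ω - μ[f|m₁] ω) * (μ[f|m₂] ω - μ[f|m₁] ω) ∂μ =
      ∫ ω, μ[f|m₂] ω * μ[f|m₂] ω ∂μ - ∫ ω, μ[f|m₁] ω * μ[f|m₁] ω ∂μ := by
  set f₁ := μ[f|m₁]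
  set f₂ := μ[f|m₂]
  have hf₁ : MemLp f₁ 2 μ := hf.condExp one_le_two
  have hf₂ : MemLp f₂ 2 μ := hf.condExp one_le_two
  have hf₁f : Integrable (f₁ * f) μ := hf₁.integrable_mul hf
  have hf₁m : StronglyMeasurable[m₁] f₁ := stronglyMeasurable_condExp
  have cross₂ : ∫ ω, f₁ ω * f₂ ω ∂μ = ∫ ω, f₁ ω * f ω ∂μ :=
    integral_mul_condExp_of_stronglyMeasurable h₂ (hf₁m.mono h₁₂) hf₁f (hf.integrable one_le_two)
  have cross₁ : ∫ ω, f₁ ω * f₁ ω ∂μ = ∫ ω, f₁ ω * f ω ∂μ :=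
    integral_mul_condExp_of_stronglyMeasurable (h₁₂.trans h₂) hf₁m hf₁f (hf.integrable one_le_two)
  have expand : (fun ω => (f₂ ω - f₁ ω) * (f₂ ω - f₁ ω)) =
      fun ω => (f₂ ω * f₂ ω - f₁ ω * f₁ ω) - 2 * (f₁ ω * f₂ ω - f₁ ω * f₁ ω) := by
    funext ω; ring
  have h₁₁ : Integrable (fun ω => f₁ ω * f₁ ω) μ := hf₁.integrable_mul hf₁
  have h₂₂ : Integrable (fun ω => f₂ ω * f₂ ω) μ := hf₂.integrable_mul hf₂
  have h₁₂' : Integrable (fun ω => f₁ ω * f₂ ω) μ := hf₁.integrable_mul hf₂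
  have hd₂ : Integrable (fun ω => f₂ ω * f₂ ω - f₁ ω * f₁ ω) μ := h₂₂.sub h₁₁
  have hd₁ : Integrable (fun ω => f₁ ω * f₂ ω - f₁ ω * f₁ ω) μ := h₁₂'.sub h₁₁
  rw [expand, integral_sub hd₂ (hd₁.const_mul 2), integral_const_mul,
    integral_sub h₂₂ h₁₁, integral_sub h₁₂' h₁₁, cross₂, cross₁, sub_self, mul_zero, sub_zero]

lemma condExp_ae_eq_of_integral_mul_self_eq [IsFiniteMeasure μ] (h₁₂ : m₁ ≤ m₂) (h₂ : m₂ ≤ m0)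
    (hf : MemLp f 2 μ)
    (h : ∫ ω, μ[f|m₂] ω * μ[f|m₂] ω ∂μ = ∫ ω, μ[f|m₁] ω * μ[f|m₁] ω ∂μ) :
    μ[f|m₂] =ᵐ[μ] μ[f|m₁] := by
  have hd : MemLp (μ[f|m₂] - μ[f|m₁]) 2 μ :=
    (hf.condExp one_le_two).sub (hf.condExp one_le_two)
  have hzero := (integral_eq_zero_iff_of_nonneg (fun ω => mul_self_nonneg _)
    (hd.integrable_mul hd)).mp (by
      rw [← sub_eq_zero.mpr h, ← integral_sub_condExp_mul_self h₁₂ h₂ hf]; rfl)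
  filter_upwards [hzero] with ω hω
  exact sub_eq_zero.mp (mul_self_eq_zero.mp hω)

end Pythagoras

lemma Monotone.setOf_le_eq_empty_or_univ_or_Iic {α β : Type*} [ConditionallyCompleteLinearOrder α]
    [TopologicalSpace α] [OrderTopology α] [Preorder β] [TopologicalSpace β] [ClosedIicTopology β]
    {G : α → β} (hmono : Monotone G) (hcont : Continuous G) (s : β) :
    {y | G y ≤ s} = ∅ ∨ {y | G y ≤ s} = univ ∨ ∃ c, {y | G y ≤ s} = Iic c := by
  rcases {y | G y ≤ s}.eq_empty_or_nonempty with hempty | hne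
  · exact Or.inl hempty
  by_cases hbdd : BddAbove {y | G y ≤ s}
  · have hmem : sSup {y | G y ≤ s} ∈ {y | G y ≤ s} :=
      (isClosed_Iic.preimage hcont).csSup_mem hne hbdd
    exact Or.inr <| Or.inr ⟨_, Set.ext fun y =>
      ⟨fun hy => le_csSup hbdd hy, fun hy => (hmono hy).trans hmem⟩⟩
  · refine Or.inr <| Or.inl <| eq_univ_of_forall fun y => ?_
    obtain ⟨z, hz, hyz⟩ := not_bddAbove_iff.mp hbdd y
    exact (hmono hyz.le).trans hz

lemma ae_cdf_le_cdf_iff (μ : Measure ℝ) [IsProbabilityMeasure μ] (hcont : Continuous (cdf μ))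
    (t : ℝ) : ∀ᵐ y ∂μ, cdf μ y ≤ cdf μ t ↔ y ≤ t := by
  suffices ∀ᵐ y ∂μ, cdf μ y ≤ cdf μ t → y ≤ t by
    filter_upwards [this] with y hy using ⟨hy, fun h => monotone_cdf μ h⟩
  rcases (monotone_cdf μ).setOf_le_eq_empty_or_univ_or_Iic hcont (cdf μ t) with h | h | ⟨c, h⟩
  · exact ((eq_empty_iff_forall_notMem.mp h) t (le_refl (cdf μ t))).elim
  · have hone : 1 ≤ cdf μ t :=
      le_of_tendsto' (tendsto_cdf_atTop μ) fun y => (eq_univ_iff_forall.mp h y : cdf μ y ≤ cdf μ t)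
    have hnull : μ (Ioi t) = 0 := by
      rw [← measure_cdf μ, StieltjesFunction.measure_Ioi _ (tendsto_cdf_atTop μ),
        ENNReal.ofReal_eq_zero]
      linarith
    filter_upwards [measure_eq_zero_iff_ae_notMem.mp hnull] with y hy _
    exact not_lt.mp hy
  · have hc : ∀ y, cdf μ y ≤ cdf μ t ↔ y ≤ c := fun y => Set.ext_iff.mp h y
    have htc : t ≤ c := (hc t).mp le_rfl
    have hnull : μ (Ioc t c) = 0 := by
      rw [← measure_cdf μ, StieltjesFunction.measure_Ioc, ENNReal.ofReal_eq_zero, sub_nonpos]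
      exact (hc c).mpr le_rfl
    filter_upwards [measure_eq_zero_iff_ae_notMem.mp hnull] with y hy hyt
    exact not_lt.mp fun hty => hy ⟨hty, (hc y).mp hyt⟩

lemma condExp_ite_comp_le_ae_eq {Ω α : Type*} [ConditionallyCompleteLinearOrder α]
    [TopologicalSpace α] [OrderTopology α] {m₁ m₂ m0 : MeasurableSpace Ω} {μ : Measure Ω}
    [IsFiniteMeasure μ] (h₁ : m₁ ≤ m0) (h₂ : m₂ ≤ m0) {Y : Ω → α} {F : α → ℝ}
    (hmono : Monotone F) (hcont : Continuous F)
    (h : ∀ c, μ[fun ω => if Y ω ≤ c then (1:ℝ) else 0|m₂] =ᵐ[μ]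
      μ[fun ω => if Y ω ≤ c then (1:ℝ) else 0|m₁]) (s : ℝ) :
    μ[fun ω => if F (Y ω) ≤ s then (1:ℝ) else 0|m₂] =ᵐ[μ]
      μ[fun ω => if F (Y ω) ≤ s then (1:ℝ) else 0|m₁] := by
  have hconst (a : ℝ) : μ[fun _ => a|m₂] =ᵐ[μ] μ[fun _ => a|m₁] := by
    rw [condExp_const h₂, condExp_const h₁]
  rcases hmono.setOf_le_eq_empty_or_univ_or_Iic hcont s with hs | hs | ⟨c, hs⟩
  · have hF (y : α) : ¬F y ≤ s := eq_empty_iff_forall_notMem.mp hs y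
    simpa only [hF, if_false] using hconst 0
  · have hF (y : α) : F y ≤ s := eq_univ_iff_forall.mp hs y
    simpa only [hF, if_true] using hconst 1
  · have hF (y : α) : F y ≤ s ↔ y ≤ c := Set.ext_iff.mp hs y
    simpa only [hF] using h c

lemma memLp_ite_le {Ω : Type*} {mΩ : MeasurableSpace Ω} {μ : Measure Ω} [IsFiniteMeasure μ]
    {Z : Ω → ℝ} (hZ : Measurable Z) (s : ℝ) (p : ENNReal) :
    MemLp (fun ω => if Z ω ≤ s then (1:ℝ) else 0) p μ :=
  MemLp.of_bound ((measurable_const.ite (measurableSet_le hZ measurable_const)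
    measurable_const).aestronglyMeasurable) 1 (ae_of_all _ fun ω => by split_ifs <;> simp)

section Law

variable {Ω : Type*} {mΩ : MeasurableSpace Ω} {P : Measure Ω} [IsProbabilityMeasure P] {Y : Ω → ℝ}
  {G : ℝ → ℝ}

lemma eq_cdf_map (hY : Measurable Y) (hG : ∀ y, G y = (P {ω | Y ω ≤ y}).toReal) :
    G = cdf (P.map Y) := by
  have := Measure.isProbabilityMeasure_map (μ := P) hY.aemeasurable
  funext y
  rw [hG, cdf_eq_real, map_measureReal_apply hY measurableSet_Iic]
  rfl

lemma ite_le_ae_eq_ite_comp_le (hY : Measurable Y) (hG : ∀ y, G y = (P {ω | Y ω ≤ y}).toReal)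
    (hGc : Continuous G) (t : ℝ) :
    (fun ω => if Y ω ≤ t then (1:ℝ) else 0) =ᵐ[P] fun ω => if G (Y ω) ≤ G t then (1:ℝ) else 0 := by
  have := Measure.isProbabilityMeasure_map (μ := P) hY.aemeasurable
  obtain rfl := eq_cdf_map hY hG
  filter_upwards [ae_of_ae_map hY.aemeasurable (ae_cdf_le_cdf_iff _ hGc t)] with ω hω
  simp only [hω]

end Law

/-- `Y` is conditionally independent of `(X_{k+1},…,X_d)` given `(X₁,…,X_k)`
(expressed via a.s. equality of conditional distribution functions) iff the diagonals of
`ψ_𝓗` and `ψ_𝓖` coincide; moreover the conditional independence implies `ψ_𝓗 = ψ_𝓖`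
on the whole unit square. -/
theorem psi_diag_eq_iff_condIndep
    {Ω : Type*} [MeasurableSpace Ω] (P : Measure Ω) [IsProbabilityMeasure P]
    {d : ℕ} (X : Fin d → Ω → ℝ) (Y : Ω → ℝ)
    (hX : ∀ i, Measurable (X i)) (hY : Measurable Y)
    (G : ℝ → ℝ) (hG : ∀ y, G y = (P {ω | Y ω ≤ y}).toReal) (hGc : Continuous G)
    (k : ℕ) (hk1 : 1 ≤ k) (hk2 : k ≤ d - 1)
    (mG mH : MeasurableSpace Ω)
    (hmG : mG = ⨆ i ∈ Finset.univ.filter fun i : Fin d => (i : ℕ) < k,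
      MeasurableSpace.comap (X i) inferInstance)
    (hmH : mH = ⨆ i : Fin d, MeasurableSpace.comap (X i) inferInstance)
    (ψG ψH : ℝ → ℝ → ℝ)
    (hψG : ∀ s t : ℝ, ψG s t =
      ∫ ω, (P[fun ω' => if G (Y ω') ≤ s then (1:ℝ) else 0 | mG]) ω *
           (P[fun ω' => if G (Y ω') ≤ t then (1:ℝ) else 0 | mG]) ω ∂P)
    (hψH : ∀ s t : ℝ, ψH s t =
      ∫ ω, (P[fun ω' => if G (Y ω') ≤ s then (1:ℝ) else 0 | mH]) ω *
           (P[fun ω' => if G (Y ω') ≤ t then (1:ℝ) else 0 | mH]) ω ∂P) :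
    ((∀ t' : ℝ,
        P[fun ω => if Y ω ≤ t' then (1:ℝ) else 0 | mH]
          =ᵐ[P] P[fun ω => if Y ω ≤ t' then (1:ℝ) else 0 | mG]) ↔
      ∀ t ∈ Icc (0:ℝ) 1, ψH t t = ψG t t) ∧
    ((∀ t' : ℝ,
        P[fun ω => if Y ω ≤ t' then (1:ℝ) else 0 | mH]
          =ᵐ[P] P[fun ω => if Y ω ≤ t' then (1:ℝ) else 0 | mG]) →
      ∀ s ∈ Icc (0:ℝ) 1, ∀ t ∈ Icc (0:ℝ) 1, ψH s t = ψG s t) := by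
  have hH := hmH ▸ iSup_le fun i => (hX i).comap_le
  have hGH : mG ≤ mH := hmG ▸ hmH ▸
    iSup₂_le fun i _ => le_iSup (fun i => MeasurableSpace.comap (X i) inferInstance) i
  have hGcdf := eq_cdf_map hY hG
  have hGmono : Monotone G := hGcdf ▸ monotone_cdf _
  have hψ (ha : ∀ t', P[fun ω => if Y ω ≤ t' then (1:ℝ) else 0 | mH]
      =ᵐ[P] P[fun ω => if Y ω ≤ t' then (1:ℝ) else 0 | mG]) (s t : ℝ) : ψH s t = ψG s t := by
    have hcomp := condExp_ite_comp_le_ae_eq (hGH.trans hH) hH hGmono hGc ha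
    rw [hψH, hψG]
    exact integral_congr_ae ((hcomp s).mul (hcomp t))
  refine ⟨⟨fun ha t _ => hψ ha t t, fun hb t => ?_⟩, fun ha s _ t _ => hψ ha s t⟩
  have hind := ite_le_ae_eq_ite_comp_le hY hG hGc t
  have hdiag := hb (G t) (hGcdf ▸ ⟨cdf_nonneg _ t, cdf_le_one _ t⟩)
  rw [hψH, hψG] at hdiag
  calc P[fun ω => if Y ω ≤ t then (1:ℝ) else 0 | mH]
      =ᵐ[P] P[fun ω => if G (Y ω) ≤ G t then (1:ℝ) else 0 | mH] := condExp_congr_ae hind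
    _ =ᵐ[P] P[fun ω => if G (Y ω) ≤ G t then (1:ℝ) else 0 | mG] :=
        condExp_ae_eq_of_integral_mul_self_eq hGH hH (memLp_ite_le (hGc.measurable.comp hY) _ 2)
          hdiag
    _ =ᵐ[P] P[fun ω => if Y ω ≤ t then (1:ℝ) else 0 | mG] := (condExp_congr_ae hind).symm
end

section
/- Let X : Ω → ℝ^d and Y : Ω → ℝ be random variables with G, the distribution function of Y, continuous, and let ψ_C(s,t) := E[ E[1_{G(Y) ≤ s} | σ(X)] · E[1_{G(Y) ≤ t} | σ(X)] ]. Define Azadkia–Chatterjee's coefficient T(Y,X) := ( ∫_ℝ Var( P(Y ≥ y | X) ) dP^Y(y) ) / ( ∫_ℝ Var( 1_{Y ≥ y} ) dP^Y(y) ), where P^Y is the law of Y. Then ∫_ℝ Var(1_{Y ≥ y}) dP^Y(y) = 1/6 and T(Y,X) = 6 ∫₀¹ ψ_C(t,t) dt − 2, i.e., T equals Spearman's footrule φ applied to ψ_C. -/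
/-!
Since `G` is continuous, `G(Y)` is uniform on `[0, 1]` and `{Y ≥ y}` agrees a.s. with the
complement of `{G(Y) ≤ G(y)}`. Hence `Var 1_{Y ≥ y} = G(y) - G(y)²` and
`Var P(Y ≥ y | X) = ψ_C(G(y), G(y)) - G(y)²`, and the substitution `t = G(y)` turns both
integrals against the law of `Y` into integrals over `[0, 1]`: `1/6` and `∫₀¹ ψ_C(t, t) dt - 1/3`.
The diagonal `t ↦ ψ_C(t, t)` is monotone, which makes it integrable.
-/

open MeasureTheory ProbabilityTheory Set

namespace ProbabilityTheory

section ContinuousCDF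

variable {ν : Measure ℝ}

lemma exists_cdf_eq_of_continuous (hF : Continuous (cdf ν)) {c : ℝ} (hc₀ : 0 < c)
    (hc₁ : c < 1) : ∃ y, cdf ν y = c := by
  obtain ⟨a, ha⟩ := ((tendsto_cdf_atBot ν).eventually_lt_const hc₀).exists
  obtain ⟨b, hb⟩ := ((tendsto_cdf_atTop ν).eventually_const_lt hc₁).exists
  exact intermediate_value_univ a b hF ⟨ha.le, hb.le⟩

variable [IsProbabilityMeasure ν]

lemma measureReal_cdf_preimage_Iic_of_continuous (hF : Continuous (cdf ν)) {t : ℝ}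
    (ht₀ : 0 ≤ t) (ht₁ : t ≤ 1) : ν.real (cdf ν ⁻¹' Iic t) = t := by
  apply le_antisymm
  · refine le_of_forall_gt_imp_ge_of_dense fun c htc => ?_
    rcases lt_or_ge c 1 with hc₁ | hc₁
    · obtain ⟨y, rfl⟩ := exists_cdf_eq_of_continuous hF (ht₀.trans_lt htc) hc₁
      rw [cdf_eq_real]
      exact measureReal_mono fun z hz => ((monotone_cdf ν).reflect_lt (hz.trans_lt htc)).le
    · exact measureReal_le_one.trans hc₁
  · refine le_of_forall_lt_imp_le_of_dense fun c hct => ?_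
    rcases le_or_gt c 0 with hc₀ | hc₀
    · exact hc₀.trans measureReal_nonneg
    · obtain ⟨y, rfl⟩ := exists_cdf_eq_of_continuous hF hc₀ (hct.trans_le ht₁)
      rw [cdf_eq_real]
      exact measureReal_mono fun z hz => (monotone_cdf ν hz).trans hct.le

lemma map_cdf_of_continuous (hF : Continuous (cdf ν)) :
    ν.map (cdf ν) = volume.restrict (Ioc 0 1) := by
  refine Measure.ext_of_Iic _ _ fun t => ?_
  rw [Measure.map_apply hF.measurable measurableSet_Iic, Measure.restrict_apply measurableSet_Iic,
    inter_comm, Ioc_inter_Iic, Real.volume_Ioc, sub_zero]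
  rcases lt_or_ge t 0 with ht | ht
  · have : cdf ν ⁻¹' Iic t = ∅ := eq_empty_of_forall_notMem fun y hy => by
      simp only [mem_preimage, mem_Iic] at hy
      linarith [cdf_nonneg ν y]
    rw [this, measure_empty, eq_comm, ENNReal.ofReal_eq_zero]
    exact inf_le_right.trans ht.le
  · have hmin : cdf ν ⁻¹' Iic t = cdf ν ⁻¹' Iic (1 ⊓ t) := by
      ext y
      simp [cdf_le_one]
    rw [hmin, ← ofReal_measureReal,
      measureReal_cdf_preimage_Iic_of_continuous hF (le_inf zero_le_one ht) inf_le_left]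

lemma integral_comp_cdf_of_continuous (hF : Continuous (cdf ν)) {q : ℝ → ℝ}
    (hq : Measurable q) : ∫ y, q (cdf ν y) ∂ν = ∫ t in 0..1, q t := by
  rw [← integral_map hF.measurable.aemeasurable hq.aestronglyMeasurable,
    map_cdf_of_continuous hF, intervalIntegral.integral_of_le zero_le_one]

lemma measure_singleton_of_continuous_cdf (hF : Continuous (cdf ν)) (y : ℝ) : ν {y} = 0 := by
  rw [← measure_cdf ν, StieltjesFunction.measure_singleton,
    leftLim_eq_of_tendsto (hF.tendsto y |>.mono_left nhdsWithin_le_nhds), sub_self,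
    ENNReal.ofReal_zero]

lemma Ici_ae_eq_compl_cdf_le (hF : Continuous (cdf ν)) (y : ℝ) :
    Ici y =ᵐ[ν] (cdf ν ⁻¹' Iic (cdf ν y))ᶜ := by
  have hIic : Iic y =ᵐ[ν] cdf ν ⁻¹' Iic (cdf ν y) := by
    refine ae_eq_of_subset_of_measure_ge (fun z hz => monotone_cdf ν hz) ?_
      measurableSet_Iic.nullMeasurableSet (measure_ne_top _ _)
    rw [← ofReal_measureReal, ← ofReal_measureReal,
      measureReal_cdf_preimage_Iic_of_continuous hF (cdf_nonneg ν y) (cdf_le_one ν y),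
      cdf_eq_real]
  rw [← compl_Iio]
  exact ((Iio_ae_eq_Iic' (measure_singleton_of_continuous_cdf hF y)).trans hIic).compl

end ContinuousCDF

section CondExpIndicator

variable {Ω : Type*} {m m₀ : MeasurableSpace Ω} {μ : Measure Ω} {s t : Set Ω}

lemma memLp_indicator_one [IsFiniteMeasure μ] (hs : MeasurableSet s) (p : ENNReal) :
    MemLp (s.indicator (1 : Ω → ℝ)) p μ :=
  memLp_indicator_const p hs 1 (Or.inr (measure_ne_top μ s))

lemma integral_sq_condExp_indicator_mono [IsFiniteMeasure μ] (hs : MeasurableSet s)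
    (ht : MeasurableSet t) (hst : s ⊆ t) :
    ∫ ω, (μ[s.indicator (1 : Ω → ℝ) | m] ω) ^ 2 ∂μ ≤ ∫ ω, (μ[t.indicator 1 | m] ω) ^ 2 ∂μ := by
  have hle : μ[s.indicator (1 : Ω → ℝ) | m] ≤ᵐ[μ] μ[t.indicator 1 | m] :=
    condExp_mono ((memLp_indicator_one hs 1).integrable le_rfl)
      ((memLp_indicator_one ht 1).integrable le_rfl)
      (.of_forall (indicator_le_indicator_of_subset hst fun _ => zero_le_one))
  have hnonneg : 0 ≤ᵐ[μ] μ[s.indicator (1 : Ω → ℝ) | m] :=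
    condExp_nonneg (.of_forall (indicator_nonneg fun _ _ => zero_le_one))
  refine integral_mono_ae ((memLp_indicator_one hs 2).condExp one_le_two).integrable_sq
    ((memLp_indicator_one ht 2).condExp one_le_two).integrable_sq ?_
  filter_upwards [hle, hnonneg] with ω hω hω₀
  exact pow_le_pow_left₀ hω₀ hω 2

variable [IsProbabilityMeasure μ]

lemma variance_indicator_one (hs : MeasurableSet s) :
    Var[s.indicator 1; μ] = μ.real s * (1 - μ.real s) := by
  have hsq : s.indicator (1 : Ω → ℝ) ^ 2 = s.indicator 1 := by
    ext ω; by_cases h : ω ∈ s <;> simp [h]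
  rw [variance_eq_sub (memLp_indicator_one hs 2), hsq, integral_indicator_one hs]
  ring

lemma variance_condExp (hm : m ≤ m₀) {f : Ω → ℝ} (hf : MemLp f 2 μ) :
    Var[μ[f | m]; μ] = ∫ ω, (μ[f | m] ω) ^ 2 ∂μ - (∫ ω, f ω ∂μ) ^ 2 := by
  rw [variance_eq_sub (hf.condExp one_le_two), integral_condExp hm]
  rfl

lemma variance_condExp_indicator_compl (hm : m ≤ m₀) (hs : MeasurableSet s) :
    Var[μ[sᶜ.indicator (1 : Ω → ℝ) | m]; μ] =
      ∫ ω, (μ[s.indicator 1 | m] ω) ^ 2 ∂μ - μ.real s ^ 2 := by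
  have hint : Integrable (s.indicator (1 : Ω → ℝ)) μ :=
    (memLp_indicator_one hs 1).integrable le_rfl
  have hcompl : μ[sᶜ.indicator (1 : Ω → ℝ) | m] =ᵐ[μ] fun ω => 1 - μ[s.indicator 1 | m] ω := by
    rw [indicator_compl]
    filter_upwards [condExp_sub (m := m) (integrable_const (1 : ℝ)) hint] with ω hω
    rw [Pi.sub_apply, condExp_const hm] at hω
    exact hω
  rw [variance_congr hcompl, variance_const_sub integrable_condExp.1,
    variance_condExp hm (memLp_indicator_one hs 2), integral_indicator_one hs]

end CondExpIndicator

section RandomVariable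

variable {Ω : Type*} {m m₀ : MeasurableSpace Ω} {μ : Measure Ω} [IsProbabilityMeasure μ]
  {Y : Ω → ℝ}

lemma measureReal_preimage_cdf_preimage_Iic (hY : Measurable Y)
    (hF : Continuous (cdf (μ.map Y))) {t : ℝ} (ht₀ : 0 ≤ t) (ht₁ : t ≤ 1) :
    μ.real (Y ⁻¹' cdf (μ.map Y) ⁻¹' Iic t) = t := by
  have := Measure.isProbabilityMeasure_map (μ := μ) hY.aemeasurable
  rw [← map_measureReal_apply hY (hF.measurable measurableSet_Iic),
    measureReal_cdf_preimage_Iic_of_continuous hF ht₀ ht₁]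

lemma indicator_preimage_Ici_ae_eq (hY : Measurable Y) (hF : Continuous (cdf (μ.map Y)))
    (y : ℝ) :
    (Y ⁻¹' Ici y).indicator (1 : Ω → ℝ) =ᵐ[μ]
      (Y ⁻¹' cdf (μ.map Y) ⁻¹' Iic (cdf (μ.map Y) y))ᶜ.indicator 1 := by
  have := Measure.isProbabilityMeasure_map (μ := μ) hY.aemeasurable
  exact ae_eq_comp hY.aemeasurable
    (indicator_ae_eq_of_ae_eq_set (f := (1 : ℝ → ℝ)) (Ici_ae_eq_compl_cdf_le hF y))

lemma variance_indicator_preimage_Ici (hY : Measurable Y) (hF : Continuous (cdf (μ.map Y)))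
    (y : ℝ) :
    Var[(Y ⁻¹' Ici y).indicator 1; μ] = cdf (μ.map Y) y - cdf (μ.map Y) y ^ 2 := by
  have hS := hY (hF.measurable (measurableSet_Iic (a := cdf (μ.map Y) y)))
  rw [variance_congr (indicator_preimage_Ici_ae_eq hY hF y), variance_indicator_one hS.compl,
    probReal_compl_eq_one_sub hS,
    measureReal_preimage_cdf_preimage_Iic hY hF (cdf_nonneg _ y) (cdf_le_one _ y)]
  ring

lemma variance_condExp_indicator_preimage_Ici (hm : m ≤ m₀) (hY : Measurable Y)
    (hF : Continuous (cdf (μ.map Y))) (y : ℝ) :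
    Var[μ[(Y ⁻¹' Ici y).indicator 1 | m]; μ] =
      ∫ ω, (μ[(Y ⁻¹' cdf (μ.map Y) ⁻¹' Iic (cdf (μ.map Y) y)).indicator 1 | m] ω) ^ 2 ∂μ -
        cdf (μ.map Y) y ^ 2 := by
  have hS := hY (hF.measurable (measurableSet_Iic (a := cdf (μ.map Y) y)))
  rw [variance_congr (condExp_congr_ae (indicator_preimage_Ici_ae_eq hY hF y)),
    variance_condExp_indicator_compl hm hS,
    measureReal_preimage_cdf_preimage_Iic hY hF (cdf_nonneg _ y) (cdf_le_one _ y)]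

lemma integral_variance_indicator_preimage_Ici (hY : Measurable Y)
    (hF : Continuous (cdf (μ.map Y))) :
    ∫ y, Var[(Y ⁻¹' Ici y).indicator 1; μ] ∂(μ.map Y) = 1 / 6 := by
  have := Measure.isProbabilityMeasure_map (μ := μ) hY.aemeasurable
  simp_rw [variance_indicator_preimage_Ici hY hF]
  rw [integral_comp_cdf_of_continuous hF (q := fun t => t - t ^ 2) (by fun_prop)]
  norm_num [intervalIntegral.integral_sub, integral_pow]

lemma integral_variance_condExp_indicator_preimage_Ici (hm : m ≤ m₀) (hY : Measurable Y)
    (hF : Continuous (cdf (μ.map Y))) :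
    ∫ y, Var[μ[(Y ⁻¹' Ici y).indicator 1 | m]; μ] ∂(μ.map Y) =
      (∫ t in 0..1, ∫ ω, (μ[(Y ⁻¹' cdf (μ.map Y) ⁻¹' Iic t).indicator 1 | m] ω) ^ 2 ∂μ) -
        1 / 3 := by
  have := Measure.isProbabilityMeasure_map (μ := μ) hY.aemeasurable
  have hmono : Monotone fun t =>
      ∫ ω, (μ[(Y ⁻¹' cdf (μ.map Y) ⁻¹' Iic t).indicator 1 | m] ω) ^ 2 ∂μ :=
    fun _ _ hst => integral_sq_condExp_indicator_mono (hY (hF.measurable measurableSet_Iic))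
      (hY (hF.measurable measurableSet_Iic)) (preimage_mono (preimage_mono (Iic_subset_Iic.2 hst)))
  have hsubst :=
    integral_comp_cdf_of_continuous hF (hmono.measurable.sub (measurable_id.pow_const 2))
  simp only [Pi.sub_apply, id] at hsubst
  simp_rw [variance_condExp_indicator_preimage_Ici hm hY hF, hsubst,
    intervalIntegral.integral_sub hmono.intervalIntegrable
      (intervalIntegral.intervalIntegrable_pow 2)]
  norm_num [integral_pow]

end RandomVariable

end ProbabilityTheory

/-- Azadkia–Chatterjee's `T` equals Spearman's footrule applied to `ψ_C`;
its denominator `∫ Var(1_{Y ≥ y}) dP^Y(y)` equals `1/6`. -/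
theorem T_eq_spearman_footrule_of_psi
    {Ω : Type*} [MeasurableSpace Ω] (P : Measure Ω) [IsProbabilityMeasure P]
    {d : ℕ} (X : Ω → (Fin d → ℝ)) (Y : Ω → ℝ) (hX : Measurable X) (hY : Measurable Y)
    (G : ℝ → ℝ) (hG : ∀ y, G y = (P {ω | Y ω ≤ y}).toReal) (hGc : Continuous G)
    (ψ : ℝ → ℝ → ℝ)
    (hψ : ∀ s t : ℝ, ψ s t =
      ∫ ω, (P[fun ω' => if G (Y ω') ≤ s then (1:ℝ) else 0 |
              MeasurableSpace.comap X inferInstance]) ω *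
           (P[fun ω' => if G (Y ω') ≤ t then (1:ℝ) else 0 |
              MeasurableSpace.comap X inferInstance]) ω ∂P)
    (T : ℝ)
    (hT : T =
      (∫ y, variance
          (P[fun ω => if y ≤ Y ω then (1:ℝ) else 0 |
            MeasurableSpace.comap X inferInstance]) P ∂(P.map Y)) /
      (∫ y, variance (fun ω => if y ≤ Y ω then (1:ℝ) else 0) P ∂(P.map Y))) :
    (∫ y, variance (fun ω => if y ≤ Y ω then (1:ℝ) else 0) P ∂(P.map Y)) = 1 / 6 ∧
    T = 6 * (∫ t in (0:ℝ)..1, ψ t t) - 2 := by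
  have : IsProbabilityMeasure (P.map Y) := Measure.isProbabilityMeasure_map hY.aemeasurable
  obtain rfl : G = cdf (P.map Y) := funext fun y => by
    rw [hG, cdf_eq_real, map_measureReal_apply hY measurableSet_Iic]
    rfl
  have hind : ∀ y, (fun ω => if y ≤ Y ω then (1 : ℝ) else 0) = (Y ⁻¹' Ici y).indicator 1 :=
    fun y => funext fun ω => by by_cases h : y ≤ Y ω <;> simp [h]
  have hψ_diag : ∀ t, ψ t t = ∫ ω, (P[(Y ⁻¹' (cdf (P.map Y) ⁻¹' Iic t)).indicator 1 |
      MeasurableSpace.comap X inferInstance] ω) ^ 2 ∂P := fun t => by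
    have : ∀ ω, (if cdf (P.map Y) (Y ω) ≤ t then (1 : ℝ) else 0) =
        (Y ⁻¹' (cdf (P.map Y) ⁻¹' Iic t)).indicator 1 ω :=
      fun ω => by by_cases h : cdf (P.map Y) (Y ω) ≤ t <;> simp [h]
    simp_rw [hψ, this, sq]
  have hden := integral_variance_indicator_preimage_Ici (μ := P) hY hGc
  have hnum := integral_variance_condExp_indicator_preimage_Ici
    (m := MeasurableSpace.comap X inferInstance) hX.comap_le hY hGc
  simp_rw [← hψ_diag] at hnum
  rw [hT]
  simp only [hind]
  refine ⟨hden, ?_⟩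
  rw [hnum, hden]
  ring
end

section
/- Let X : Ω → ℝ^d and Y : Ω → ℝ be random variables with G, the distribution function of Y, continuous, and define T(Y,X) := ( ∫_ℝ Var( P(Y ≥ y | X) ) dP^Y(y) ) / ( ∫_ℝ Var( 1_{Y ≥ y} ) dP^Y(y) ). Then: (i) T(Y,X) = 1 if and only if there exists a measurable function f : ℝ^d → ℝ with P(Y = f(X)) = 1; (ii) T(Y,X) = 0 if and only if Y and X are independent. -/
/-!
By the law of total variance, `Var P(Y ≥ y | X) ≤ Var 1{Y ≥ y}`, with equality iff `1{Y ≥ y}` is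
a.s. `σ(X)`-measurable; and `Var P(Y ≥ y | X) = 0` iff this conditional probability is a.s.
constant, i.e. iff `{Y ≥ y}` is independent of `X`. Both integrands are measurable in `y`, being
built from quantities monotone in `y`, and the denominator is positive since `G` is continuous.
Hence `T = 1` (resp. `T = 0`) says that the first (resp. second) property holds for `P^Y`-a.e.
`y`. A countable set of such `y` approximating `P^Y`-a.e. point from the left then recovers `Y` as
a supremum over `σ(X)`-measurable events, resp. determines the law of `Y` on each event
`{X ∈ t}` through its values on half-lines.
-/

open MeasureTheory ProbabilityTheory Set Filter Topology

theorem exists_countable_subset_forall_exists_mem_Ioc {α : Type*} [LinearOrder α]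
    [TopologicalSpace α] [OrderTopology α] [SecondCountableTopology α] (S : Set α) :
    ∃ D ⊆ S, D.Countable ∧ ∀ x ∈ S, ∀ a < x, ∃ d ∈ D, a < d ∧ d ≤ x := by
  obtain ⟨D₀, hD₀S, hD₀c, hSD₀⟩ :=
    (TopologicalSpace.IsSeparable.of_separableSpace S).exists_countable_dense_subset
  refine ⟨D₀ ∪ {x ∈ S | 𝓝[S ∩ Iio x] x = ⊥}, union_subset hD₀S (sep_subset _ _),
    hD₀c.union countable_setOfPred_isolated_left_within, fun x hx a hax => ?_⟩
  -- the points of `S` isolated on the left within `S` are countably many, so they join `D`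
  by_cases hiso : 𝓝[S ∩ Iio x] x = ⊥
  · exact ⟨x, Or.inr ⟨hx, hiso⟩, hax, le_rfl⟩
  · have : (𝓝[S ∩ Iio x] x).NeBot := ⟨hiso⟩
    obtain ⟨s, ⟨hsS, -⟩, hs⟩ : (S ∩ Iio x ∩ Ioo a x).Nonempty :=
      Filter.nonempty_of_mem (inter_mem self_mem_nhdsWithin
        (nhdsWithin_mono _ inter_subset_right (Ioo_mem_nhdsLT hax)))
    obtain ⟨d, hd, hdD⟩ := mem_closure_iff.1 (hSD₀ hsS) _ isOpen_Ioo hs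
    exact ⟨d, Or.inl hdD, hd.1, hd.2.le⟩

theorem MeasureTheory.Measure.ext_of_ae_Ici {μ ν₁ ν₂ : Measure ℝ} [IsFiniteMeasure ν₁]
    (h₁ : ν₁ ≪ μ) (h₂ : ν₂ ≪ μ) (huniv : ν₁ univ = ν₂ univ)
    (h : ∀ᵐ y ∂μ, ν₁ (Ici y) = ν₂ (Ici y)) : ν₁ = ν₂ := by
  obtain ⟨D, hDS, hDc, hD⟩ :=
    exists_countable_subset_forall_exists_mem_Ioc {y | ν₁ (Ici y) = ν₂ (Ici y)}
  have hIoi : ∀ ν : Measure ℝ, ν ≪ μ → ∀ y, ν (Ioi y) = ⨆ d ∈ D ∩ Ioi y, ν (Ici d) := by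
    intro ν hν y
    have hdir : DirectedOn (Function.onFun (· ⊆ ·) Ici) (D ∩ Ioi y) := fun a ha b hb => by
      rcases le_total a b with hab | hab
      · exact ⟨a, ha, subset_rfl, Ici_subset_Ici.2 hab⟩
      · exact ⟨b, hb, Ici_subset_Ici.2 hab, subset_rfl⟩
    rw [← measure_biUnion_eq_iSup (hDc.mono inter_subset_left) hdir]
    refine le_antisymm ?_ (measure_mono (iUnion₂_subset fun d hd => Ici_subset_Ioi.2 hd.2))
    rw [← measure_inter_conull (t := {y | ν₁ (Ici y) = ν₂ (Ici y)}) (hν h)]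
    refine measure_mono fun x ⟨hxy, hxS⟩ => ?_
    obtain ⟨d, hdD, hyd, hdx⟩ := hD x hxS y hxy
    exact mem_biUnion ⟨hdD, hyd⟩ hdx
  refine ext_of_generate_finite _ (BorelSpace.measurable_eq.trans (borel_eq_generateFrom_Ioi ℝ))
    isPiSystem_Ioi ?_ huniv
  rintro _ ⟨y, rfl⟩
  rw [hIoi ν₁ h₁, hIoi ν₂ h₂]
  exact iSup_congr fun d => iSup_congr fun hd => hDS hd.1

theorem ProbabilityTheory.nullSingletonClass_of_continuous_cdf {μ : Measure ℝ}
    [IsProbabilityMeasure μ] (h : Continuous (cdf μ)) : NullSingletonClass μ where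
  measure_singleton a := by
    rw [← measure_cdf μ, StieltjesFunction.measure_singleton,
      h.continuousWithinAt.leftLim_eq, sub_self, ENNReal.ofReal_zero]

theorem ProbabilityTheory.integral_measureReal_Ici_mul_one_sub_pos {μ : Measure ℝ}
    [IsProbabilityMeasure μ] (h : Continuous (cdf μ)) :
    0 < ∫ y, μ.real (Ici y) * (1 - μ.real (Ici y)) ∂μ := by
  have := nullSingletonClass_of_continuous_cdf h
  have hIci : ∀ y, μ.real (Ici y) = 1 - cdf μ y := fun y => by
    rw [cdf_eq_real, ← measureReal_congr Ioi_ae_eq_Ici, ← compl_Iic,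
      probReal_compl_eq_one_sub measurableSet_Iic]
  simp_rw [hIci, sub_sub_cancel]
  have hrange : ∀ c ∈ Ioo (0 : ℝ) 1, c ∈ range (cdf μ) := fun c hc =>
    mem_range_of_exists_le_of_exists_ge h
      ((tendsto_cdf_atBot μ).eventually (ge_mem_nhds hc.1)).exists
      ((tendsto_cdf_atTop μ).eventually (le_mem_nhds hc.2)).exists
  obtain ⟨a, ha⟩ := hrange (1 / 3) (by norm_num)
  obtain ⟨b, hb⟩ := hrange (2 / 3) (by norm_num)
  have hab : a < b := lt_of_not_ge fun hba => by linarith [(cdf μ).mono hba]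
  have hint : Integrable (fun y => (1 - cdf μ y) * cdf μ y) μ := by
    refine (integrable_const (1 : ℝ)).mono' (by fun_prop) (ae_of_all _ fun y => ?_)
    have := cdf_nonneg μ y; have := cdf_le_one μ y
    rw [Real.norm_of_nonneg (by nlinarith)]; nlinarith
  rw [integral_pos_iff_support_of_nonneg
    (fun y => mul_nonneg (sub_nonneg.2 (cdf_le_one μ y)) (cdf_nonneg μ y)) hint]
  refine lt_of_lt_of_le ?_ (measure_mono (s := Ioc a b) fun y hy => ?_)
  · rw [← measure_cdf μ, StieltjesFunction.measure_Ioc, ha, hb]; norm_num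
  · have h1 := (cdf μ).mono hy.1.le; have h2 := (cdf μ).mono hy.2
    rw [ha] at h1; rw [hb] at h2
    exact (mul_pos (by linarith) (by linarith)).ne'

namespace ProbabilityTheory

section Variance

variable {Ω : Type*} {m m₀ : MeasurableSpace Ω} {μ : Measure[m₀] Ω}

section Finite

variable [IsFiniteMeasure μ]

theorem memLp_indicator_one_s8 {A : Set Ω} (hA : MeasurableSet A) :
    MemLp (A.indicator (1 : Ω → ℝ)) 2 μ :=
  (memLp_const 1).indicator hA

theorem condExp_indicator_one_mem_Icc (hm : m ≤ m₀) {A : Set Ω} (hA : MeasurableSet A) :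
    ∀ᵐ ω ∂μ, μ[A.indicator (1 : Ω → ℝ) | m] ω ∈ Icc 0 1 := by
  have hint : Integrable (A.indicator (1 : Ω → ℝ)) μ := (integrable_const 1).indicator hA
  filter_upwards [condExp_nonneg (m := m)
      (ae_of_all _ (indicator_nonneg fun _ _ => zero_le_one (α := ℝ))),
    (condExp_mono (m := m) hint (integrable_const 1)
      (ae_of_all _ (indicator_le_self' fun _ _ => zero_le_one))).trans_eq
      (condExp_const hm (1 : ℝ)).eventuallyEq] with ω h0 h1
  exact ⟨h0, h1⟩

end Finite

variable [IsProbabilityMeasure μ]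

theorem variance_sub_variance_condExp (hm : m ≤ m₀) {X : Ω → ℝ} (hX : MemLp X 2 μ) :
    Var[X; μ] - Var[μ[X | m]; μ] = ∫ ω, (X ω - μ[X | m] ω) ^ 2 ∂μ := by
  rw [← integral_condVar_add_variance_condExp hm hX, add_sub_cancel_right, condVar,
    integral_condExp hm]
  rfl

theorem variance_condExp_le (hm : m ≤ m₀) {X : Ω → ℝ} (hX : MemLp X 2 μ) :
    Var[μ[X | m]; μ] ≤ Var[X; μ] := by
  rw [← sub_nonneg, variance_sub_variance_condExp hm hX]
  exact integral_nonneg fun ω => sq_nonneg _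

theorem ae_eq_condExp_of_variance_condExp_eq (hm : m ≤ m₀) {X : Ω → ℝ} (hX : MemLp X 2 μ)
    (h : Var[μ[X | m]; μ] = Var[X; μ]) : X =ᵐ[μ] μ[X | m] := by
  have hsq : ∫ ω, (X ω - μ[X | m] ω) ^ 2 ∂μ = 0 := by
    rw [← variance_sub_variance_condExp hm hX, h, sub_self]
  rw [integral_eq_zero_iff_of_nonneg (fun ω => sq_nonneg (X ω - μ[X | m] ω))
    (hX.sub (hX.condExp one_le_two)).integrable_sq] at hsq
  filter_upwards [hsq] with ω hω
  exact sub_eq_zero.1 (pow_eq_zero_iff two_ne_zero |>.1 hω)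

theorem variance_indicator_one_s8 {A : Set Ω} (hA : MeasurableSet A) :
    Var[A.indicator 1; μ] = μ.real A * (1 - μ.real A) := by
  have hsq : A.indicator (1 : Ω → ℝ) ^ 2 = A.indicator 1 := by
    ext ω; by_cases hω : ω ∈ A <;> simp [hω]
  rw [variance_eq_sub (memLp_indicator_one_s8 hA), hsq, integral_indicator_one hA]
  ring

theorem integrable_variance_of_antitone {ν : Measure ℝ} [IsFiniteMeasure ν] {f : ℝ → Ω → ℝ}
    (hf : ∀ y, AEMeasurable (f y) μ) (hf01 : ∀ y, ∀ᵐ ω ∂μ, f y ω ∈ Icc 0 1)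
    (hanti : ∀ y y', y ≤ y' → f y' ≤ᵐ[μ] f y) : Integrable (fun y => Var[f y; μ]) ν := by
  have hL2 y : MemLp (f y) 2 μ := memLp_of_bounded (hf01 y) (hf y).aestronglyMeasurable 2
  have hVar : (fun y => Var[f y; μ]) = fun y => μ[f y ^ 2] - μ[f y] ^ 2 :=
    funext fun y => variance_eq_sub (hL2 y)
  have hmeas : Measurable fun y => Var[f y; μ] := by
    rw [hVar]
    refine .sub (Antitone.measurable fun y y' hyy' => ?_)
      ((Antitone.measurable fun y y' hyy' => ?_).pow_const 2)
    · refine integral_mono_ae (hL2 y').integrable_sq (hL2 y).integrable_sq ?_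
      filter_upwards [hanti y y' hyy', hf01 y'] with ω hω h01
      exact pow_le_pow_left₀ h01.1 hω 2
    · exact integral_mono_ae ((hL2 y').integrable one_le_two) ((hL2 y).integrable one_le_two)
        (hanti y y' hyy')
  refine (integrable_const ((((1 : ℝ) - 0) / 2) ^ 2)).mono' hmeas.aestronglyMeasurable
    (ae_of_all _ fun y => ?_)
  rw [Real.norm_of_nonneg (variance_nonneg _ _)]
  exact variance_le_sq_of_bounded (hf01 y) (hf y)

theorem integrable_variance_indicator_one {ν : Measure ℝ} [IsFiniteMeasure ν] {A : ℝ → Set Ω}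
    (hA : ∀ y, MeasurableSet (A y)) (hanti : Antitone A) :
    Integrable (fun y => Var[(A y).indicator 1; μ]) ν := by
  refine integrable_variance_of_antitone
    (fun y => (measurable_const.indicator (hA y)).aemeasurable) (fun y => ae_of_all _ fun ω => ?_)
    fun y y' hyy' => ae_of_all _ ?_
  · by_cases hω : ω ∈ A y <;> simp [hω]
  · exact indicator_le_indicator_of_subset (hanti hyy') fun _ => zero_le_one

theorem integrable_variance_condExp_indicator_one (hm : m ≤ m₀) {ν : Measure ℝ}
    [IsFiniteMeasure ν] {A : ℝ → Set Ω} (hA : ∀ y, MeasurableSet (A y)) (hanti : Antitone A) :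
    Integrable (fun y => Var[μ[(A y).indicator 1 | m]; μ]) ν := by
  refine integrable_variance_of_antitone
    (fun y => (stronglyMeasurable_condExp.mono hm).aestronglyMeasurable.aemeasurable)
    (fun y => condExp_indicator_one_mem_Icc hm (hA y)) fun y y' hyy' => ?_
  exact condExp_mono ((memLp_indicator_one_s8 (hA y')).integrable one_le_two)
    ((memLp_indicator_one_s8 (hA y)).integrable one_le_two)
    (ae_of_all _ (indicator_le_indicator_of_subset (hanti hyy') fun _ => zero_le_one))

end Variance

section Factorization

variable {Ω β : Type*} {mΩ : MeasurableSpace Ω} [MeasurableSpace β] {P : Measure Ω}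
  {X : Ω → β} {Y : Ω → ℝ}

theorem exists_measurable_ae_eq_comp_of_ae_Ici (hY : AEMeasurable Y P)
    (h : ∀ᵐ y ∂P.map Y, ∃ B, MeasurableSet B ∧ Y ⁻¹' Ici y =ᵐ[P] X ⁻¹' B) :
    ∃ f : β → ℝ, Measurable f ∧ ∀ᵐ ω ∂P, Y ω = f (X ω) := by
  classical
  obtain ⟨D, hDS, hDc, hD⟩ := exists_countable_subset_forall_exists_mem_Ioc
    {y | ∃ B, MeasurableSet B ∧ Y ⁻¹' Ici y =ᵐ[P] X ⁻¹' B}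
  choose! B hB hYB using fun y (hy : y ∈ D) => hDS hy
  -- the supremum is taken in `EReal`, where the empty one is `⊥` rather than a junk real
  refine ⟨fun x => (⨆ d ∈ D, if x ∈ B d then (d : EReal) else ⊥).toReal,
    (Measurable.biSup D hDc fun d hd =>
      Measurable.ite (hB d hd) measurable_const measurable_const).ereal_toReal, ?_⟩
  filter_upwards [ae_of_ae_map hY h, (ae_ball_iff hDc).2 hYB] with ω hωS hωB
  suffices (⨆ d ∈ D, if X ω ∈ B d then (d : EReal) else ⊥) = Y ω by
    rw [this, EReal.toReal_coe]
  refine le_antisymm (iSup₂_le fun d hd => ?_) (le_of_forall_lt fun c hc => ?_)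
  · split_ifs with hdB
    · exact EReal.coe_le_coe_iff.2 ((hωB d hd).mpr hdB)
    · exact bot_le
  · obtain ⟨a, hca, hay⟩ := EReal.lt_iff_exists_real_btwn.1 hc
    obtain ⟨d, hdD, had, hdY⟩ := hD _ hωS a (EReal.coe_lt_coe_iff.1 hay)
    refine hca.trans_le (le_iSup₂_of_le d hdD ?_)
    rw [if_pos (show X ω ∈ B d from (hωB d hdD).mp hdY)]
    exact EReal.coe_le_coe_iff.2 had.le

end Factorization

section Dependence

variable {Ω β : Type*} {mΩ : MeasurableSpace Ω} [mβ : MeasurableSpace β] {P : Measure Ω}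
  [IsProbabilityMeasure P] {X : Ω → β} {Y : Ω → ℝ}

theorem exists_preimage_ae_eq_of_variance_condExp_comap_eq (hX : Measurable X) {A : Set Ω}
    (hA : MeasurableSet A)
    (h : Var[P[A.indicator 1 | mβ.comap X]; P] = Var[A.indicator 1; P]) :
    ∃ B, MeasurableSet B ∧ A =ᵐ[P] X ⁻¹' B := by
  have hA_eq := ae_eq_condExp_of_variance_condExp_eq hX.comap_le (memLp_indicator_one_s8 hA) h
  obtain ⟨B, hB, hpre⟩ :=
    (stronglyMeasurable_condExp (m := mβ.comap X) (μ := P) (f := A.indicator 1)).measurable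
      (measurableSet_singleton (1 : ℝ))
  refine ⟨B, hB, ?_⟩
  rw [hpre]
  filter_upwards [hA_eq] with ω hω
  change (ω ∈ A) = (_ ∈ ({1} : Set ℝ))
  by_cases hωA : ω ∈ A <;> simp [hωA, ← hω]

theorem measure_inter_eq_mul_of_variance_condExp_eq_zero {m : MeasurableSpace Ω} (hm : m ≤ mΩ)
    {A s : Set Ω} (hA : MeasurableSet[mΩ] A) (h : Var[P[A.indicator 1 | m]; P] = 0)
    (hs : MeasurableSet[m] s) : P (A ∩ s) = P A * P s := by
  have hconst :=
    ae_eq_integral_of_variance_eq_zero ((memLp_indicator_one_s8 (μ := P) hA).condExp one_le_two) h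
  rw [integral_condExp hm, integral_indicator_one hA] at hconst
  have hset := setIntegral_condExp hm ((memLp_indicator_one_s8 (μ := P) hA).integrable one_le_two) hs
  rw [setIntegral_congr_ae (hm _ hs) (hconst.mono fun ω hω _ => hω), setIntegral_const,
    integral_indicator_one hA, smul_eq_mul, measureReal_restrict_apply hA, mul_comm] at hset
  rw [← ENNReal.toReal_eq_toReal_iff' (by finiteness) (by finiteness), ENNReal.toReal_mul]
  exact hset.symm

theorem ae_variance_condExp_indicator_Ici_eq_iff_exists_comp (hX : Measurable X)
    (hY : Measurable Y) :
    (∀ᵐ y ∂P.map Y, Var[P[(Y ⁻¹' Ici y).indicator 1 | mβ.comap X]; P] =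
      Var[(Y ⁻¹' Ici y).indicator 1; P]) ↔
      ∃ f : β → ℝ, Measurable f ∧ ∀ᵐ ω ∂P, Y ω = f (X ω) := by
  refine ⟨fun h => exists_measurable_ae_eq_comp_of_ae_Ici hY.aemeasurable (h.mono fun y hy =>
    exists_preimage_ae_eq_of_variance_condExp_comap_eq hX (hY measurableSet_Ici) hy), ?_⟩
  rintro ⟨f, hf, hYf⟩
  refine ae_of_all _ fun y => variance_congr
    (condExp_of_aestronglyMeasurable' hX.comap_le ⟨(X ⁻¹' (f ⁻¹' Ici y)).indicator 1,
      stronglyMeasurable_one.indicator ⟨_, hf measurableSet_Ici, rfl⟩, ?_⟩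
      ((memLp_indicator_one_s8 (hY measurableSet_Ici)).integrable one_le_two))
  filter_upwards [hYf] with ω hω
  simp only [indicator, mem_preimage, hω]

theorem ae_variance_condExp_indicator_Ici_eq_zero_iff_indepFun (hX : Measurable X)
    (hY : Measurable Y) :
    (∀ᵐ y ∂P.map Y, Var[P[(Y ⁻¹' Ici y).indicator 1 | mβ.comap X]; P] = 0) ↔ IndepFun Y X P := by
  refine ⟨fun h => (indepFun_iff_measure_inter_preimage_eq_mul).2 fun s t hs ht => ?_, fun h => ?_⟩
  · have hmap : (P.restrict (X ⁻¹' t)).map Y = P (X ⁻¹' t) • P.map Y := by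
      refine Measure.ext_of_ae_Ici ?_ (Measure.AbsolutelyContinuous.rfl.smul_left _) ?_ ?_
      · exact Measure.absolutelyContinuous_of_le (Measure.map_mono Measure.restrict_le_self hY)
      · simp [Measure.map_apply hY MeasurableSet.univ]
      · filter_upwards [h] with y hy
        rw [Measure.map_apply hY measurableSet_Ici, Measure.restrict_apply (hY measurableSet_Ici),
          measure_inter_eq_mul_of_variance_condExp_eq_zero hX.comap_le (hY measurableSet_Ici) hy
            ⟨t, ht, rfl⟩, Measure.smul_apply, Measure.map_apply hY measurableSet_Ici, smul_eq_mul,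
          mul_comm]
    have := congrArg (· s) hmap
    simp only [Measure.map_apply hY hs, Measure.restrict_apply (hY hs), Measure.smul_apply,
      smul_eq_mul] at this
    rw [this, mul_comm]
  · refine ae_of_all _ fun y => ?_
    rw [variance_congr (condExp_indep_eq hY.comap_le hX.comap_le
      (stronglyMeasurable_one.indicator ⟨Ici y, measurableSet_Ici, rfl⟩)
      ((IndepFun_iff_Indep Y X P).1 h))]
    simp [variance_eq_integral aemeasurable_const]

end Dependence

end ProbabilityTheory

/-- Azadkia–Chatterjee's `T` satisfies `T = 1` iff `Y` is completely
dependent on `X`, and `T = 0` iff `Y` and `X` are independent. -/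
theorem T_eq_one_iff_and_T_eq_zero_iff
    {Ω : Type*} [MeasurableSpace Ω] (P : Measure Ω) [IsProbabilityMeasure P]
    {d : ℕ} (X : Ω → (Fin d → ℝ)) (Y : Ω → ℝ) (hX : Measurable X) (hY : Measurable Y)
    (G : ℝ → ℝ) (hG : ∀ y, G y = (P {ω | Y ω ≤ y}).toReal) (hGc : Continuous G)
    (T : ℝ)
    (hT : T =
      (∫ y, variance
          (P[fun ω => if y ≤ Y ω then (1:ℝ) else 0 |
            MeasurableSpace.comap X inferInstance]) P ∂(P.map Y)) /
      (∫ y, variance (fun ω => if y ≤ Y ω then (1:ℝ) else 0) P ∂(P.map Y))) :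
    (T = 1 ↔ ∃ f : (Fin d → ℝ) → ℝ, Measurable f ∧ ∀ᵐ ω ∂P, Y ω = f (X ω)) ∧
    (T = 0 ↔ IndepFun Y X P) := by
  have := Measure.isProbabilityMeasure_map (μ := P) hY.aemeasurable
  have hI : ∀ y, (fun ω => if y ≤ Y ω then (1 : ℝ) else 0) = (Y ⁻¹' Ici y).indicator 1 :=
    fun y => funext fun ω => by simp [indicator]
  simp only [hI] at hT
  have hA : ∀ y, MeasurableSet (Y ⁻¹' Ici y) := fun y => hY measurableSet_Ici
  have hanti : Antitone fun y => Y ⁻¹' Ici y := fun y y' hyy' =>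
    preimage_mono (Ici_subset_Ici.2 hyy')
  have hcdf : cdf (P.map Y) = G := by
    ext y
    rw [hG, cdf_eq_real, map_measureReal_apply hY measurableSet_Iic]
    rfl
  have hD : 0 < ∫ y, Var[(Y ⁻¹' Ici y).indicator 1; P] ∂(P.map Y) := by
    simp only [variance_indicator_one_s8 (hA _), ← map_measureReal_apply hY measurableSet_Ici]
    exact integral_measureReal_Ici_mul_one_sub_pos (hcdf ▸ hGc)
  have hNint := integrable_variance_condExp_indicator_one (μ := P) (ν := P.map Y)
    hX.comap_le hA hanti
  have hWint := integrable_variance_indicator_one (μ := P) (ν := P.map Y) hA hanti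
  refine ⟨?_, ?_⟩
  · rw [hT, div_eq_one_iff_eq hD.ne', integral_eq_iff_of_ae_le hNint hWint (ae_of_all _ fun y =>
      variance_condExp_le hX.comap_le (memLp_indicator_one_s8 (hA y)))]
    exact ae_variance_condExp_indicator_Ici_eq_iff_exists_comp hX hY
  · rw [hT, div_eq_zero_iff, or_iff_left hD.ne',
      integral_eq_zero_iff_of_nonneg (fun y => variance_nonneg _ _) hNint]
    exact ae_variance_condExp_indicator_Ici_eq_zero_iff_indepFun hX hY
end

section
/- Let X : Ω → ℝ^d and Y : Ω → ℝ be random variables with Y square-integrable and Var(Y) > 0, and let Y' : Ω → ℝ be a random variable such that Y and Y' share the same conditional distribution given X and are conditionally independent given X. Then E[(E[Y | σ(X)])²] = E[Y·Y'], Var(Y') = Var(Y), and consequently the coefficient of determination R²(Y,X) := Var(E[Y | σ(X)]) / Var(Y) equals the Pearson correlation coefficient ρ_P(Y,Y') = (E[Y·Y'] − E[Y]·E[Y']) / (√Var(Y)·√Var(Y')). -/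
/-!
For a bounded truncation `g`, conditional independence and equality of the conditional laws
give `E[g(Y) g(Y')] = E[E[g(Y) | X]²]`. Truncations converge to `Y` in `L²`, conditional
expectation is an `L²` contraction and the `L²` inner product is continuous, so the identity
passes to the limit: `E[E[Y | X]²] = E[Y Y']`. Equal conditional laws also make `Y` and `Y'`
identically distributed, so they have the same mean and variance, and the correlation formula
follows from `Var(E[Y | X]) = E[Y Y'] - E[Y]²`.
-/

open MeasureTheory ProbabilityTheory Set Filter Topology

namespace MeasureTheory

variable {α : Type*} {m m0 : MeasurableSpace α} {μ : Measure α}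

theorem unifIntegrable_of_norm_le {ι β : Type*} [NormedAddCommGroup β] {p : ENNReal}
    {f : ι → α → β} {g : α → β} (hp : 1 ≤ p) (hp' : p ≠ ⊤) (hg : MemLp g p μ)
    (hfg : ∀ i x, ‖f i x‖ ≤ ‖g x‖) : UnifIntegrable f p μ := by
  intro ε hε
  obtain ⟨δ, hδ, hgδ⟩ := unifIntegrable_const (ι := Unit) hp hp' hg hε
  refine ⟨δ, hδ, fun i s hs hμs => (eLpNorm_mono fun x => ?_).trans (hgδ () s hs hμs)⟩
  by_cases hx : x ∈ s <;> simp [hx, hfg i x]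

theorem integral_mul_eq_inner_toLp {f g : α → ℝ} (hf : MemLp f 2 μ) (hg : MemLp g 2 μ) :
    ∫ x, f x * g x ∂μ = inner ℝ (hf.toLp f) (hg.toLp g) := by
  rw [L2.inner_def]
  refine integral_congr_ae ?_
  filter_upwards [hf.coeFn_toLp, hg.coeFn_toLp] with x hfx hgx
  simp [hfx, hgx, mul_comm]

theorem tendsto_integral_mul_of_tendsto_eLpNorm {ι : Type*} {l : Filter ι}
    {f g : ι → α → ℝ} {f₀ g₀ : α → ℝ} (hf : ∀ i, MemLp (f i) 2 μ) (hf₀ : MemLp f₀ 2 μ)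
    (hg : ∀ i, MemLp (g i) 2 μ) (hg₀ : MemLp g₀ 2 μ)
    (hff₀ : Tendsto (fun i => eLpNorm (f i - f₀) 2 μ) l (𝓝 0))
    (hgg₀ : Tendsto (fun i => eLpNorm (g i - g₀) 2 μ) l (𝓝 0)) :
    Tendsto (fun i => ∫ x, f i x * g i x ∂μ) l (𝓝 (∫ x, f₀ x * g₀ x ∂μ)) := by
  simp_rw [integral_mul_eq_inner_toLp (hf _) (hg _), integral_mul_eq_inner_toLp hf₀ hg₀]
  exact ((Lp.tendsto_Lp_iff_tendsto_eLpNorm'' f hf f₀ hf₀).mpr hff₀).inner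
    ((Lp.tendsto_Lp_iff_tendsto_eLpNorm'' g hg g₀ hg₀).mpr hgg₀)

theorem tendsto_eLpNorm_condExp_sub {ι : Type*} {l : Filter ι} {E : Type*}
    [NormedAddCommGroup E] [NormedSpace ℝ E] [CompleteSpace E] {p : ENNReal}
    {f : ι → α → E} {f₀ : α → E} (hp : 1 ≤ p) (hf : ∀ i, Integrable (f i) μ)
    (hf₀ : Integrable f₀ μ) (hff₀ : Tendsto (fun i => eLpNorm (f i - f₀) p μ) l (𝓝 0)) :
    Tendsto (fun i => eLpNorm (μ[f i | m] - μ[f₀ | m]) p μ) l (𝓝 0) := by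
  refine tendsto_of_tendsto_of_tendsto_of_le_of_le tendsto_const_nhds hff₀
    (fun _ => bot_le) fun i => ?_
  rw [← eLpNorm_congr_ae (condExp_sub (hf i) hf₀ m)]
  exact eLpNorm_condExp_le_eLpNorm _ hp

theorem integral_mul_eq_integral_condExp_sq (hm : m ≤ m0) [SigmaFinite (μ.trim hm)]
    {U V : α → ℝ}
    (hUV : μ[fun x => U x * V x | m] =ᵐ[μ] fun x => (μ[U | m]) x * (μ[V | m]) x)
    (hUV' : μ[U | m] =ᵐ[μ] μ[V | m]) :
    ∫ x, U x * V x ∂μ = ∫ x, (μ[U | m]) x ^ 2 ∂μ := by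
  rw [← integral_condExp hm]
  refine integral_congr_ae (hUV.trans ?_)
  filter_upwards [hUV'] with x hx
  rw [← hx, sq]

end MeasureTheory

namespace ProbabilityTheory

variable {α β : Type*} {m m0 : MeasurableSpace α} {μ : Measure α}

theorem tendsto_truncation (f : α → ℝ) (x : α) :
    Tendsto (fun n : ℕ => truncation f n x) atTop (𝓝 (f x)) :=
  tendsto_const_nhds.congr' <|
    (tendsto_natCast_atTop_atTop.eventually_gt_atTop |f x|).mono fun _ hn =>
      (truncation_eq_self hn).symm

theorem tendsto_eLpNorm_truncation_sub [IsFiniteMeasure μ] {p : ENNReal} {f : α → ℝ}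
    (hp : 1 ≤ p) (hp' : p ≠ ⊤) (hf : MemLp f p μ) :
    Tendsto (fun n : ℕ => eLpNorm (truncation f n - f) p μ) atTop (𝓝 0) :=
  tendsto_Lp_finite_of_tendsto_ae hp hp' (fun _ => hf.1.truncation) hf
    (unifIntegrable_of_norm_le hp hp' hf fun _ => abs_truncation_le_abs_self f _)
    (ae_of_all _ (tendsto_truncation f))

theorem identDistrib_of_condExp_comp_eq [MeasurableSpace β] (hm : m ≤ m0) [IsFiniteMeasure μ]
    {Y Y' : α → β} (hY : Measurable Y) (hY' : Measurable Y')
    (h : ∀ g : β → ℝ, Measurable g → (∃ C, ∀ x, |g x| ≤ C) →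
      μ[fun ω => g (Y ω) | m] =ᵐ[μ] μ[fun ω => g (Y' ω) | m]) :
    IdentDistrib Y Y' μ μ := by
  refine ⟨hY.aemeasurable, hY'.aemeasurable, Measure.ext fun s hs => ?_⟩
  have hind : Measurable (s.indicator (1 : β → ℝ)) := measurable_one.indicator hs
  have hint := integral_congr_ae <| h _ hind ⟨1, fun x => by
    by_cases hx : x ∈ s <;> simp [hx]⟩
  rw [integral_condExp hm, integral_condExp hm,
    ← integral_map hY.aemeasurable hind.aestronglyMeasurable,
    ← integral_map hY'.aemeasurable hind.aestronglyMeasurable,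
    integral_indicator_one hs, integral_indicator_one hs] at hint
  exact (measureReal_eq_measureReal_iff).mp hint

theorem integral_condExp_sq_eq_integral_mul (hm : m ≤ m0) [IsFiniteMeasure μ] {Y Y' : α → ℝ}
    (hY2 : MemLp Y 2 μ) (hY'2 : MemLp Y' 2 μ)
    (hsame : ∀ g : ℝ → ℝ, Measurable g → (∃ C, ∀ x, |g x| ≤ C) →
      μ[fun ω => g (Y ω) | m] =ᵐ[μ] μ[fun ω => g (Y' ω) | m])
    (hci : ∀ g h : ℝ → ℝ, Measurable g → (∃ C, ∀ x, |g x| ≤ C) →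
        Measurable h → (∃ C, ∀ x, |h x| ≤ C) →
      μ[fun ω => g (Y ω) * h (Y' ω) | m]
        =ᵐ[μ] fun ω => (μ[fun ω' => g (Y ω') | m]) ω * (μ[fun ω' => h (Y' ω') | m]) ω) :
    ∫ ω, (μ[Y | m]) ω ^ 2 ∂μ = ∫ ω, Y ω * Y' ω ∂μ := by
  -- `truncation Z A` unfolds to `T A ∘ Z`, so the hypotheses apply to it.
  let T : ℝ → ℝ → ℝ := fun A => (Ioc (-A) A).indicator id
  have hT : ∀ A, Measurable (T A) := fun A => measurable_id.indicator measurableSet_Ioc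
  have hTb : ∀ A, ∃ C, ∀ x, |T A x| ≤ C := fun A => ⟨|A|, abs_truncation_le_bound id A⟩
  have hmemLp : ∀ {Z : α → ℝ}, MemLp Z 2 μ → ∀ n : ℕ, MemLp (truncation Z n) 2 μ :=
    fun hZ _ => hZ.1.memLp_truncation
  have htrunc : ∀ A, ∫ ω, truncation Y A ω * truncation Y' A ω ∂μ
      = ∫ ω, (μ[truncation Y A | m]) ω ^ 2 ∂μ := fun A =>
    integral_mul_eq_integral_condExp_sq hm (hci _ _ (hT A) (hTb A) (hT A) (hTb A))
      (hsame _ (hT A) (hTb A))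
  have hlim_mul : Tendsto (fun n : ℕ => ∫ ω, truncation Y n ω * truncation Y' n ω ∂μ) atTop
      (𝓝 (∫ ω, Y ω * Y' ω ∂μ)) :=
    tendsto_integral_mul_of_tendsto_eLpNorm (hmemLp hY2) hY2 (hmemLp hY'2) hY'2
      (tendsto_eLpNorm_truncation_sub one_le_two ENNReal.ofNat_ne_top hY2)
      (tendsto_eLpNorm_truncation_sub one_le_two ENNReal.ofNat_ne_top hY'2)
  have hcondExp := tendsto_eLpNorm_condExp_sub (m := m) one_le_two
    (fun n => (hmemLp hY2 n).integrable one_le_two) (hY2.integrable one_le_two)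
    (tendsto_eLpNorm_truncation_sub one_le_two ENNReal.ofNat_ne_top hY2)
  have hlim_sq := tendsto_integral_mul_of_tendsto_eLpNorm
    (fun n => (hmemLp hY2 n).condExp one_le_two) (hY2.condExp one_le_two)
    (fun n => (hmemLp hY2 n).condExp one_le_two) (hY2.condExp one_le_two) hcondExp hcondExp
  simp_rw [← sq, ← htrunc] at hlim_sq
  exact tendsto_nhds_unique hlim_sq hlim_mul

end ProbabilityTheory

theorem R2_eq_pearson_of_conditionally_iid_copy_general
    {Ω : Type*} [MeasurableSpace Ω] (P : Measure Ω) [IsProbabilityMeasure P]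
    {d : ℕ} (X : Ω → (Fin d → ℝ)) (Y Y' : Ω → ℝ)
    (hX : Measurable X) (hY : Measurable Y) (hY' : Measurable Y')
    (hY2 : MemLp Y 2 P)
    (hsame : ∀ g : ℝ → ℝ, Measurable g → (∃ C, ∀ x, |g x| ≤ C) →
      P[fun ω => g (Y ω) | MeasurableSpace.comap X inferInstance]
        =ᵐ[P] P[fun ω => g (Y' ω) | MeasurableSpace.comap X inferInstance])
    (hci : ∀ g h : ℝ → ℝ, Measurable g → (∃ C, ∀ x, |g x| ≤ C) →
        Measurable h → (∃ C, ∀ x, |h x| ≤ C) →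
      P[fun ω => g (Y ω) * h (Y' ω) | MeasurableSpace.comap X inferInstance]
        =ᵐ[P] fun ω =>
          (P[fun ω' => g (Y ω') | MeasurableSpace.comap X inferInstance]) ω *
          (P[fun ω' => h (Y' ω') | MeasurableSpace.comap X inferInstance]) ω) :
    (∫ ω, (P[Y | MeasurableSpace.comap X inferInstance]) ω ^ 2 ∂P) =
      ∫ ω, Y ω * Y' ω ∂P ∧
    variance Y' P = variance Y P ∧
    variance (P[Y | MeasurableSpace.comap X inferInstance]) P / variance Y P =
      ((∫ ω, Y ω * Y' ω ∂P) - (∫ ω, Y ω ∂P) * (∫ ω, Y' ω ∂P)) /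
        (Real.sqrt (variance Y P) * Real.sqrt (variance Y' P)) := by
  have hm := hX.comap_le
  have hlaw := identDistrib_of_condExp_comp_eq hm hY hY' hsame
  have hsq := integral_condExp_sq_eq_integral_mul hm hY2 (hlaw.memLp_snd hY2) hsame hci
  have hvar_condExp : variance (P[Y | MeasurableSpace.comap X inferInstance]) P
      = (∫ ω, Y ω * Y' ω ∂P) - (∫ ω, Y ω ∂P) ^ 2 := by
    rw [variance_eq_sub (hY2.condExp one_le_two)]
    simp only [Pi.pow_apply]
    rw [hsq, integral_condExp hm]
  refine ⟨hsq, hlaw.variance_eq.symm, ?_⟩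
  rw [hvar_condExp, ← hlaw.integral_eq, ← hlaw.variance_eq,
    Real.mul_self_sqrt (variance_nonneg Y P), sq]

/-- For `Y` square-integrable with positive variance, and `Y'` sharing the
same conditional distribution as `Y` given `X` and conditionally independent of `Y`
given `X`, one has `E[(E[Y|X])²] = E[Y·Y']`, `Var(Y') = Var(Y)`, and the coefficient of
determination `R²(Y,X) = Var(E[Y|X])/Var(Y)` equals the Pearson correlation of `(Y,Y')`. -/
theorem R2_eq_pearson_of_conditionally_iid_copy
    {Ω : Type*} [MeasurableSpace Ω] (P : Measure Ω) [IsProbabilityMeasure P]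
    {d : ℕ} (X : Ω → (Fin d → ℝ)) (Y Y' : Ω → ℝ)
    (hX : Measurable X) (hY : Measurable Y) (hY' : Measurable Y')
    (hY2 : MemLp Y 2 P) (hvar : 0 < variance Y P)
    (hsame : ∀ g : ℝ → ℝ, Measurable g → (∃ C, ∀ x, |g x| ≤ C) →
      P[fun ω => g (Y ω) | MeasurableSpace.comap X inferInstance]
        =ᵐ[P] P[fun ω => g (Y' ω) | MeasurableSpace.comap X inferInstance])
    (hci : ∀ g h : ℝ → ℝ, Measurable g → (∃ C, ∀ x, |g x| ≤ C) →
        Measurable h → (∃ C, ∀ x, |h x| ≤ C) →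
      P[fun ω => g (Y ω) * h (Y' ω) | MeasurableSpace.comap X inferInstance]
        =ᵐ[P] fun ω =>
          (P[fun ω' => g (Y ω') | MeasurableSpace.comap X inferInstance]) ω *
          (P[fun ω' => h (Y' ω') | MeasurableSpace.comap X inferInstance]) ω) :
    (∫ ω, (P[Y | MeasurableSpace.comap X inferInstance]) ω ^ 2 ∂P) =
      ∫ ω, Y ω * Y' ω ∂P ∧
    variance Y' P = variance Y P ∧
    variance (P[Y | MeasurableSpace.comap X inferInstance]) P / variance Y P =
      ((∫ ω, Y ω * Y' ω ∂P) - (∫ ω, Y ω ∂P) * (∫ ω, Y' ω ∂P)) /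
        (Real.sqrt (variance Y P) * Real.sqrt (variance Y' P)) :=
  R2_eq_pearson_of_conditionally_iid_copy_general P X Y Y' hX hY hY' hY2 hsame hci
end

section
/- Let X : Ω → ℝ^d and Y : Ω → ℝ be random variables with G, the distribution function of Y, continuous, set V := G(Y), and let ψ_C(s,t) := E[ E[1_{V ≤ s} | σ(X)] · E[1_{V ≤ t} | σ(X)] ]. Then the distribution-free coefficient of determination R²(V,X) := Var(E[V | σ(X)]) / Var(V) satisfies R²(V,X) = 12 ∫_{[0,1]²} ψ_C(s,t) ds dt − 3, i.e., it equals Spearman's rho applied to ψ_C. -/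
/-!
Write `F s = E[1{V ≤ s} | X]` and `N = E[1 - V | X]`. Since `∫₀¹ 1{V ≤ t} dt = 1 - V`, Fubini
and the pull-out property of conditional expectation give
`∫₀¹ ψ(s, t) dt = E[F s · (1 - V)] = E[F s · N] = E[N · 1{V ≤ s}]`, and integrating once more in
`s`, `∫∫ ψ = E[N · (1 - V)] = E[N²]`. By the probability integral transform `V` is uniform on
`[0, 1]`, so `E V = 1/2`, `Var V = 1/12` and `Var E[V | X] = Var N = E[N²] - 1/4`.
-/

open MeasureTheory ProbabilityTheory Set Filter Topology

namespace ProbabilityTheory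

variable {μ : Measure ℝ} [IsProbabilityMeasure μ]

lemma measure_setOf_cdf_le_of_continuous (hcont : Continuous (cdf μ)) {s : ℝ} (hs : s < 1) :
    μ {y | cdf μ y ≤ s} = ENNReal.ofReal s := by
  set A := {y | cdf μ y ≤ s}
  obtain ⟨b, hb⟩ := eventually_atTop.1 ((tendsto_cdf_atTop μ).eventually (lt_mem_nhds hs))
  have hbdd : BddAbove A := ⟨b, fun y hy => not_lt.1 fun hby => (hb y hby.le).not_ge hy⟩
  rcases A.eq_empty_or_nonempty with hA | hA
  · have hs0 : s ≤ 0 := ge_of_tendsto (tendsto_cdf_atBot μ) <| .of_forall fun y =>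
      (not_le.1 (eq_empty_iff_forall_notMem.1 hA y)).le
    rw [hA, measure_empty, ENNReal.ofReal_of_nonpos hs0]
  · set c := sSup A
    have hcs : cdf μ c ≤ s := (isClosed_le hcont continuous_const).csSup_mem hA hbdd
    have hsc : s ≤ cdf μ c :=
      ge_of_tendsto ((hcont.tendsto c).mono_left (nhdsWithin_le_nhds (s := Ioi c))) <|
        eventually_nhdsWithin_of_forall fun y (hy : c < y) =>
          (not_le.1 fun h => hy.not_ge (le_csSup hbdd h)).le
    have hAc : A = Iic c :=
      Set.ext fun y => ⟨fun hy => le_csSup hbdd hy, fun hy => (monotone_cdf μ hy).trans hcs⟩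
    rw [hAc, ← ofReal_cdf, le_antisymm hcs hsc]

theorem map_cdf_eq_of_continuous (hcont : Continuous (cdf μ)) :
    μ.map (cdf μ) = volume.restrict (Icc 0 1) := by
  have := Measure.isProbabilityMeasure_map (μ := μ) hcont.aemeasurable
  refine Measure.ext_of_Iic _ _ fun a => ?_
  rw [Measure.map_apply hcont.measurable measurableSet_Iic,
    Measure.restrict_apply measurableSet_Iic]
  rcases lt_or_ge a 1 with ha | ha
  · have : Iic a ∩ Icc 0 1 = Icc 0 a := by ext; simp; grind
    rw [this, Real.volume_Icc, sub_zero]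
    exact measure_setOf_cdf_le_of_continuous hcont ha
  · have h1 : cdf μ ⁻¹' Iic a = univ := eq_univ_of_forall fun y => (cdf_le_one μ y).trans ha
    rw [h1, inter_eq_right.2 (Icc_subset_Iic_self.trans (Iic_subset_Iic.2 ha)), measure_univ,
      Real.volume_Icc, sub_zero, ENNReal.ofReal_one]

theorem map_cdf_comp_eq_of_continuous {Ω : Type*} {mΩ : MeasurableSpace Ω} {P : Measure Ω}
    [IsProbabilityMeasure P] {Y : Ω → ℝ} (hY : Measurable Y)
    (hcont : Continuous (cdf (P.map Y))) :
    P.map (fun ω => cdf (P.map Y) (Y ω)) = volume.restrict (Icc 0 1) := by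
  have := Measure.isProbabilityMeasure_map (μ := P) hY.aemeasurable
  rw [← map_cdf_eq_of_continuous hcont, Measure.map_map hcont.measurable hY]
  rfl

end ProbabilityTheory

lemma integral_id_restrict_Icc_zero_one : ∫ x in Icc (0:ℝ) 1, x = 1 / 2 := by
  rw [integral_Icc_eq_integral_Ioc, ← intervalIntegral.integral_of_le zero_le_one, integral_id]
  norm_num

lemma variance_id_restrict_Icc_zero_one : Var[id; volume.restrict (Icc (0:ℝ) 1)] = 1 / 12 := by
  have : IsProbabilityMeasure (volume.restrict (Icc (0:ℝ) 1)) := ⟨by simp [Real.volume_Icc]⟩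
  have hmem : MemLp (id : ℝ → ℝ) 2 (volume.restrict (Icc (0:ℝ) 1)) :=
    .of_bound measurable_id.aestronglyMeasurable 1 <| (ae_restrict_mem measurableSet_Icc).mono
      fun x hx => by simpa [abs_le] using ⟨by linarith [hx.1], hx.2⟩
  have hsq : ∫ x in Icc (0:ℝ) 1, x ^ 2 = 1 / 3 := by
    rw [integral_Icc_eq_integral_Ioc, ← intervalIntegral.integral_of_le zero_le_one, integral_pow]
    norm_num
  rw [variance_eq_sub hmem]
  simp only [Pi.pow_apply, id]
  rw [hsq, integral_id_restrict_Icc_zero_one]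
  norm_num

lemma intervalIntegral_ite_le_eq_one_sub {v : ℝ} (hv : v ∈ Icc (0:ℝ) 1) :
    ∫ s in (0:ℝ)..1, (if v ≤ s then (1:ℝ) else 0) = 1 - v := by
  have h : ∀ s, (if v ≤ s then (1:ℝ) else 0) = {x | x ≤ 1 - v}.indicator 1 (1 - s) := by
    intro s
    simp only [indicator_apply, mem_ofPred_eq, sub_le_sub_iff_left, Pi.one_apply]
  simp_rw [h]
  rw [intervalIntegral.integral_comp_sub_left (fun x => {x | x ≤ 1 - v}.indicator (1 : ℝ → ℝ) x)]
  simp only [sub_self, sub_zero]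
  rw [intervalIntegral.integral_indicator ⟨sub_nonneg.2 hv.2, sub_le_self _ hv.1⟩]
  simp

section ConditionalExpectation

variable {Ω : Type*} {m mΩ : MeasurableSpace Ω} {μ : Measure Ω}

lemma intervalIntegral_integral_mul_ite_le [SFinite μ] {V h : Ω → ℝ} (hV : Measurable V)
    (hV01 : ∀ ω, V ω ∈ Icc (0:ℝ) 1) (hh : Integrable h μ) :
    ∫ s in (0:ℝ)..1, ∫ ω, h ω * (if V ω ≤ s then 1 else 0) ∂μ = ∫ ω, h ω * (1 - V ω) ∂μ := by
  have hint : Integrable (Function.uncurry fun s ω => h ω * (if V ω ≤ s then (1:ℝ) else 0))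
      ((volume.restrict (Ioc (0:ℝ) 1)).prod μ) := by
    refine (hh.norm.comp_snd _).mono' ?_ (.of_forall fun p => ?_)
    · exact hh.aestronglyMeasurable.comp_snd.mul
        (Measurable.ite (measurableSet_le (hV.comp measurable_snd) measurable_fst)
          measurable_const measurable_const).aestronglyMeasurable
    · simp only [Function.uncurry, norm_mul]
      split_ifs <;> simp
  rw [intervalIntegral.integral_of_le zero_le_one, integral_integral_swap hint]
  congr 1 with ω
  rw [integral_const_mul, ← intervalIntegral.integral_of_le zero_le_one,
    intervalIntegral_ite_le_eq_one_sub (hV01 ω)]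

lemma integral_mul_condExp_of_bound [IsFiniteMeasure μ] (hm : m ≤ mΩ) {f g : Ω → ℝ}
    (hf : StronglyMeasurable[m] f) (c : ℝ) (hfc : ∀ᵐ ω ∂μ, ‖f ω‖ ≤ c) (hg : Integrable g μ) :
    ∫ ω, f ω * μ[g|m] ω ∂μ = ∫ ω, f ω * g ω ∂μ :=
  calc ∫ ω, f ω * μ[g|m] ω ∂μ = ∫ ω, μ[f * g|m] ω ∂μ :=
        integral_congr_ae (condExp_stronglyMeasurable_mul_of_bound hm hf hg c hfc).symm
    _ = ∫ ω, f ω * g ω ∂μ := integral_condExp hm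

theorem intervalIntegral_intervalIntegral_integral_condExp_mul_condExp [IsFiniteMeasure μ]
    (hm : m ≤ mΩ) {V : Ω → ℝ} (hV : Measurable V) (hV01 : ∀ ω, V ω ∈ Icc (0:ℝ) 1) :
    ∫ s in (0:ℝ)..1, ∫ t in (0:ℝ)..1,
        ∫ ω, μ[fun ω' => if V ω' ≤ s then (1:ℝ) else 0|m] ω *
          μ[fun ω' => if V ω' ≤ t then (1:ℝ) else 0|m] ω ∂μ
      = ∫ ω, μ[fun ω' => 1 - V ω'|m] ω ^ 2 ∂μ := by
  set ind : ℝ → Ω → ℝ := fun s ω => if V ω ≤ s then 1 else 0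
  set N := μ[fun ω' => 1 - V ω'|m]
  have hind : ∀ s ω, |ind s ω| ≤ 1 := fun s ω => by simp only [ind]; split_ifs <;> simp
  have hind_int : ∀ s, Integrable (ind s) μ := fun s =>
    .of_bound (Measurable.ite (measurableSet_le hV measurable_const) measurable_const
      measurable_const).aestronglyMeasurable 1 (.of_forall (hind s))
  have hW : ∀ ω, |1 - V ω| ≤ 1 := fun ω =>
    abs_sub_le_of_nonneg_of_le zero_le_one le_rfl (hV01 ω).1 (hV01 ω).2
  have hW_int : Integrable (fun ω => 1 - V ω) μ :=
    .of_bound (by fun_prop) 1 (.of_forall hW)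
  have hN : ∀ᵐ ω ∂μ, ‖N ω‖ ≤ 1 := ae_bdd_abs_condExp_of_ae_bdd_abs (.of_forall hW)
  have inner (s : ℝ) :
      ∫ t in (0:ℝ)..1, ∫ ω, μ[ind s|m] ω * μ[ind t|m] ω ∂μ = ∫ ω, N ω * ind s ω ∂μ := by
    have hF : ∀ᵐ ω ∂μ, ‖μ[ind s|m] ω‖ ≤ 1 :=
      ae_bdd_abs_condExp_of_ae_bdd_abs (.of_forall (hind s))
    calc ∫ t in (0:ℝ)..1, ∫ ω, μ[ind s|m] ω * μ[ind t|m] ω ∂μ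
        = ∫ t in (0:ℝ)..1, ∫ ω, μ[ind s|m] ω * ind t ω ∂μ := by
          congr 1 with t
          exact integral_mul_condExp_of_bound hm stronglyMeasurable_condExp 1 hF (hind_int t)
      _ = ∫ ω, μ[ind s|m] ω * (1 - V ω) ∂μ :=
          intervalIntegral_integral_mul_ite_le hV hV01 integrable_condExp
      _ = ∫ ω, μ[ind s|m] ω * N ω ∂μ :=
          (integral_mul_condExp_of_bound hm stronglyMeasurable_condExp 1 hF hW_int).symm
      _ = ∫ ω, N ω * ind s ω ∂μ := by
          simp_rw [mul_comm (μ[ind s|m] _)]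
          exact integral_mul_condExp_of_bound hm stronglyMeasurable_condExp 1 hN (hind_int s)
  calc _ = ∫ s in (0:ℝ)..1, ∫ ω, N ω * ind s ω ∂μ := by congr 1 with s; exact inner s
    _ = ∫ ω, N ω * (1 - V ω) ∂μ :=
        intervalIntegral_integral_mul_ite_le hV hV01 integrable_condExp
    _ = ∫ ω, N ω ^ 2 ∂μ := by
        simp_rw [sq]
        exact (integral_mul_condExp_of_bound hm stronglyMeasurable_condExp 1 hN hW_int).symm

lemma variance_condExp_const_sub [IsProbabilityMeasure μ] (hm : m ≤ mΩ) {f : Ω → ℝ}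
    (hf : Integrable f μ) (c : ℝ) :
    Var[μ[fun ω => c - f ω|m]; μ] = Var[μ[f|m]; μ] := by
  have h : μ[fun ω => c - f ω|m] =ᵐ[μ] fun ω => c - μ[f|m] ω := by
    have := condExp_sub (m := m) (integrable_const c) hf
    rwa [condExp_const hm] at this
  rw [variance_congr h,
    variance_const_sub (stronglyMeasurable_condExp.mono hm).aestronglyMeasurable]

lemma variance_condExp_eq_integral_condExp_one_sub_sq [IsProbabilityMeasure μ] (hm : m ≤ mΩ)
    {V : Ω → ℝ} (hV : Measurable V) (hV01 : ∀ ω, V ω ∈ Icc (0:ℝ) 1) :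
    Var[μ[V|m]; μ] = ∫ ω, μ[fun ω' => 1 - V ω'|m] ω ^ 2 ∂μ - (1 - ∫ ω, V ω ∂μ) ^ 2 := by
  have hV_int : Integrable V μ := .of_bound hV.aestronglyMeasurable 1 <| .of_forall fun ω =>
    abs_le.2 ⟨by linarith [(hV01 ω).1], (hV01 ω).2⟩
  have hN : MemLp (μ[fun ω' => 1 - V ω'|m]) 2 μ :=
    .of_bound (stronglyMeasurable_condExp.mono hm).aestronglyMeasurable 1 <|
      ae_bdd_abs_condExp_of_ae_bdd_abs <| .of_forall fun ω =>
        abs_sub_le_of_nonneg_of_le zero_le_one le_rfl (hV01 ω).1 (hV01 ω).2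
  rw [← variance_condExp_const_sub hm hV_int 1, variance_eq_sub hN, integral_condExp hm,
    integral_sub (integrable_const 1) hV_int]
  simp

end ConditionalExpectation

/-- The distribution-free coefficient of determination
`R²(V,X) = Var(E[V|X])/Var(V)` with `V = G(Y)` equals Spearman's rho applied to `ψ_C`,
i.e. `R²(V,X) = 12 ∫∫_{[0,1]²} ψ_C(s,t) ds dt − 3`. -/
theorem R2_eq_spearman_rho_of_psi
    {Ω : Type*} [MeasurableSpace Ω] (P : Measure Ω) [IsProbabilityMeasure P]
    {d : ℕ} (X : Ω → (Fin d → ℝ)) (Y : Ω → ℝ) (hX : Measurable X) (hY : Measurable Y)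
    (G : ℝ → ℝ) (hG : ∀ y, G y = (P {ω | Y ω ≤ y}).toReal) (hGc : Continuous G)
    (V : Ω → ℝ) (hV : V = fun ω => G (Y ω))
    (ψ : ℝ → ℝ → ℝ)
    (hψ : ∀ s t : ℝ, ψ s t =
      ∫ ω, (P[fun ω' => if V ω' ≤ s then (1:ℝ) else 0 |
              MeasurableSpace.comap X inferInstance]) ω *
           (P[fun ω' => if V ω' ≤ t then (1:ℝ) else 0 |
              MeasurableSpace.comap X inferInstance]) ω ∂P)
    (R2 : ℝ)
    (hR2 : R2 = variance (P[V | MeasurableSpace.comap X inferInstance]) P / variance V P) :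
    R2 = 12 * (∫ s in (0:ℝ)..1, ∫ t in (0:ℝ)..1, ψ s t) - 3 := by
  have hm := hX.comap_le
  have := Measure.isProbabilityMeasure_map (μ := P) hY.aemeasurable
  obtain rfl : G = cdf (P.map Y) := funext fun y => by
    rw [hG, cdf_eq_real, measureReal_def, Measure.map_apply hY measurableSet_Iic]; rfl
  have hVm : Measurable V := hV ▸ hGc.measurable.comp hY
  have hV01 : ∀ ω, V ω ∈ Icc (0:ℝ) 1 := fun ω => hV ▸ ⟨cdf_nonneg _ _, cdf_le_one _ _⟩
  have hunif : P.map V = volume.restrict (Icc 0 1) := hV ▸ map_cdf_comp_eq_of_continuous hY hGc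
  have hEV : ∫ ω, V ω ∂P = 1 / 2 := by
    rw [← integral_id_restrict_Icc_zero_one, ← hunif]
    exact (integral_map hVm.aemeasurable aestronglyMeasurable_id).symm
  have hVarV : Var[V; P] = 1 / 12 := by
    rw [← variance_id_map hVm.aemeasurable, hunif, variance_id_restrict_Icc_zero_one]
  have hψ_int :=
    intervalIntegral_intervalIntegral_integral_condExp_mul_condExp (μ := P) hm hVm hV01
  simp_rw [← hψ] at hψ_int
  rw [hR2, hψ_int, variance_condExp_eq_integral_condExp_one_sub_sq hm hVm hV01, hEV, hVarV]
  ring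
end

section
/- Let X : Ω → ℝ^d and Y : Ω → ℝ be random variables with G, the distribution function of Y, continuous, and set V := G(Y). Then the distribution-free coefficient of determination R²(V,X) := Var(E[V | σ(X)]) / Var(V) satisfies R²(V,X) = 12·E[(E[V | σ(X)] − 1/2)²]; in particular, R²(V,X) = 0 if and only if E[V | σ(X)] = 1/2 almost surely, and R²(V,X) = 0 whenever Y and X are independent. Moreover, R²(V,X) = 1 if and only if there exists a measurable function f : ℝ^d → ℝ with P(Y = f(X)) = 1. -/
/-!
`V = G(Y)` is uniform on `(0, 1]` (probability integral transform), so `E V = 1/2` and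
`Var V = 1/12`; hence `R² = 12 Var(E[V | X]) = 12 E[(E[V | X] - 1/2)²]`, which vanishes
exactly when `E[V | X]` is a.s. constant. By the law of total variance, `R² = 1` iff
`V = E[V | X]` a.s., i.e. iff `V` is a.s. a measurable function of `X`. Because the quantile
function of `G` recovers `Y` from `V` almost surely, this happens iff `Y` is a.s. a measurable
function of `X`.
-/

open MeasureTheory ProbabilityTheory Set Filter Topology

namespace ProbabilityTheory

section Cdf

variable {μ : Measure ℝ}

variable (μ) in
/-- The generalized inverse of `cdf μ`; it is only meaningful on `(0, 1)`. -/
noncomputable def quantile (v : ℝ) : ℝ := sInf {y | v ≤ cdf μ y}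

lemma bddBelow_setOf_le_cdf {v : ℝ} (hv : 0 < v) : BddBelow {y | v ≤ cdf μ y} := by
  obtain ⟨y₀, hy₀⟩ := ((tendsto_cdf_atBot μ).eventually_lt_const hv).exists
  exact ⟨y₀, fun y hy => le_of_not_gt fun hyy₀ =>
    (monotone_cdf μ hyy₀.le |>.trans_lt hy₀).not_ge hy⟩

lemma monotoneOn_quantile : MonotoneOn (quantile μ) (Ioo 0 1) := by
  intro v hv v' hv' hvv'
  obtain ⟨y, hy⟩ := ((tendsto_cdf_atTop μ).eventually_const_le hv'.2).exists
  exact csInf_le_csInf (bddBelow_setOf_le_cdf hv.1) ⟨y, hy⟩ fun y hy => hvv'.trans hy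

variable [IsProbabilityMeasure μ]

lemma measure_Ioc_eq_ofReal_cdf_sub (a b : ℝ) :
    μ (Ioc a b) = ENNReal.ofReal (cdf μ b - cdf μ a) := by
  simpa only [measure_cdf] using (cdf μ).measure_Ioc a b

lemma measure_setOf_lt_and_cdf_le_eq_zero (hc : Continuous (cdf μ)) (t : ℝ) :
    μ {y | t < y ∧ cdf μ y ≤ cdf μ t} = 0 := by
  set S := {y | cdf μ y ≤ cdf μ t}
  by_cases hS : BddAbove S
  · have hsS : cdf μ (sSup S) ≤ cdf μ t :=
      (isClosed_le hc continuous_const : IsClosed S).csSup_mem ⟨t, le_refl (cdf μ t)⟩ hS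
    refine measure_mono_null
      (show _ ⊆ Ioc t (sSup S) from fun y hy => ⟨hy.1, le_csSup hS hy.2⟩) ?_
    rw [measure_Ioc_eq_ofReal_cdf_sub, ENNReal.ofReal_eq_zero]
    linarith
  · have hle : ∀ y, cdf μ y ≤ cdf μ t := fun y =>
      let ⟨z, hz, hyz⟩ := not_bddAbove_iff.1 hS y
      (monotone_cdf μ hyz.le).trans hz
    have ht : μ (Iic t) = 1 := by
      rw [← ofReal_cdf, le_antisymm (cdf_le_one μ t) (le_of_tendsto' (tendsto_cdf_atTop μ) hle),
        ENNReal.ofReal_one]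
    refine measure_mono_null (fun y hy => (not_le.2 hy.1 : y ∉ Iic t)) ?_
    exact (prob_compl_eq_zero_iff measurableSet_Iic).2 ht

lemma measure_cdf_le_of_mem_Ioo (hc : Continuous (cdf μ)) {v : ℝ} (hv : v ∈ Ioo 0 1) :
    μ {y | cdf μ y ≤ v} = ENNReal.ofReal v := by
  obtain ⟨t, rfl⟩ : v ∈ range (cdf μ) := mem_range_of_exists_le_of_exists_ge hc
    ((tendsto_cdf_atBot μ).eventually_le_const hv.1).exists
    ((tendsto_cdf_atTop μ).eventually_const_le hv.2).exists
  have hsplit : {y | cdf μ y ≤ cdf μ t} = Iic t ∪ {y | t < y ∧ cdf μ y ≤ cdf μ t} := by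
    ext y
    rcases le_or_gt y t with hyt | hty
    · simp [hyt, monotone_cdf μ hyt]
    · simp [hty, not_le.2 hty]
  rw [hsplit, measure_congr (union_ae_eq_left_of_ae_eq_empty
    (ae_eq_empty.2 (measure_setOf_lt_and_cdf_le_eq_zero hc t))), ← ofReal_cdf]

lemma measure_cdf_le_zero (hc : Continuous (cdf μ)) : μ {y | cdf μ y ≤ 0} = 0 := by
  refine nonpos_iff_eq_zero.1 (ge_of_tendsto
    ((ENNReal.continuous_ofReal.tendsto' 0 0 ENNReal.ofReal_zero).mono_left
      (nhdsWithin_le_nhds (s := Ioi 0))) ?_)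
  filter_upwards [Ioo_mem_nhdsGT one_pos] with ε hε
  rw [← measure_cdf_le_of_mem_Ioo hc hε]
  exact measure_mono fun y (hy : cdf μ y ≤ 0) => hy.trans hε.1.le

theorem map_cdf_eq_volume_restrict (hc : Continuous (cdf μ)) :
    μ.map (cdf μ) = volume.restrict (Ioc 0 1) := by
  refine Measure.ext_of_Iic _ _ fun v => ?_
  rw [Measure.map_apply hc.measurable measurableSet_Iic, Measure.restrict_apply measurableSet_Iic,
    inter_comm, Ioc_inter_Iic, Real.volume_Ioc, sub_zero, min_comm]
  rcases le_or_gt v 0 with hv0 | hv0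
  · rw [ENNReal.ofReal_of_nonpos ((min_le_left _ _).trans hv0)]
    exact measure_mono_null (fun y (hy : cdf μ y ≤ v) => hy.trans hv0) (measure_cdf_le_zero hc)
  rcases lt_or_ge v 1 with hv1 | hv1
  · rw [min_eq_left hv1.le]
    exact measure_cdf_le_of_mem_Ioo hc ⟨hv0, hv1⟩
  · rw [min_eq_right hv1, ENNReal.ofReal_one, ← measure_univ (μ := μ)]
    congr 1
    exact eq_univ_of_forall fun y => (cdf_le_one μ y).trans hv1

lemma ae_quantile_cdf (hc : Continuous (cdf μ)) : ∀ᵐ y ∂μ, quantile μ (cdf μ y) = y := by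
  have hpos : ∀ᵐ y ∂μ, 0 < cdf μ y := by
    refine ae_of_ae_map hc.aemeasurable ?_
    rw [map_cdf_eq_volume_restrict hc]
    filter_upwards [ae_restrict_mem measurableSet_Ioc] with v hv using hv.1
  have hflat : ∀ᵐ y ∂μ, ∀ q : ℚ, ¬((q : ℝ) < y ∧ cdf μ y ≤ cdf μ q) := by
    refine ae_all_iff.2 fun q => ae_iff.2 ?_
    simpa only [not_not] using measure_setOf_lt_and_cdf_le_eq_zero hc q
  filter_upwards [hpos, hflat] with y hy hq
  have hmem : y ∈ {z | cdf μ y ≤ cdf μ z} := le_refl (cdf μ y)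
  refine le_antisymm (csInf_le (bddBelow_setOf_le_cdf hy) hmem) (le_of_not_gt fun hlt => ?_)
  obtain ⟨z, hz, hzy⟩ := exists_lt_of_csInf_lt ⟨y, hmem⟩ hlt
  obtain ⟨q, hzq, hqy⟩ := exists_rat_btwn hzy
  exact hq q ⟨hqy, hz.trans (monotone_cdf μ hzq.le)⟩

lemma exists_measurable_ae_leftInverse_cdf (hc : Continuous (cdf μ)) :
    ∃ h : ℝ → ℝ, Measurable h ∧ ∀ᵐ y ∂μ, h (cdf μ y) = y := by
  have hQ : AEMeasurable (quantile μ) (μ.map (cdf μ)) := by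
    rw [map_cdf_eq_volume_restrict hc, Measure.restrict_congr_set Ioo_ae_eq_Ioc.symm]
    exact aemeasurable_restrict_of_monotoneOn measurableSet_Ioo monotoneOn_quantile
  refine ⟨hQ.mk, hQ.measurable_mk, ?_⟩
  filter_upwards [ae_of_ae_map hc.aemeasurable hQ.ae_eq_mk, ae_quantile_cdf hc] with y hy hQy
  rw [← hy, hQy]

end Cdf

section Conditioning

variable {Ω : Type*} {m mΩ : MeasurableSpace Ω} {μ : Measure Ω} {X : Ω → ℝ}

lemma variance_eq_zero_iff [IsFiniteMeasure μ] (hX : MemLp X 2 μ) :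
    Var[X; μ] = 0 ↔ X =ᵐ[μ] fun _ => μ[X] := by
  rw [variance, ENNReal.toReal_eq_zero_iff, or_iff_left (evariance_ne_top hX),
    evariance_eq_zero_iff hX.aemeasurable]

/-- By the law of total variance the gap between the two variances is `E[(X - E[X | m])²]`. -/
lemma variance_condExp_eq_iff [IsProbabilityMeasure μ] (hm : m ≤ mΩ) (hX : MemLp X 2 μ) :
    Var[μ[X | m]; μ] = Var[X; μ] ↔ μ[X | m] =ᵐ[μ] X := by
  refine ⟨fun h => ?_, variance_congr⟩
  have hgap : μ[(X - μ[X | m]) ^ 2] = 0 := by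
    have := integral_condVar_add_variance_condExp hm hX
    rw [condVar, integral_condExp hm] at this
    linarith
  have hint : Integrable ((X - μ[X | m]) ^ 2) μ :=
    (hX.sub (hX.condExp one_le_two)).integrable_sq
  filter_upwards [(integral_eq_zero_iff_of_nonneg (fun ω => sq_nonneg _) hint).1 hgap] with ω hω
  exact (sub_eq_zero.1 (pow_eq_zero_iff two_ne_zero |>.1 hω)).symm

lemma condExp_comap_ae_eq_self_iff {β : Type*} [mβ : MeasurableSpace β] [IsFiniteMeasure μ]
    {Z : Ω → β} (hZ : Measurable Z) (hX : Integrable X μ) :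
    μ[X | mβ.comap Z] =ᵐ[μ] X ↔ ∃ g : β → ℝ, Measurable g ∧ X =ᵐ[μ] g ∘ Z := by
  constructor
  · intro h
    obtain ⟨g, hg, hgZ⟩ := (stronglyMeasurable_condExp (m := mβ.comap Z) (μ := μ)
      (f := X)).measurable.exists_eq_measurable_comp
    exact ⟨g, hg, hgZ ▸ h.symm⟩
  · rintro ⟨g, hg, hXg⟩
    refine condExp_of_aestronglyMeasurable' hZ.comap_le ?_ hX
    exact (hg.comp (comap_measurable Z)).aestronglyMeasurable.congr hXg.symm

lemma exists_ae_eq_comp_iff_of_ae_leftInverse {β γ δ : Type*} [MeasurableSpace β]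
    [MeasurableSpace γ] [MeasurableSpace δ] {Y : Ω → γ} {Z : Ω → β} {F : γ → δ} {h : δ → γ}
    (hF : Measurable F) (hh : Measurable h) (hhF : ∀ᵐ ω ∂μ, h (F (Y ω)) = Y ω) :
    (∃ g : β → δ, Measurable g ∧ (fun ω => F (Y ω)) =ᵐ[μ] g ∘ Z) ↔
      ∃ f : β → γ, Measurable f ∧ ∀ᵐ ω ∂μ, Y ω = f (Z ω) := by
  constructor
  · rintro ⟨g, hg, hFY⟩
    refine ⟨h ∘ g, hh.comp hg, ?_⟩
    filter_upwards [hhF, hFY] with ω hω hωg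
    simp only [Function.comp_apply] at hωg ⊢
    rw [← hω, hωg]
  · rintro ⟨f, hf, hYf⟩
    refine ⟨F ∘ f, hF.comp hf, ?_⟩
    filter_upwards [hYf] with ω hω
    simp [hω]

end Conditioning

section Uniform

variable {Ω : Type*} [MeasurableSpace Ω] {μ : Measure Ω} {V : Ω → ℝ}

lemma integral_eq_of_map_eq_volume_restrict_Ioc (hV : AEMeasurable V μ)
    (h : μ.map V = volume.restrict (Ioc 0 1)) : μ[V] = 1 / 2 := by
  refine (integral_map hV aestronglyMeasurable_id).symm.trans ?_
  rw [h, ← intervalIntegral.integral_of_le zero_le_one]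
  simp

lemma variance_eq_of_map_eq_volume_restrict_Ioc (hV : AEMeasurable V μ)
    (h : μ.map V = volume.restrict (Ioc 0 1)) : Var[V; μ] = 1 / 12 := by
  rw [← variance_id_map hV, h, variance_eq_integral aemeasurable_id,
    integral_eq_of_map_eq_volume_restrict_Ioc aemeasurable_id Measure.map_id]
  simp only [id]
  rw [← intervalIntegral.integral_of_le zero_le_one, intervalIntegral.integral_comp_sub_right
    (fun x => x ^ 2), integral_pow]
  norm_num

end Uniform

end ProbabilityTheory

/-- For `V = G(Y)`, the distribution-free coefficient of determination
`R²(V,X) = Var(E[V|X])/Var(V)` equals `12·E[(E[V|X] − 1/2)²]`; it vanishes iff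
`E[V|X] = 1/2` a.s. (in particular when `Y` and `X` are independent), and equals `1`
iff `Y` is completely dependent on `X`. -/
theorem R2_characterizations
    {Ω : Type*} [MeasurableSpace Ω] (P : Measure Ω) [IsProbabilityMeasure P]
    {d : ℕ} (X : Ω → (Fin d → ℝ)) (Y : Ω → ℝ) (hX : Measurable X) (hY : Measurable Y)
    (G : ℝ → ℝ) (hG : ∀ y, G y = (P {ω | Y ω ≤ y}).toReal) (hGc : Continuous G)
    (V : Ω → ℝ) (hV : V = fun ω => G (Y ω))
    (R2 : ℝ)
    (hR2 : R2 = variance (P[V | MeasurableSpace.comap X inferInstance]) P / variance V P) :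
    R2 = 12 * ∫ ω, ((P[V | MeasurableSpace.comap X inferInstance]) ω - 1 / 2) ^ 2 ∂P ∧
    (R2 = 0 ↔ P[V | MeasurableSpace.comap X inferInstance] =ᵐ[P] fun _ => 1 / 2) ∧
    (IndepFun Y X P → R2 = 0) ∧
    (R2 = 1 ↔ ∃ f : (Fin d → ℝ) → ℝ, Measurable f ∧ ∀ᵐ ω ∂P, Y ω = f (X ω)) := by
  have : IsProbabilityMeasure (P.map Y) := Measure.isProbabilityMeasure_map hY.aemeasurable
  obtain rfl : G = cdf (P.map Y) := funext fun y => by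
    rw [hG, cdf_eq_real, measureReal_def, Measure.map_apply hY measurableSet_Iic]; rfl
  set CE := P[V | MeasurableSpace.comap X inferInstance]
  have hVm : Measurable V := hV ▸ hGc.measurable.comp hY
  have hmap : P.map V = volume.restrict (Ioc 0 1) := by
    rw [hV, ← Function.comp_def, ← Measure.map_map hGc.measurable hY,
      map_cdf_eq_volume_restrict hGc]
  have hEV := integral_eq_of_map_eq_volume_restrict_Ioc hVm.aemeasurable hmap
  have hVarV := variance_eq_of_map_eq_volume_restrict_Ioc hVm.aemeasurable hmap
  have hVL2 : MemLp V 2 P :=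
    memLp_two_of_variance_ne_zero hVm.aestronglyMeasurable (by rw [hVarV]; norm_num)
  have hECE : P[CE] = 1 / 2 := by rw [integral_condExp hX.comap_le, hEV]
  have hR2_eq : R2 = 12 * Var[CE; P] := by rw [hR2, hVarV]; ring
  have hR2_zero : R2 = 0 ↔ CE =ᵐ[P] fun _ => 1 / 2 := by
    rw [hR2_eq, mul_eq_zero, or_iff_right (by norm_num),
      variance_eq_zero_iff (hVL2.condExp one_le_two), hECE]
  refine ⟨?_, hR2_zero, fun hind => hR2_zero.2 ?_, ?_⟩
  · rw [hR2_eq, variance_eq_integral integrable_condExp.aemeasurable, hECE]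
  · rw [← hEV]
    refine condExp_indep_eq hVm.comap_le hX.comap_le (comap_measurable V).stronglyMeasurable ?_
    exact (IndepFun_iff_Indep V X P).1 (hV ▸ hind.comp hGc.measurable measurable_id)
  · obtain ⟨h, hh, hhF⟩ := exists_measurable_ae_leftInverse_cdf hGc
    rw [hR2_eq, ← exists_ae_eq_comp_iff_of_ae_leftInverse hGc.measurable hh
      (ae_of_ae_map hY.aemeasurable hhF), ← hV, ← condExp_comap_ae_eq_self_iff hX
      (hVL2.integrable one_le_two), ← variance_condExp_eq_iff hX.comap_le hVL2, hVarV]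
    constructor <;> intro <;> linarith
end

section
/- Let X : Ω → ℝ^d and Y : Ω → ℝ be random variables with G, the distribution function of Y, continuous, and let ψ_C(s,t) := E[ E[1_{G(Y) ≤ s} | σ(X)] · E[1_{G(Y) ≤ t} | σ(X)] ]. Define Q(Y,X) := 4 ∫₀¹ ( ψ_C(t,t) + ψ_C(t,1−t) ) dt − 2 (Gini's gamma applied to ψ_C). Then Q(Y,X) = 2 ∫₀¹ E[ ( E[1_{G(Y) ≤ t} | σ(X)] − (1 − E[1_{G(Y) ≤ 1−t} | σ(X)]) )² ] dt ≥ 0, and Q(Y,X) = 0 if and only if for every t ∈ [0,1], E[1_{G(Y) ≤ t} | σ(X)] = 1 − E[1_{G(Y) ≤ 1−t} | σ(X)] almost surely (i.e., (X,Y) and (X,−Y) have the same copula); in particular Q(Y,X) = 0 if Y and X are independent. Moreover Q(Y,X) = 1 if and only if there exists a measurable f : ℝ^d → ℝ with P(Y = f(X)) = 1. -/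
/-!
Write `U = G ∘ Y`, which is uniform on `[0, 1]` because `G` is continuous, and
`g t = E[1_{U ≤ t} | σ(X)]`, so that `E[g t] = t` and `ψ s t = E[g s * g t]`.
Expanding the square, `F t = E[(g t - (1 - g (1 - t)))²]` equals
`ψ t t + ψ (1 - t) (1 - t) + 2 ψ t (1 - t) - 1`, and the substitution `t ↦ 1 - t` turns
`∫₀¹ F` into `Q / 2`. Since `g t` is monotone in `t`, `E|g t - g s| = |t - s|`, so `ψ` and `F`
are continuous and `∫₀¹ F = 0` forces `F = 0` on `[0, 1]`.
Pointwise `(a - (1 - b))² ≤ a + (1 - b)` on `[0, 1]²`, so `F t ≤ 2 min t (1 - t)`, a function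
with integral `1 / 2`; equality everywhere, i.e. `Q = 1`, means that every `g t` is an
indicator, i.e. every event `{Y ≤ q}` lies in `σ(X)` up to a null set, i.e. `Y` is a measurable
function of `X`.
-/

open MeasureTheory ProbabilityTheory Set Filter

namespace GiniGamma

lemma sq_sub_one_sub_le_add_one_sub {a b : ℝ} (ha : a ∈ Icc (0 : ℝ) 1) (hb : b ∈ Icc (0 : ℝ) 1) :
    (a - (1 - b)) ^ 2 ≤ a + (1 - b) := by
  nlinarith [ha.1, ha.2, hb.1, hb.2]

lemma sq_sub_one_sub_eq_add_one_sub_iff {a b : ℝ} (ha : 0 ≤ a) (hab : a ≤ b) (hb : b ≤ 1) :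
    (a - (1 - b)) ^ 2 = a + (1 - b) ↔ (a = 0 ∨ a = 1) ∧ (b = 0 ∨ b = 1) := by
  constructor
  · intro h
    have ha' : a * (1 - a) = 0 := by nlinarith
    have hb' : b * (1 - b) = 0 := by nlinarith
    simp only [mul_eq_zero, sub_eq_zero] at ha' hb'
    exact ⟨ha'.imp id Eq.symm, hb'.imp id Eq.symm⟩
  · rintro ⟨rfl | rfl, rfl | rfl⟩ <;> linarith

lemma integral_eq_integral_iff_of_le_of_continuousOn {f g : ℝ → ℝ} {a b : ℝ} (hab : a < b)
    (hf : ContinuousOn f (Icc a b)) (hg : ContinuousOn g (Icc a b))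
    (hfg : ∀ x ∈ Icc a b, f x ≤ g x) :
    ∫ x in a..b, f x = ∫ x in a..b, g x ↔ ∀ x ∈ Icc a b, f x = g x := by
  refine ⟨fun h => ?_, fun h => intervalIntegral.integral_congr (by rwa [uIcc_of_le hab.le])⟩
  by_contra hne
  obtain ⟨c, hc, hfgc⟩ := not_forall₂.1 hne
  exact h.not_lt (intervalIntegral.integral_lt_integral_of_continuousOn_of_le_of_exists_lt hab
    hf hg (fun x hx => hfg x (Ioc_subset_Icc_self hx)) ⟨c, hc, (hfg c hc).lt_of_ne hfgc⟩)

lemma integral_two_mul_min_one_sub : ∫ t in (0 : ℝ)..1, 2 * min t (1 - t) = 1 / 2 := by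
  have hc : Continuous fun t : ℝ => 2 * min t (1 - t) := by fun_prop
  rw [← intervalIntegral.integral_add_adjacent_intervals (b := 1 / 2) (hc.intervalIntegrable _ _)
    (hc.intervalIntegrable _ _)]
  have h₁ : ∫ t in (0 : ℝ)..1 / 2, 2 * min t (1 - t) = ∫ t in (0 : ℝ)..1 / 2, 2 * t :=
    intervalIntegral.integral_congr fun t ht => by
      rw [uIcc_of_le (by norm_num)] at ht
      rw [min_eq_left (by linarith [ht.2])]
  have h₂ : ∫ t in (1 / 2 : ℝ)..1, 2 * min t (1 - t) = ∫ t in (1 / 2 : ℝ)..1, 2 * (1 - t) :=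
    intervalIntegral.integral_congr fun t ht => by
      rw [uIcc_of_le (by norm_num)] at ht
      rw [min_eq_right (by linarith [ht.1])]
  rw [h₁, h₂, intervalIntegral.integral_const_mul, intervalIntegral.integral_const_mul,
    intervalIntegral.integral_comp_sub_left (fun t => t)]
  norm_num [integral_id]

variable {Ω : Type*}

lemma abs_integral_mul_sub_integral_mul_le {m0 : MeasurableSpace Ω} {P : Measure Ω}
    {a b a' b' : Ω → ℝ} (ha : Integrable a P) (hb : Integrable b P) (ha' : Integrable a' P)
    (hb' : Integrable b' P) (hb₁ : ∀ᵐ ω ∂P, |b ω| ≤ 1) (ha'₁ : ∀ᵐ ω ∂P, |a' ω| ≤ 1) :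
    |∫ ω, a ω * b ω ∂P - ∫ ω, a' ω * b' ω ∂P| ≤
      ∫ ω, |a ω - a' ω| ∂P + ∫ ω, |b ω - b' ω| ∂P := by
  have hab : Integrable (fun ω => a ω * b ω) P := ha.mul_bdd hb.aestronglyMeasurable hb₁
  have ha'b' : Integrable (fun ω => a' ω * b' ω) P := hb'.bdd_mul ha'.aestronglyMeasurable ha'₁
  have hsub : Integrable (fun ω => |a ω - a' ω|) P := (ha.sub ha').abs
  have hsub' : Integrable (fun ω => |b ω - b' ω|) P := (hb.sub hb').abs
  rw [← integral_sub hab ha'b', ← integral_add hsub hsub']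
  refine abs_integral_le_integral_abs.trans
    (integral_mono_ae (hab.sub ha'b').abs (hsub.add hsub') ?_)
  filter_upwards [hb₁, ha'₁] with ω hbω ha'ω
  calc |a ω * b ω - a' ω * b' ω| = |(a ω - a' ω) * b ω + a' ω * (b ω - b' ω)| := by ring_nf
    _ ≤ |a ω - a' ω| * |b ω| + |a' ω| * |b ω - b' ω| := by
      rw [← abs_mul, ← abs_mul]
      exact abs_add_le _ _
    _ ≤ |a ω - a' ω| + |b ω - b' ω| :=
      add_le_add (mul_le_of_le_one_right (abs_nonneg _) hbω)
        (mul_le_of_le_one_left (abs_nonneg _) ha'ω)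

lemma iInf_rat_ite_le_eq (y : ℝ) :
    ⨅ q : ℚ, (if y ≤ q then ((q : ℝ) : EReal) else ⊤) = y := by
  refine le_antisymm (le_of_forall_gt fun z hz => ?_) (le_iInf fun q => ?_)
  · obtain ⟨q, hyq, hqz⟩ := EReal.lt_iff_exists_rat_btwn.1 hz
    exact (iInf_le _ q).trans_lt (by rwa [if_pos (by exact_mod_cast hyq.le)])
  · split_ifs with h
    · exact_mod_cast h
    · exact le_top

lemma exists_measurable_ae_eq_comp_of_forall_rat {m0 : MeasurableSpace Ω} {P : Measure Ω}
    {E : Type*} [MeasurableSpace E] {X : Ω → E} {Y : Ω → ℝ}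
    (h : ∀ q : ℚ, ∃ S, MeasurableSet S ∧ ∀ᵐ ω ∂P, (Y ω ≤ q ↔ X ω ∈ S)) :
    ∃ f : E → ℝ, Measurable f ∧ ∀ᵐ ω ∂P, Y ω = f (X ω) := by
  classical
  choose S hS hSY using h
  -- `f x = inf {q | x ∈ S q}` recovers `Y` from its rational sublevel sets.
  refine ⟨fun x => (⨅ q : ℚ, if x ∈ S q then ((q : ℝ) : EReal) else ⊤).toReal,
    measurable_ereal_toReal.comp (.iInf fun q => .ite (hS q) measurable_const measurable_const),
    ?_⟩
  filter_upwards [ae_all_iff.2 hSY] with ω hω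
  simp only [← hω, iInf_rat_ite_le_eq, EReal.toReal_coe]

section Cdf

variable {μ : Measure ℝ}

lemma exists_cdf_eq (hc : Continuous (cdf μ)) {t : ℝ} (ht : t ∈ Ioo 0 1) : ∃ y, cdf μ y = t :=
  mem_range_of_exists_le_of_exists_ge hc
    ((tendsto_cdf_atBot μ).eventually (eventually_le_nhds ht.1)).exists
    ((tendsto_cdf_atTop μ).eventually (eventually_ge_nhds ht.2)).exists

variable [IsProbabilityMeasure μ]

/-- The probability integral transform. -/
lemma measureReal_setOf_cdf_le (hc : Continuous (cdf μ)) {t : ℝ} (ht : t ∈ Icc 0 1) :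
    μ.real {y | cdf μ y ≤ t} = t := by
  apply le_antisymm
  · refine le_of_forall_gt_imp_ge_of_dense fun s hts => ?_
    rcases lt_or_ge s 1 with hs | hs
    · obtain ⟨y, hy⟩ := exists_cdf_eq hc ⟨ht.1.trans_lt hts, hs⟩
      calc μ.real {y | cdf μ y ≤ t} ≤ μ.real (Iic y) := measureReal_mono fun z hz =>
            ((monotone_cdf μ).reflect_lt (hy ▸ lt_of_le_of_lt hz hts)).le
        _ = s := by rw [← cdf_eq_real, hy]
    · exact measureReal_le_one.trans hs
  · refine le_of_forall_lt_imp_le_of_dense fun s hst => ?_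
    rcases le_or_gt s 0 with hs | hs
    · exact hs.trans measureReal_nonneg
    · obtain ⟨y, hy⟩ := exists_cdf_eq hc ⟨hs, hst.trans_le ht.2⟩
      calc s = μ.real (Iic y) := by rw [← cdf_eq_real, hy]
        _ ≤ μ.real {y | cdf μ y ≤ t} :=
            measureReal_mono fun z (hz : z ≤ y) => (monotone_cdf μ hz).trans (hy ▸ hst.le)

lemma ae_le_iff_cdf_le (hc : Continuous (cdf μ)) (r : ℝ) :
    ∀ᵐ y ∂μ, (y ≤ r ↔ cdf μ y ≤ cdf μ r) := by
  have hsub : Iic r ⊆ {y | cdf μ y ≤ cdf μ r} := fun y (hy : y ≤ r) => monotone_cdf μ hy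
  have hmeas : μ {y | cdf μ y ≤ cdf μ r} ≤ μ (Iic r) := by
    rw [← ofReal_measureReal, measureReal_setOf_cdf_le hc ⟨cdf_nonneg μ r, cdf_le_one μ r⟩,
      ofReal_cdf]
  exact eventuallyEq_set.1 (ae_eq_of_subset_of_measure_ge hsub hmeas
    measurableSet_Iic.nullMeasurableSet (measure_ne_top μ _))

end Cdf

lemma measureReal_setOf_cdf_map_le {m0 : MeasurableSpace Ω} {P : Measure Ω}
    [IsProbabilityMeasure P] {Y : Ω → ℝ} (hY : Measurable Y) (hc : Continuous (cdf (P.map Y)))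
    {t : ℝ} (ht : t ∈ Icc (0 : ℝ) 1) : P.real {ω | cdf (P.map Y) (Y ω) ≤ t} = t := by
  have := Measure.isProbabilityMeasure_map (μ := P) hY.aemeasurable
  have := measureReal_setOf_cdf_le hc ht
  rwa [map_measureReal_apply hY (measurableSet_le hc.measurable measurable_const)] at this

/-- With `U = G ∘ Y` and `m = σ(X)`, the `E[1_{G(Y) ≤ t} | σ(X)]` of the statement. -/
noncomputable def condProbLe (m : MeasurableSpace Ω) {m0 : MeasurableSpace Ω} (P : Measure Ω)
    (U : Ω → ℝ) (t : ℝ) : Ω → ℝ :=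
  P[fun ω => if U ω ≤ t then 1 else 0 | m]

/-- The function `ψ_C` of the statement. -/
noncomputable def psi (m : MeasurableSpace Ω) {m0 : MeasurableSpace Ω} (P : Measure Ω)
    (U : Ω → ℝ) (s t : ℝ) : ℝ :=
  ∫ ω, condProbLe m P U s ω * condProbLe m P U t ω ∂P

noncomputable def giniIntegrand (m : MeasurableSpace Ω) {m0 : MeasurableSpace Ω} (P : Measure Ω)
    (U : Ω → ℝ) (t : ℝ) : ℝ :=
  psi m P U t t + psi m P U t (1 - t)

noncomputable def reflectionGap (m : MeasurableSpace Ω) {m0 : MeasurableSpace Ω} (P : Measure Ω)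
    (U : Ω → ℝ) (t : ℝ) : ℝ :=
  ∫ ω, (condProbLe m P U t ω - (1 - condProbLe m P U (1 - t) ω)) ^ 2 ∂P

section CondProbLe

variable {m m0 : MeasurableSpace Ω} {P : Measure Ω} {U : Ω → ℝ}

lemma measurable_ite_le (hU : Measurable U) (t : ℝ) :
    Measurable fun ω => if U ω ≤ t then (1 : ℝ) else 0 :=
  Measurable.ite (measurableSet_le hU measurable_const) measurable_const measurable_const

lemma integrable_ite_le [IsFiniteMeasure P] (hU : Measurable U) (t : ℝ) :
    Integrable (fun ω => if U ω ≤ t then (1 : ℝ) else 0) P :=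
  .of_bound (measurable_ite_le hU t).aestronglyMeasurable 1
    (.of_forall fun ω => by split_ifs <;> simp)

lemma integral_ite_le (hU : Measurable U) (t : ℝ) :
    ∫ ω, (if U ω ≤ t then (1 : ℝ) else 0) ∂P = P.real {ω | U ω ≤ t} := by
  rw [← integral_indicator_one (measurableSet_le hU measurable_const)]
  rfl

lemma integrable_condProbLe (t : ℝ) : Integrable (condProbLe m P U t) P := integrable_condExp

lemma condProbLe_mem_Icc [IsFiniteMeasure P] (hm : m ≤ m0) (hU : Measurable U) (t : ℝ) :
    ∀ᵐ ω ∂P, condProbLe m P U t ω ∈ Icc (0 : ℝ) 1 := by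
  have h₀ : 0 ≤ᵐ[P] condProbLe m P U t :=
    condExp_nonneg (.of_forall fun ω => by dsimp only; split_ifs <;> simp)
  have h₁ := condExp_mono (m := m) (integrable_ite_le (P := P) hU t) (integrable_const 1)
    (.of_forall fun ω => by dsimp only; split_ifs <;> simp)
  rw [condExp_const hm] at h₁
  filter_upwards [h₀, h₁] with ω h₀ h₁ using ⟨h₀, h₁⟩

lemma abs_condProbLe_le_one [IsFiniteMeasure P] (hm : m ≤ m0) (hU : Measurable U) (t : ℝ) :
    ∀ᵐ ω ∂P, |condProbLe m P U t ω| ≤ 1 := by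
  filter_upwards [condProbLe_mem_Icc hm hU t] with ω h
  exact abs_le.2 ⟨by linarith [h.1], h.2⟩

lemma condProbLe_mono [IsFiniteMeasure P] (hU : Measurable U) {s t : ℝ} (hst : s ≤ t) :
    condProbLe m P U s ≤ᵐ[P] condProbLe m P U t :=
  condExp_mono (integrable_ite_le hU s) (integrable_ite_le hU t) (.of_forall fun ω => by
    dsimp only
    split_ifs with h₁ h₂ <;> first | simp | exact absurd (h₁.trans hst) h₂)

lemma integral_condProbLe [IsFiniteMeasure P] (hm : m ≤ m0) (hU : Measurable U) (t : ℝ) :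
    ∫ ω, condProbLe m P U t ω ∂P = P.real {ω | U ω ≤ t} := by
  rw [condProbLe, integral_condExp hm, integral_ite_le hU]

lemma integral_abs_condProbLe_sub [IsFiniteMeasure P] (hm : m ≤ m0) (hU : Measurable U)
    (hunif : ∀ t ∈ Icc (0 : ℝ) 1, P.real {ω | U ω ≤ t} = t) {s t : ℝ} (hs : s ∈ Icc (0 : ℝ) 1)
    (ht : t ∈ Icc (0 : ℝ) 1) :
    ∫ ω, |condProbLe m P U t ω - condProbLe m P U s ω| ∂P = |t - s| := by
  wlog hst : s ≤ t generalizing s t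
  · simp_rw [abs_sub_comm _ (condProbLe m P U s _), abs_sub_comm t s]
    exact this ht hs (le_of_not_ge hst)
  calc ∫ ω, |condProbLe m P U t ω - condProbLe m P U s ω| ∂P
      = ∫ ω, (condProbLe m P U t ω - condProbLe m P U s ω) ∂P := by
        refine integral_congr_ae ?_
        filter_upwards [condProbLe_mono (m := m) (P := P) hU hst] with ω h
        exact abs_of_nonneg (sub_nonneg.2 h)
    _ = t - s := by
        rw [integral_sub (integrable_condProbLe t) (integrable_condProbLe s),
          integral_condProbLe hm hU, integral_condProbLe hm hU, hunif t ht, hunif s hs]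
    _ = |t - s| := (abs_of_nonneg (sub_nonneg.2 hst)).symm

end CondProbLe

section Psi

variable {m m0 : MeasurableSpace Ω} {P : Measure Ω} {U : Ω → ℝ}

lemma psi_comm (s t : ℝ) : psi m P U s t = psi m P U t s := by
  simp only [psi, mul_comm]

variable [IsFiniteMeasure P]

lemma abs_psi_sub_psi_le (hm : m ≤ m0) (hU : Measurable U)
    (hunif : ∀ t ∈ Icc (0 : ℝ) 1, P.real {ω | U ω ≤ t} = t) {s t s' t' : ℝ}
    (hs : s ∈ Icc (0 : ℝ) 1) (ht : t ∈ Icc (0 : ℝ) 1) (hs' : s' ∈ Icc (0 : ℝ) 1)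
    (ht' : t' ∈ Icc (0 : ℝ) 1) :
    |psi m P U s t - psi m P U s' t'| ≤ |s - s'| + |t - t'| := by
  have := abs_integral_mul_sub_integral_mul_le (a := condProbLe m P U s)
    (b' := condProbLe m P U t') (integrable_condProbLe s) (integrable_condProbLe t)
    (integrable_condProbLe s') (integrable_condProbLe t')
    (abs_condProbLe_le_one (P := P) hm hU t) (abs_condProbLe_le_one (P := P) hm hU s')
  rwa [integral_abs_condProbLe_sub hm hU hunif hs' hs,
    integral_abs_condProbLe_sub hm hU hunif ht' ht] at this

lemma continuousOn_psi (hm : m ≤ m0) (hU : Measurable U)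
    (hunif : ∀ t ∈ Icc (0 : ℝ) 1, P.real {ω | U ω ≤ t} = t) :
    ContinuousOn (Function.uncurry (psi m P U)) (Icc 0 1 ×ˢ Icc 0 1) := by
  refine (LipschitzOnWith.of_dist_le_mul (K := 2) fun p hp q hq => ?_).continuousOn
  have := abs_psi_sub_psi_le hm hU hunif hp.1 hp.2 hq.1 hq.2
  rw [Real.dist_eq, Prod.dist_eq, Real.dist_eq, Real.dist_eq, NNReal.coe_ofNat]
  exact this.trans (by rw [two_mul]; exact add_le_add (le_max_left _ _) (le_max_right _ _))

lemma continuousOn_psi_comp (hm : m ≤ m0) (hU : Measurable U)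
    (hunif : ∀ t ∈ Icc (0 : ℝ) 1, P.real {ω | U ω ≤ t} = t) {u v : ℝ → ℝ}
    (hu : ContinuousOn u (Icc 0 1)) (hv : ContinuousOn v (Icc 0 1))
    (hu₁ : MapsTo u (Icc 0 1) (Icc 0 1)) (hv₁ : MapsTo v (Icc 0 1) (Icc 0 1)) :
    ContinuousOn (fun t => psi m P U (u t) (v t)) (Icc 0 1) :=
  (continuousOn_psi hm hU hunif).comp (hu.prodMk hv) fun _ ht => ⟨hu₁ ht, hv₁ ht⟩

lemma continuousOn_giniIntegrand (hm : m ≤ m0) (hU : Measurable U)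
    (hunif : ∀ t ∈ Icc (0 : ℝ) 1, P.real {ω | U ω ≤ t} = t) :
    ContinuousOn (giniIntegrand m P U) (Icc 0 1) :=
  (continuousOn_psi_comp hm hU hunif continuousOn_id continuousOn_id (mapsTo_id _)
    (mapsTo_id _)).add (continuousOn_psi_comp hm hU hunif continuousOn_id
    (continuousOn_const.sub continuousOn_id) (mapsTo_id _) fun _ => Icc.mem_iff_one_sub_mem.1)

end Psi

section ReflectionGap

variable {m m0 : MeasurableSpace Ω} {P : Measure Ω} {U : Ω → ℝ}

lemma reflectionGap_nonneg (t : ℝ) : 0 ≤ reflectionGap m P U t :=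
  integral_nonneg fun _ => sq_nonneg _

lemma reflectionGap_one_sub (t : ℝ) : reflectionGap m P U (1 - t) = reflectionGap m P U t := by
  simp only [reflectionGap, sub_sub_cancel]
  congr 1 with ω
  ring

lemma integrable_condProbLe_mul [IsFiniteMeasure P] (hm : m ≤ m0) (hU : Measurable U)
    (s t : ℝ) : Integrable (fun ω => condProbLe m P U s ω * condProbLe m P U t ω) P :=
  (integrable_condProbLe s).mul_bdd (integrable_condProbLe t).aestronglyMeasurable
    (by simpa only [Real.norm_eq_abs] using abs_condProbLe_le_one hm hU t)

lemma integrable_sq_condProbLe_sub_one_sub [IsFiniteMeasure P] (hm : m ≤ m0)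
    (hU : Measurable U) (s t : ℝ) :
    Integrable (fun ω => (condProbLe m P U s ω - (1 - condProbLe m P U t ω)) ^ 2) P := by
  have hint : Integrable (fun ω => condProbLe m P U s ω - (1 - condProbLe m P U t ω)) P :=
    (integrable_condProbLe s).sub ((integrable_const 1).sub (integrable_condProbLe t))
  simp only [sq]
  refine hint.mul_bdd hint.aestronglyMeasurable (c := 1) ?_
  filter_upwards [condProbLe_mem_Icc (P := P) hm hU s, condProbLe_mem_Icc (P := P) hm hU t]
    with ω hs ht
  rw [Real.norm_eq_abs, abs_le]
  constructor <;> linarith [hs.1, hs.2, ht.1, ht.2]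

lemma sq_condProbLe_sub_one_sub_le [IsFiniteMeasure P] (hm : m ≤ m0) (hU : Measurable U)
    (s t : ℝ) :
    (fun ω => (condProbLe m P U s ω - (1 - condProbLe m P U t ω)) ^ 2) ≤ᵐ[P]
      fun ω => condProbLe m P U s ω + (1 - condProbLe m P U t ω) := by
  filter_upwards [condProbLe_mem_Icc (P := P) hm hU s, condProbLe_mem_Icc (P := P) hm hU t]
    with ω hs ht
  exact sq_sub_one_sub_le_add_one_sub hs ht

lemma reflectionGap_eq_zero_iff [IsFiniteMeasure P] (hm : m ≤ m0) (hU : Measurable U) (t : ℝ) :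
    reflectionGap m P U t = 0 ↔
      condProbLe m P U t =ᵐ[P] fun ω => 1 - condProbLe m P U (1 - t) ω := by
  rw [reflectionGap, integral_eq_zero_iff_of_nonneg (fun _ => sq_nonneg _)
    (integrable_sq_condProbLe_sub_one_sub hm hU t (1 - t))]
  refine eventually_congr (.of_forall fun ω => ?_)
  simp [sub_eq_zero]

variable [IsProbabilityMeasure P]

lemma reflectionGap_eq (hm : m ≤ m0) (hU : Measurable U)
    (hunif : ∀ t ∈ Icc (0 : ℝ) 1, P.real {ω | U ω ≤ t} = t) {t : ℝ} (ht : t ∈ Icc (0 : ℝ) 1) :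
    reflectionGap m P U t =
      psi m P U t t + psi m P U (1 - t) (1 - t) + 2 * psi m P U t (1 - t) - 1 := by
  have := integrable_condProbLe_mul (P := P) hm hU
  have := integrable_condProbLe (m := m) (P := P) (U := U)
  calc reflectionGap m P U t
      = ∫ ω, (condProbLe m P U t ω * condProbLe m P U t ω
          + condProbLe m P U (1 - t) ω * condProbLe m P U (1 - t) ω
          + 2 * (condProbLe m P U t ω * condProbLe m P U (1 - t) ω)
          - 2 * (condProbLe m P U t ω + condProbLe m P U (1 - t) ω) + 1) ∂P :=
        integral_congr_ae (.of_forall fun ω => by ring)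
    _ = _ := by
        rw [integral_add (by fun_prop) (by fun_prop), integral_sub (by fun_prop) (by fun_prop),
          integral_add (by fun_prop) (by fun_prop), integral_add (by fun_prop) (by fun_prop),
          integral_const_mul, integral_const_mul, integral_add (by fun_prop) (by fun_prop),
          integral_condProbLe hm hU, integral_condProbLe hm hU, hunif t ht,
          hunif _ (Icc.mem_iff_one_sub_mem.1 ht)]
        simp only [psi, integral_const, probReal_univ, smul_eq_mul, one_mul]
        ring

lemma integral_condProbLe_add_one_sub (hm : m ≤ m0) (hU : Measurable U)
    (hunif : ∀ t ∈ Icc (0 : ℝ) 1, P.real {ω | U ω ≤ t} = t) {t : ℝ} (ht : t ∈ Icc (0 : ℝ) 1) :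
    ∫ ω, (condProbLe m P U t ω + (1 - condProbLe m P U (1 - t) ω)) ∂P = 2 * t := by
  have := integrable_condProbLe (m := m) (P := P) (U := U)
  rw [integral_add (by fun_prop) (by fun_prop), integral_sub (by fun_prop) (by fun_prop),
    integral_condProbLe hm hU, integral_condProbLe hm hU, hunif t ht,
    hunif _ (Icc.mem_iff_one_sub_mem.1 ht)]
  simp only [integral_const, probReal_univ, smul_eq_mul, one_mul]
  ring

lemma reflectionGap_le_two_mul (hm : m ≤ m0) (hU : Measurable U)
    (hunif : ∀ t ∈ Icc (0 : ℝ) 1, P.real {ω | U ω ≤ t} = t) {t : ℝ} (ht : t ∈ Icc (0 : ℝ) 1) :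
    reflectionGap m P U t ≤ 2 * t := by
  have := integrable_condProbLe (m := m) (P := P) (U := U)
  rw [← integral_condProbLe_add_one_sub hm hU hunif ht]
  exact integral_mono_ae (integrable_sq_condProbLe_sub_one_sub hm hU t (1 - t)) (by fun_prop)
    (sq_condProbLe_sub_one_sub_le hm hU t (1 - t))

lemma reflectionGap_le_two_mul_min (hm : m ≤ m0) (hU : Measurable U)
    (hunif : ∀ t ∈ Icc (0 : ℝ) 1, P.real {ω | U ω ≤ t} = t) {t : ℝ} (ht : t ∈ Icc (0 : ℝ) 1) :
    reflectionGap m P U t ≤ 2 * min t (1 - t) := by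
  rw [mul_min_of_nonneg _ _ zero_le_two]
  refine le_min (reflectionGap_le_two_mul hm hU hunif ht) ?_
  rw [← reflectionGap_one_sub]
  exact reflectionGap_le_two_mul hm hU hunif (Icc.mem_iff_one_sub_mem.1 ht)

lemma reflectionGap_eq_two_mul_iff (hm : m ≤ m0) (hU : Measurable U)
    (hunif : ∀ t ∈ Icc (0 : ℝ) 1, P.real {ω | U ω ≤ t} = t) {t : ℝ} (ht : t ∈ Icc (0 : ℝ) 1)
    (ht' : t ≤ 1 - t) :
    reflectionGap m P U t = 2 * t ↔
      (∀ᵐ ω ∂P, condProbLe m P U t ω = 0 ∨ condProbLe m P U t ω = 1) ∧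
      ∀ᵐ ω ∂P, condProbLe m P U (1 - t) ω = 0 ∨ condProbLe m P U (1 - t) ω = 1 := by
  have := integrable_condProbLe (m := m) (P := P) (U := U)
  rw [← integral_condProbLe_add_one_sub hm hU hunif ht, reflectionGap,
    integral_eq_iff_of_ae_le (integrable_sq_condProbLe_sub_one_sub hm hU t (1 - t))
      (by fun_prop) (sq_condProbLe_sub_one_sub_le hm hU t (1 - t)), ← eventually_and]
  refine eventually_congr ?_
  filter_upwards [condProbLe_mem_Icc (P := P) hm hU t, condProbLe_mono (m := m) (P := P) hU ht',
    condProbLe_mem_Icc (P := P) hm hU (1 - t)] with ω h₀ h₁ h₂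
  exact sq_sub_one_sub_eq_add_one_sub_iff h₀.1 h₁ h₂.2

lemma forall_reflectionGap_eq_two_mul_min_iff (hm : m ≤ m0) (hU : Measurable U)
    (hunif : ∀ t ∈ Icc (0 : ℝ) 1, P.real {ω | U ω ≤ t} = t) :
    (∀ t ∈ Icc (0 : ℝ) 1, reflectionGap m P U t = 2 * min t (1 - t)) ↔
      ∀ s ∈ Icc (0 : ℝ) 1, ∀ᵐ ω ∂P, condProbLe m P U s ω = 0 ∨ condProbLe m P U s ω = 1 := by
  constructor
  · intro h s hs
    have hs' := Icc.mem_iff_one_sub_mem.1 hs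
    rcases le_total s (1 - s) with hle | hle
    · exact ((reflectionGap_eq_two_mul_iff hm hU hunif hs hle).1
        (by rw [h s hs, min_eq_left hle])).1
    · have hle' : 1 - s ≤ 1 - (1 - s) := by linarith
      have := (reflectionGap_eq_two_mul_iff hm hU hunif hs' hle').1
        (by rw [h _ hs', min_eq_left hle'])
      simpa only [sub_sub_cancel] using this.2
  · intro h t ht
    have ht' := Icc.mem_iff_one_sub_mem.1 ht
    rcases le_total t (1 - t) with hle | hle
    · rw [min_eq_left hle]
      exact (reflectionGap_eq_two_mul_iff hm hU hunif ht hle).2 ⟨h t ht, h _ ht'⟩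
    · have hle' : 1 - t ≤ 1 - (1 - t) := by linarith
      rw [min_eq_right hle, ← reflectionGap_one_sub,
        (reflectionGap_eq_two_mul_iff hm hU hunif ht' hle').2]
      simpa only [sub_sub_cancel] using ⟨h _ ht', h t ht⟩

lemma reflectionGap_eq_giniIntegrand (hm : m ≤ m0) (hU : Measurable U)
    (hunif : ∀ t ∈ Icc (0 : ℝ) 1, P.real {ω | U ω ≤ t} = t) {t : ℝ} (ht : t ∈ Icc (0 : ℝ) 1) :
    reflectionGap m P U t = giniIntegrand m P U t + giniIntegrand m P U (1 - t) - 1 := by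
  rw [reflectionGap_eq hm hU hunif ht, giniIntegrand, giniIntegrand, sub_sub_cancel,
    psi_comm (1 - t) t]
  ring

lemma continuousOn_reflectionGap (hm : m ≤ m0) (hU : Measurable U)
    (hunif : ∀ t ∈ Icc (0 : ℝ) 1, P.real {ω | U ω ≤ t} = t) :
    ContinuousOn (reflectionGap m P U) (Icc 0 1) := by
  have hc := continuousOn_giniIntegrand hm hU hunif
  refine ContinuousOn.congr ?_ fun t ht => reflectionGap_eq_giniIntegrand hm hU hunif ht
  exact (hc.add (hc.comp (continuousOn_const.sub continuousOn_id)
    fun _ => Icc.mem_iff_one_sub_mem.1)).sub continuousOn_const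

lemma integral_reflectionGap (hm : m ≤ m0) (hU : Measurable U)
    (hunif : ∀ t ∈ Icc (0 : ℝ) 1, P.real {ω | U ω ≤ t} = t) :
    ∫ t in (0 : ℝ)..1, reflectionGap m P U t =
      2 * (∫ t in (0 : ℝ)..1, giniIntegrand m P U t) - 1 := by
  have hc := continuousOn_giniIntegrand hm hU hunif
  have hi : IntervalIntegrable (giniIntegrand m P U) volume 0 1 :=
    hc.intervalIntegrable_of_Icc zero_le_one
  have hi' : IntervalIntegrable (fun t => giniIntegrand m P U (1 - t)) volume 0 1 :=
    (hc.comp (continuousOn_const.sub continuousOn_id)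
      fun _ => Icc.mem_iff_one_sub_mem.1).intervalIntegrable_of_Icc zero_le_one
  rw [intervalIntegral.integral_congr (g := fun t => giniIntegrand m P U t +
      giniIntegrand m P U (1 - t) - 1) fun t ht => reflectionGap_eq_giniIntegrand hm hU hunif
      (by rwa [uIcc_of_le zero_le_one] at ht),
    intervalIntegral.integral_sub (hi.add hi') intervalIntegrable_const,
    intervalIntegral.integral_add hi hi', intervalIntegral.integral_comp_sub_left]
  norm_num
  ring

lemma integral_reflectionGap_eq_zero_iff (hm : m ≤ m0) (hU : Measurable U)
    (hunif : ∀ t ∈ Icc (0 : ℝ) 1, P.real {ω | U ω ≤ t} = t) :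
    ∫ t in (0 : ℝ)..1, reflectionGap m P U t = 0 ↔
      ∀ t ∈ Icc (0 : ℝ) 1, reflectionGap m P U t = 0 := by
  have := integral_eq_integral_iff_of_le_of_continuousOn zero_lt_one continuousOn_const
    (continuousOn_reflectionGap hm hU hunif) fun t _ => reflectionGap_nonneg t
  rw [intervalIntegral.integral_zero] at this
  rw [eq_comm, this]
  exact forall₂_congr fun t _ => eq_comm

lemma integral_reflectionGap_eq_half_iff (hm : m ≤ m0) (hU : Measurable U)
    (hunif : ∀ t ∈ Icc (0 : ℝ) 1, P.real {ω | U ω ≤ t} = t) :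
    ∫ t in (0 : ℝ)..1, reflectionGap m P U t = 1 / 2 ↔
      ∀ t ∈ Icc (0 : ℝ) 1, reflectionGap m P U t = 2 * min t (1 - t) := by
  rw [← integral_two_mul_min_one_sub]
  exact integral_eq_integral_iff_of_le_of_continuousOn zero_lt_one
    (continuousOn_reflectionGap hm hU hunif) (by fun_prop)
    fun t ht => reflectionGap_le_two_mul_min hm hU hunif ht

end ReflectionGap

section Dependence

variable {m m0 : MeasurableSpace Ω} {P : Measure Ω} [IsFiniteMeasure P] {U : Ω → ℝ}

lemma condProbLe_comap_ae_eq_of_indepFun {E : Type*} [MeasurableSpace E] {X : Ω → E}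
    (hX : Measurable X) (hU : Measurable U) (hind : IndepFun U X P) (t : ℝ) :
    condProbLe (MeasurableSpace.comap X inferInstance) P U t =ᵐ[P]
      fun _ => P.real {ω | U ω ≤ t} := by
  rw [← integral_ite_le hU]
  refine condExp_indep_eq hU.comap_le hX.comap_le ?_ ((IndepFun_iff_Indep U X P).1 hind)
  exact ((measurable_ite_le measurable_id t).comp (comap_measurable U)).stronglyMeasurable

lemma reflectionGap_comap_eq_zero_of_indepFun {E : Type*} [MeasurableSpace E] {X : Ω → E}
    (hX : Measurable X) (hU : Measurable U)
    (hunif : ∀ t ∈ Icc (0 : ℝ) 1, P.real {ω | U ω ≤ t} = t) (hind : IndepFun U X P) {t : ℝ}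
    (ht : t ∈ Icc (0 : ℝ) 1) : reflectionGap (.comap X inferInstance) P U t = 0 := by
  refine (reflectionGap_eq_zero_iff hX.comap_le hU t).2 ?_
  filter_upwards [condProbLe_comap_ae_eq_of_indepFun hX hU hind t,
    condProbLe_comap_ae_eq_of_indepFun hX hU hind (1 - t)] with ω h₁ h₂
  rw [h₁, h₂, hunif t ht, hunif _ (Icc.mem_iff_one_sub_mem.1 ht)]
  ring

lemma condProbLe_ae_eq_ite_of_ae_eq (hm : m ≤ m0) (hU : Measurable U) {V : Ω → ℝ}
    (hV : Measurable[m] V) (hUV : U =ᵐ[P] V) (s : ℝ) :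
    condProbLe m P U s =ᵐ[P] fun ω => if U ω ≤ s then 1 else 0 := by
  refine condExp_of_aestronglyMeasurable' hm
    ⟨_, (measurable_ite_le hV s).stronglyMeasurable, ?_⟩ (integrable_ite_le hU s)
  filter_upwards [hUV] with ω h
  rw [h]

lemma exists_measurableSet_ae_iff_of_condProbLe (hm : m ≤ m0) (hU : Measurable U) {s : ℝ}
    (h01 : ∀ᵐ ω ∂P, condProbLe m P U s ω = 0 ∨ condProbLe m P U s ω = 1) :
    ∃ A, MeasurableSet[m] A ∧ ∀ᵐ ω ∂P, (U ω ≤ s ↔ ω ∈ A) := by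
  set f : Ω → ℝ := fun ω => if U ω ≤ s then 1 else 0
  have hf : Integrable f P := integrable_ite_le hU s
  have hf01 (ω : Ω) : f ω ∈ Icc (0 : ℝ) 1 := by simp only [f]; split_ifs <;> norm_num
  set A := condProbLe m P U s ⁻¹' {1}
  have hA : MeasurableSet[m] A :=
    stronglyMeasurable_condExp.measurable (measurableSet_singleton 1)
  -- On `A` the indicator `f` has the same integral as its upper bound `1`, off `A` the same
  -- integral as its lower bound `0`.
  refine ⟨A, hA, ae_of_ae_restrict_of_ae_restrict_compl A ?_ ?_⟩
  · have h1 : f =ᵐ[P.restrict A] fun _ => 1 := by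
      refine (integral_eq_iff_of_ae_le hf.integrableOn (integrable_const _)
        (.of_forall fun ω => (hf01 ω).2)).1 ?_
      rw [← setIntegral_condExp hm hf hA]
      exact setIntegral_congr_fun (hm _ hA) fun ω hω => hω
    filter_upwards [h1, ae_restrict_mem (hm _ hA)] with ω hf hω
    simp only [f, ite_eq_left_iff, zero_ne_one, imp_false, not_not] at hf
    exact iff_of_true hf hω
  · have h0 : (fun _ => (0 : ℝ)) =ᵐ[P.restrict Aᶜ] f := by
      refine (integral_eq_iff_of_ae_le (integrable_const _) hf.integrableOn
        (.of_forall fun ω => (hf01 ω).1)).1 ?_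
      rw [← setIntegral_condExp hm hf hA.compl, integral_zero]
      refine (setIntegral_eq_zero_of_ae_eq_zero ?_).symm
      filter_upwards [h01] with ω h hω
      exact h.resolve_right hω
    filter_upwards [h0.symm, ae_restrict_mem (hm _ hA).compl] with ω hf hω
    simp only [f, ite_eq_right_iff, one_ne_zero, imp_false] at hf
    exact iff_of_false hf hω

end Dependence

lemma forall_condProbLe_zero_or_one_iff {m0 : MeasurableSpace Ω} {P : Measure Ω}
    [IsProbabilityMeasure P] {E : Type*} [MeasurableSpace E] {X : Ω → E} {Y : Ω → ℝ}
    (hX : Measurable X) (hY : Measurable Y) (hc : Continuous (cdf (P.map Y))) :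
    (∀ s ∈ Icc (0 : ℝ) 1, ∀ᵐ ω ∂P,
      condProbLe (.comap X inferInstance) P (fun ω => cdf (P.map Y) (Y ω)) s ω = 0 ∨
      condProbLe (.comap X inferInstance) P (fun ω => cdf (P.map Y) (Y ω)) s ω = 1) ↔
      ∃ f : E → ℝ, Measurable f ∧ ∀ᵐ ω ∂P, Y ω = f (X ω) := by
  have := Measure.isProbabilityMeasure_map (μ := P) hY.aemeasurable
  have hU : Measurable fun ω => cdf (P.map Y) (Y ω) := hc.measurable.comp hY
  constructor
  · refine fun h => exists_measurable_ae_eq_comp_of_forall_rat fun q => ?_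
    obtain ⟨_, ⟨S, hS, rfl⟩, hSY⟩ := exists_measurableSet_ae_iff_of_condProbLe hX.comap_le hU
      (h _ ⟨cdf_nonneg _ q, cdf_le_one _ q⟩)
    refine ⟨S, hS, ?_⟩
    filter_upwards [hSY, ae_of_ae_map hY.aemeasurable (ae_le_iff_cdf_le hc q)] with ω h₁ h₂
    exact h₂.trans h₁
  · rintro ⟨f, hf, hYf⟩ s -
    have hV : Measurable[.comap X inferInstance] fun ω => cdf (P.map Y) (f (X ω)) :=
      (hc.measurable.comp hf).comp (comap_measurable X)
    filter_upwards [condProbLe_ae_eq_ite_of_ae_eq hX.comap_le hU hV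
      (by filter_upwards [hYf] with ω h; rw [h]) s] with ω h
    rw [h]
    split_ifs <;> simp

end GiniGamma

open GiniGamma in
/-- Gini's gamma applied to `ψ_C` gives the measure of indifference `Q`:
it equals twice the integrated squared deviation from reflection invariance, is
nonnegative, vanishes iff `(X,Y)` and `(X,−Y)` have the same copula (in particular when
`Y` and `X` are independent), and equals `1` iff `Y` is completely dependent on `X`. -/
theorem gini_gamma_of_psi_properties
    {Ω : Type*} [MeasurableSpace Ω] (P : Measure Ω) [IsProbabilityMeasure P]
    {d : ℕ} (X : Ω → (Fin d → ℝ)) (Y : Ω → ℝ) (hX : Measurable X) (hY : Measurable Y)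
    (G : ℝ → ℝ) (hG : ∀ y, G y = (P {ω | Y ω ≤ y}).toReal) (hGc : Continuous G)
    (mX : MeasurableSpace Ω) (hmX : mX = MeasurableSpace.comap X inferInstance)
    (ψ : ℝ → ℝ → ℝ)
    (hψ : ∀ s t : ℝ, ψ s t =
      ∫ ω, (P[fun ω' => if G (Y ω') ≤ s then (1:ℝ) else 0 | mX]) ω *
           (P[fun ω' => if G (Y ω') ≤ t then (1:ℝ) else 0 | mX]) ω ∂P)
    (Q : ℝ)
    (hQ : Q = 4 * (∫ t in (0:ℝ)..1, (ψ t t + ψ t (1 - t))) - 2) :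
    Q = 2 * ∫ t in (0:ℝ)..1,
        ∫ ω, ((P[fun ω' => if G (Y ω') ≤ t then (1:ℝ) else 0 | mX]) ω -
              (1 - (P[fun ω' => if G (Y ω') ≤ 1 - t then (1:ℝ) else 0 | mX]) ω)) ^ 2 ∂P ∧
    0 ≤ Q ∧
    (Q = 0 ↔ ∀ t ∈ Icc (0:ℝ) 1,
        P[fun ω' => if G (Y ω') ≤ t then (1:ℝ) else 0 | mX]
          =ᵐ[P] fun ω => 1 - (P[fun ω' => if G (Y ω') ≤ 1 - t then (1:ℝ) else 0 | mX]) ω) ∧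
    (IndepFun Y X P → Q = 0) ∧
    (Q = 1 ↔ ∃ f : (Fin d → ℝ) → ℝ, Measurable f ∧ ∀ᵐ ω ∂P, Y ω = f (X ω)) := by
  -- `mX` would otherwise shadow the ambient instance when elaborating `P.map Y`.
  subst hmX
  obtain rfl : G = cdf (P.map Y) := funext fun y => by
    have := Measure.isProbabilityMeasure_map (μ := P) hY.aemeasurable
    rw [hG, cdf_eq_real, map_measureReal_apply hY measurableSet_Iic]
    rfl
  set U : Ω → ℝ := fun ω => cdf (P.map Y) (Y ω)
  have hm := hX.comap_le
  have hU : Measurable U := hGc.measurable.comp hY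
  have hunif (t : ℝ) (ht : t ∈ Icc (0 : ℝ) 1) := measureReal_setOf_cdf_map_le hY hGc ht
  obtain rfl : ψ = psi (.comap X inferInstance) P U := funext₂ hψ
  have hQF : Q = 2 * ∫ t in (0 : ℝ)..1, reflectionGap (.comap X inferInstance) P U t := by
    rw [hQ, integral_reflectionGap hm hU hunif]
    simp only [giniIntegrand]
    ring
  have hQ0 : Q = 0 ↔ ∀ t ∈ Icc (0 : ℝ) 1, reflectionGap (.comap X inferInstance) P U t = 0 := by
    rw [hQF, mul_eq_zero, or_iff_right two_ne_zero, integral_reflectionGap_eq_zero_iff hm hU hunif]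
  refine ⟨hQF, hQF ▸ mul_nonneg zero_le_two (intervalIntegral.integral_nonneg zero_le_one
    fun t _ => reflectionGap_nonneg t), hQ0.trans (forall₂_congr fun t _ =>
    reflectionGap_eq_zero_iff hm hU t), fun hind => hQ0.2 fun t ht =>
    reflectionGap_comap_eq_zero_of_indepFun hX hU hunif (hind.comp hGc.measurable measurable_id) ht,
    ?_⟩
  rw [hQF, ← forall_condProbLe_zero_or_one_iff hX hY hGc,
    ← forall_reflectionGap_eq_two_mul_min_iff hm hU hunif,
    ← integral_reflectionGap_eq_half_iff hm hU hunif]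
  constructor <;> intro h <;> linarith
end
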